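/- arXiv:2308.02220 — 11 statements merged into one kernel-verified Lean document; each statement's English description precedes it below -/
import Mathlib

section
/- A function δ : [0,1] → [0,1] is the diagonal section of some quasi-copula if and only if δ(x) ≤ x for all x, 0 ≤ δ(y) − δ(x) ≤ 2(y−x) for all x ≤ y, and δ(1) = 1. -/
open Set MeasureTheory Filter

def IsQuasiCopula (Q : ℝ → ℝ → ℝ) : Prop :=
  (∀ x ∈ Icc (0:ℝ) 1, ∀ y ∈ Icc (0:ℝ) 1, Q x y ∈ Icc (0:ℝ) 1) ∧
  (∀ x ∈ Icc (0:ℝ) 1, Q x 0 = 0 ∧ Q 0 x = 0) ∧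
  (∀ x ∈ Icc (0:ℝ) 1, Q x 1 = x ∧ Q 1 x = x) ∧
  (∀ y ∈ Icc (0:ℝ) 1, ∀ x₁ ∈ Icc (0:ℝ) 1, ∀ x₂ ∈ Icc (0:ℝ) 1, x₁ ≤ x₂ → Q x₁ y ≤ Q x₂ y) ∧
  (∀ x ∈ Icc (0:ℝ) 1, ∀ y₁ ∈ Icc (0:ℝ) 1, ∀ y₂ ∈ Icc (0:ℝ) 1, y₁ ≤ y₂ → Q x y₁ ≤ Q x y₂) ∧
  (∀ x₁ ∈ Icc (0:ℝ) 1, ∀ x₂ ∈ Icc (0:ℝ) 1, ∀ y₁ ∈ Icc (0:ℝ) 1, ∀ y₂ ∈ Icc (0:ℝ) 1,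
    |Q x₁ y₁ - Q x₂ y₂| ≤ |x₁ - x₂| + |y₁ - y₂|)

private lemma min3_le_min3_add (a b c a' b' c' M : ℝ)
    (ha : a ≤ a' + M) (hb : b ≤ b' + M) (hc : c ≤ c' + M) :
    min a (min b c) ≤ min a' (min b' c') + M := by
  rcases le_total a' (min b' c') with h | h
  · rw [min_eq_left h]
    exact le_trans (min_le_left _ _) (le_trans ha (by linarith [min_le_left b' c']))
  · rw [min_eq_right h]
    rcases le_total b' c' with h2 | h2
    · rw [min_eq_left h2]
      exact le_trans (min_le_right _ _) (le_trans (min_le_left _ _) hb)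
    · rw [min_eq_right h2]
      exact le_trans (min_le_right _ _) (le_trans (min_le_right _ _) hc)

theorem diagonal_characterization (d : ℝ → ℝ)
    (hr : ∀ x ∈ Icc (0:ℝ) 1, d x ∈ Icc (0:ℝ) 1) :
    (∃ Q : ℝ → ℝ → ℝ, IsQuasiCopula Q ∧ ∀ x ∈ Icc (0:ℝ) 1, Q x x = d x) ↔
    ((∀ x ∈ Icc (0:ℝ) 1, d x ≤ x) ∧
     (∀ x ∈ Icc (0:ℝ) 1, ∀ y ∈ Icc (0:ℝ) 1, x ≤ y → 0 ≤ d y - d x ∧ d y - d x ≤ 2*(y-x)) ∧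
     d 1 = 1) := by
  constructor
  · rintro ⟨Q, ⟨hrange, hground, hmarg, hmonx, hmony, hlip⟩, hdiag⟩
    have h1 : (1:ℝ) ∈ Icc (0:ℝ) 1 := by constructor <;> norm_num
    refine ⟨?_, ?_, ?_⟩
    · intro x hx
      rw [← hdiag x hx]
      calc Q x x ≤ Q x 1 := hmony x hx x hx 1 h1 hx.2
        _ = x := (hmarg x hx).1
    · intro x hx y hy hxy
      rw [← hdiag x hx, ← hdiag y hy]
      constructor
      · have := hmonx x hx x hx y hy hxy
        have := hmony y hy x hx y hy hxy
        linarith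
      · have := hlip y hy x hx y hy x hx
        have := abs_le.1 this
        have h3 : |y - x| = y - x := abs_of_nonneg (by linarith)
        rw [h3] at this
        linarith [this.1, this.2]
    · rw [← hdiag 1 h1]; exact (hmarg 1 h1).1
  · rintro ⟨hle, hlip, h1⟩
    have h0mem : (0:ℝ) ∈ Icc (0:ℝ) 1 := by constructor <;> norm_num
    have h1mem : (1:ℝ) ∈ Icc (0:ℝ) 1 := by constructor <;> norm_num
    have hd0 : d 0 = 0 := le_antisymm (hle 0 h0mem) (hr 0 h0mem).1
    -- d is 2-Lipschitz on [0,1]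
    have hdlip : ∀ x ∈ Icc (0:ℝ) 1, ∀ y ∈ Icc (0:ℝ) 1, |d x - d y| ≤ 2 * |x - y| := by
      intro x hx y hy
      rcases le_total x y with h | h
      · have h2 := hlip x hx y hy h
        rw [abs_of_nonpos (by linarith : x - y ≤ 0), abs_le]
        constructor <;> linarith [h2.1, h2.2]
      · have h2 := hlip y hy x hx h
        rw [abs_of_nonneg (by linarith : (0:ℝ) ≤ x - y), abs_le]
        constructor <;> linarith [h2.1, h2.2]
    refine ⟨fun x y => min x (min y ((d x + d y) / 2)), ⟨?_, ?_, ?_, ?_, ?_, ?_⟩, ?_⟩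
    · intro x hx y hy
      constructor
      · refine le_min hx.1 (le_min hy.1 ?_)
        have := (hr x hx).1; have := (hr y hy).1; linarith
      · exact le_trans (min_le_left _ _) hx.2
    · intro x hx
      constructor
      · apply le_antisymm
        · exact le_trans (min_le_right _ _) (min_le_left _ _)
        · refine le_min hx.1 (le_min le_rfl ?_)
          have := (hr x hx).1; rw [hd0]; linarith
      · apply le_antisymm
        · exact min_le_left _ _
        · refine le_min le_rfl (le_min hx.1 ?_)
          have := (hr x hx).1; rw [hd0]; linarith
    · intro x hx
      have hdx1 : 2 * x - 1 ≤ d x := by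
        have := (hlip x hx 1 h1mem hx.2).2; rw [h1] at this; linarith
      constructor
      · apply le_antisymm
        · exact min_le_left _ _
        · refine le_min le_rfl (le_min hx.2 ?_)
          rw [h1]; linarith
      · apply le_antisymm
        · exact le_trans (min_le_right _ _) (min_le_left _ _)
        · refine le_min hx.2 (le_min le_rfl ?_)
          rw [h1]; linarith
    · intro y hy x₁ hx₁ x₂ hx₂ h
      have hd : d x₁ ≤ d x₂ := by have := (hlip x₁ hx₁ x₂ hx₂ h).1; linarith
      exact min_le_min h (min_le_min le_rfl (by linarith))
    · intro x hx y₁ hy₁ y₂ hy₂ h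
      have hd : d y₁ ≤ d y₂ := by have := (hlip y₁ hy₁ y₂ hy₂ h).1; linarith
      exact min_le_min le_rfl (min_le_min h (by linarith))
    · intro x₁ hx₁ x₂ hx₂ y₁ hy₁ y₂ hy₂
      set M := |x₁ - x₂| + |y₁ - y₂| with hM
      have hdx := hdlip x₁ hx₁ x₂ hx₂
      have hdy := hdlip y₁ hy₁ y₂ hy₂
      have hdx' := abs_le.1 hdx
      have hdy' := abs_le.1 hdy
      have hax := abs_le.1 (le_refl |x₁ - x₂|) |>.1
      have hx12 := abs_sub_abs_le_abs_sub x₁ x₂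
      have hxx := le_abs_self (x₁ - x₂)
      have hxx' := neg_abs_le (x₁ - x₂)
      have hyy := le_abs_self (y₁ - y₂)
      have hyy' := neg_abs_le (y₁ - y₂)
      rw [abs_sub_le_iff]
      constructor
      · have := min3_le_min3_add x₁ y₁ ((d x₁ + d y₁)/2) x₂ y₂ ((d x₂ + d y₂)/2) M
          (by simp only [hM]; linarith [abs_nonneg (y₁ - y₂)])
          (by simp only [hM]; linarith [abs_nonneg (x₁ - x₂)])
          (by simp only [hM]; linarith [hdx'.1, hdy'.1, hdx'.2, hdy'.2])
        linarith
      · have := min3_le_min3_add x₂ y₂ ((d x₂ + d y₂)/2) x₁ y₁ ((d x₁ + d y₁)/2) M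
          (by simp only [hM]; linarith [abs_nonneg (y₁ - y₂)])
          (by simp only [hM]; linarith [abs_nonneg (x₁ - x₂)])
          (by simp only [hM]; linarith [hdx'.1, hdy'.1, hdx'.2, hdy'.2])
        linarith
    · intro x hx
      show min x (min x ((d x + d x) / 2)) = d x
      have h2 : (d x + d x) / 2 = d x := by ring
      rw [h2, ← min_assoc, min_self, min_eq_right (hle x hx)]
end

section
/- For a diagonal section δ, the function h^δ(x) = max{y ∈ [0,1] : y ≥ x and δ̂(t) ≥ δ̂(x) for all t ∈ [x,y]} is well defined (the maximum is attained), satisfies δ̂(h^δ(x)) = δ̂(x) and h^δ(h^δ(x)) = h^δ(x) for all x ∈ [0,1]. -/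
open Set MeasureTheory Filter

def IsDiagonalSection (d : ℝ → ℝ) : Prop :=
  (∀ x ∈ Icc (0:ℝ) 1, d x ∈ Icc (0:ℝ) 1) ∧
  (∀ x ∈ Icc (0:ℝ) 1, d x ≤ x) ∧
  (∀ x ∈ Icc (0:ℝ) 1, ∀ y ∈ Icc (0:ℝ) 1, x ≤ y → 0 ≤ d y - d x ∧ d y - d x ≤ 2*(y-x)) ∧
  d 1 = 1

def hset (d : ℝ → ℝ) (x : ℝ) : Set ℝ :=
  {y | y ∈ Icc (0:ℝ) 1 ∧ x ≤ y ∧ ∀ t ∈ Icc x y, x - d x ≤ t - d t}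

noncomputable def hfun (d : ℝ → ℝ) (x : ℝ) : ℝ := sSup (hset d x)

lemma self_mem_hset (d : ℝ → ℝ) {x : ℝ} (hx : x ∈ Icc (0:ℝ) 1) : x ∈ hset d x := by
  refine ⟨hx, le_refl x, ?_⟩
  intro t ht
  have : t = x := le_antisymm ht.2 ht.1
  simp [this]

lemma bddAbove_hset (d : ℝ → ℝ) (x : ℝ) : BddAbove (hset d x) :=
  ⟨1, fun y hy => hy.1.2⟩

lemma hset_greatest (d : ℝ → ℝ) (hd : IsDiagonalSection d) {x : ℝ} (hx : x ∈ Icc (0:ℝ) 1) :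
    IsGreatest (hset d x) (hfun d x) := by
  obtain ⟨hmem, hdle, hlip, hd1⟩ := hd
  have hne : (hset d x).Nonempty := ⟨x, self_mem_hset d hx⟩
  have hxle : x ≤ hfun d x := le_csSup (bddAbove_hset d x) (self_mem_hset d hx)
  have hle1 : hfun d x ≤ 1 := csSup_le hne (fun y hy => hy.1.2)
  have h0 : (0:ℝ) ≤ hfun d x := le_trans hx.1 hxle
  constructor
  · refine ⟨⟨h0, hle1⟩, hxle, ?_⟩
    intro t ht
    rcases eq_or_lt_of_le ht.2 with heq | hlt
    · -- t = hfun d x : continuity argument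
      by_contra hcon
      push_neg at hcon
      set h := hfun d x with hh
      have hε : (0:ℝ) < (x - d x) - (t - d t) := by linarith
      obtain ⟨y, hy, hty⟩ := exists_lt_of_lt_csSup hne
        (show h - ((x - d x) - (t - d t)) < h by linarith)
      have hyh : y ≤ h := le_csSup (bddAbove_hset d x) hy
      have hφy : x - d x ≤ y - d y := hy.2.2 y ⟨hy.2.1, le_refl y⟩
      have hyt : y ≤ t := by rw [heq]; exact hyh
      have := (hlip y hy.1 t (heq ▸ ⟨h0, hle1⟩) hyt).2
      linarith
    · obtain ⟨y, hy, hty⟩ := exists_lt_of_lt_csSup hne hlt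
      exact hy.2.2 t ⟨ht.1, le_of_lt hty⟩
  · exact fun y hy => le_csSup (bddAbove_hset d x) hy

lemma hfun_phi_eq (d : ℝ → ℝ) (hd : IsDiagonalSection d) {x : ℝ} (hx : x ∈ Icc (0:ℝ) 1) :
    hfun d x - d (hfun d x) = x - d x := by
  obtain ⟨hg1, hg2⟩ := hset_greatest d hd hx
  obtain ⟨hmem, hdle, hlip, hd1⟩ := hd
  set h := hfun d x with hh
  have hge : x - d x ≤ h - d h := hg1.2.2 h ⟨hg1.2.1, le_refl h⟩
  have hxh : x ≤ h := hg1.2.1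
  have hIcc : h ∈ Icc (0:ℝ) 1 := hg1.1
  rcases eq_or_lt_of_le hIcc.2 with h1 | h1
  · -- h = 1
    have : d h = 1 := by rw [h1, hd1]
    have hdx : d x ≤ x := hdle x hx
    have : h - d h = 0 := by rw [h1, hd1]; ring
    linarith
  · -- h < 1
    by_contra hcon
    have hεpos : (0:ℝ) < (h - d h) - (x - d x) := by
      rcases lt_or_eq_of_le hge with h' | h'
      · linarith
      · exact absurd h'.symm hcon
    set ε := (h - d h) - (x - d x) with hε
    set y' := min (h + ε) 1 with hy'
    have hhy' : h < y' := lt_min (by linarith) h1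
    have hy'mem : y' ∈ Icc (0:ℝ) 1 := ⟨le_trans hIcc.1 (le_of_lt hhy'), min_le_right _ _⟩
    have : y' ∈ hset d x := by
      refine ⟨hy'mem, le_trans hxh (le_of_lt hhy'), ?_⟩
      intro t ht
      rcases le_or_gt t h with hth | hth
      · exact hg1.2.2 t ⟨ht.1, hth⟩
      · have htmem : t ∈ Icc (0:ℝ) 1 := ⟨le_trans hx.1 ht.1, le_trans ht.2 hy'mem.2⟩
        have := (hlip h hIcc t htmem (le_of_lt hth)).2
        have hty' : t ≤ y' := ht.2
        have htε : t - h ≤ ε := by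
          have := le_trans ht.2 (min_le_left (h + ε) 1); linarith
        linarith
    have := hg2 this
    linarith

theorem hfun_properties (d : ℝ → ℝ) (hd : IsDiagonalSection d) :
    ∀ x ∈ Icc (0:ℝ) 1,
      IsGreatest (hset d x) (hfun d x) ∧
      hfun d x - d (hfun d x) = x - d x ∧
      hfun d (hfun d x) = hfun d x := by
  intro x hx
  obtain ⟨hg1, hg2⟩ := hset_greatest d hd hx
  refine ⟨⟨hg1, hg2⟩, hfun_phi_eq d hd hx, ?_⟩
  set h := hfun d x with hh
  have hIcc : h ∈ Icc (0:ℝ) 1 := hg1.1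
  obtain ⟨hg1', hg2'⟩ := hset_greatest d hd hIcc
  have hle : h ≤ hfun d h := le_csSup (bddAbove_hset d h) (self_mem_hset d hIcc)
  have hphi : h - d h = x - d x := hfun_phi_eq d hd hx
  have hmem : hfun d h ∈ hset d x := by
    refine ⟨hg1'.1, le_trans hg1.2.1 hle, ?_⟩
    intro t ht
    rcases le_or_gt t h with hth | hth
    · exact hg1.2.2 t ⟨ht.1, hth⟩
    · have := hg1'.2.2 t ⟨le_of_lt hth, ht.2⟩
      linarith
  exact le_antisymm (hg2 hmem) hle
end

section
/- Let δ be a diagonal section and C a bivariate copula with C(x,x) = δ(x) for all x ∈ [0,1]. Then for every x, y ∈ [0,1], C(x,y) ≤ min{x, y, max{x,y} − (1/2)(δ̂(x) + δ̂(y) + TV(δ̂; [min{x,y}, max{x,y}]))}, where TV(δ̂; [a,b]) denotes the total variation of δ̂ on [a,b]. -/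
open Set MeasureTheory Filter

noncomputable def TVd (d : ℝ → ℝ) (a b : ℝ) : ℝ :=
  variationOnFromTo (fun t => t - d t) (Icc (0:ℝ) 1) a b

def IsCopula (C : ℝ → ℝ → ℝ) : Prop :=
  (∀ x ∈ Icc (0:ℝ) 1, ∀ y ∈ Icc (0:ℝ) 1, C x y ∈ Icc (0:ℝ) 1) ∧
  (∀ x ∈ Icc (0:ℝ) 1, C x 0 = 0 ∧ C 0 x = 0) ∧
  (∀ x ∈ Icc (0:ℝ) 1, C x 1 = x ∧ C 1 x = x) ∧
  (∀ a ∈ Icc (0:ℝ) 1, ∀ b ∈ Icc (0:ℝ) 1, ∀ c ∈ Icc (0:ℝ) 1, ∀ e ∈ Icc (0:ℝ) 1,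
    a ≤ b → c ≤ e → 0 ≤ C b e + C a c - C b c - C a e)

lemma copula_swap {C : ℝ → ℝ → ℝ} (h : IsCopula C) : IsCopula (fun u v => C v u) := by
  obtain ⟨h1, h2, h3, h4⟩ := h
  refine ⟨fun x hx y hy => h1 y hy x hx, fun x hx => ⟨(h2 x hx).2, (h2 x hx).1⟩,
    fun x hx => ⟨(h3 x hx).2, (h3 x hx).1⟩, fun a ha b hb c hc e he hab hce => ?_⟩
  have := h4 c hc e he a ha b hb hce hab
  simp only
  linarith

lemma main_aux (d : ℝ → ℝ) (hd : IsDiagonalSection d) (C : ℝ → ℝ → ℝ) (hC : IsCopula C)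
    (hdiag : ∀ t ∈ Icc (0:ℝ) 1, C t t = d t) {x y : ℝ} (hx : 0 ≤ x) (hxy : x ≤ y) (hy : y ≤ 1) :
    TVd d x y ≤ 2*y - 2*C x y - (x - d x) - (y - d y) := by
  obtain ⟨hC1, hC2, hC3, hC4⟩ := hC
  have hyI : y ∈ Icc (0:ℝ) 1 := ⟨hx.trans hxy, hy⟩
  have h11 : (1:ℝ) ∈ Icc (0:ℝ) 1 := ⟨zero_le_one, le_rfl⟩
  have h01 : (0:ℝ) ∈ Icc (0:ℝ) 1 := ⟨le_rfl, zero_le_one⟩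
  -- key one-step estimate
  have step : ∀ s t : ℝ, 0 ≤ s → s ≤ t → t ≤ y →
      |(t - d t) - (s - d s)| ≤ ((t - d t) + 2 * C t y) - ((s - d s) + 2 * C s y) := by
    intro s t hs0 hst hty
    have ht : t ∈ Icc (0:ℝ) 1 := ⟨hs0.trans hst, hty.trans hy⟩
    have hs : s ∈ Icc (0:ℝ) 1 := ⟨hs0, hst.trans ht.2⟩
    have m1 := hC4 s hs t ht 0 h01 y hyI hst hyI.1
    have m2 := hC4 s hs t ht t ht y hyI hst hty
    have m3 := hC4 s hs 1 h11 s hs t ht hs.2 hst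
    have e1 := (hC2 s hs).1
    have e2 := (hC2 t ht).1
    have e3 := (hC3 t ht).2
    have e4 := (hC3 s hs).2
    have e5 := hdiag t ht
    have e6 := hdiag s hs
    rcases abs_cases ((t - d t) - (s - d s)) with ⟨h, _⟩ | ⟨h, _⟩ <;> rw [h] <;> linarith
  have hr0 : 0 ≤ 2*y - 2*C x y - (x - d x) - (y - d y) := by
    have := step x y hx hxy le_rfl
    have := abs_nonneg ((y - d y) - (x - d x))
    have e := hdiag y hyI
    linarith
  rw [TVd, variationOnFromTo.eq_of_le _ _ hxy]
  apply ENNReal.toReal_le_of_le_ofReal hr0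
  refine iSup_le ?_
  rintro ⟨n, u, hu, us⟩
  have husI : ∀ i, u i ∈ Icc (0:ℝ) 1 := fun i => (us i).1
  have husxy : ∀ i, u i ∈ Icc x y := fun i => (us i).2
  calc ∑ i ∈ Finset.range n, edist ((fun t => t - d t) (u (i+1))) ((fun t => t - d t) (u i))
      = ENNReal.ofReal (∑ i ∈ Finset.range n,
          dist ((u (i+1)) - d (u (i+1))) ((u i) - d (u i))) := by
        rw [ENNReal.ofReal_sum_of_nonneg (fun i _ => dist_nonneg)]
        exact Finset.sum_congr rfl fun i _ => edist_dist _ _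
    _ ≤ ENNReal.ofReal (2*y - 2*C x y - (x - d x) - (y - d y)) := by
        apply ENNReal.ofReal_le_ofReal
        have hsum : ∑ i ∈ Finset.range n, dist ((u (i+1)) - d (u (i+1))) ((u i) - d (u i))
            ≤ ∑ i ∈ Finset.range n,
              (((u (i+1) - d (u (i+1))) + 2 * C (u (i+1)) y) - ((u i - d (u i)) + 2 * C (u i) y)) := by
          apply Finset.sum_le_sum
          intro i _
          rw [Real.dist_eq]
          exact step (u i) (u (i+1)) (husI i).1 (hu (Nat.le_succ i)) (husxy (i+1)).2
        rw [Finset.sum_range_sub (fun i => (u i - d (u i)) + 2 * C (u i) y)] at hsum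
        have hend : ((u n - d (u n)) + 2 * C (u n) y) ≤ ((y - d y) + 2 * C y y) := by
          have := step (u n) y (husI n).1 (husxy n).2 le_rfl
          have := abs_nonneg ((y - d y) - (u n - d (u n)))
          linarith
        have hstart : ((x - d x) + 2 * C x y) ≤ ((u 0 - d (u 0)) + 2 * C (u 0) y) := by
          have := step x (u 0) hx (husxy 0).1 (husxy 0).2
          have := abs_nonneg ((u 0 - d (u 0)) - (x - d x))
          linarith
        have e := hdiag y hyI
        linarith

theorem copula_upper_bound (d : ℝ → ℝ) (hd : IsDiagonalSection d)
    (C : ℝ → ℝ → ℝ) (hC : IsCopula C) (hdiag : ∀ t ∈ Icc (0:ℝ) 1, C t t = d t) :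
    ∀ x ∈ Icc (0:ℝ) 1, ∀ y ∈ Icc (0:ℝ) 1,
      C x y ≤ min x (min y (max x y -
        (1/2)*((x - d x) + (y - d y) + TVd d (min x y) (max x y)))) := by
  intro x hx y hy
  obtain ⟨hC1, hC2, hC3, hC4⟩ := hC
  have h01 : (0:ℝ) ∈ Icc (0:ℝ) 1 := ⟨le_rfl, zero_le_one⟩
  have h11 : (1:ℝ) ∈ Icc (0:ℝ) 1 := ⟨zero_le_one, le_rfl⟩
  have hlex : C x y ≤ x := by
    have := hC4 0 h01 x hx y hy 1 h11 hx.1 hy.2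
    have e1 := (hC3 x hx).1
    have e2 := (hC2 y hy).2
    have e3 := (hC2 1 h11).2
    linarith
  have hley : C x y ≤ y := by
    have := hC4 x hx 1 h11 0 h01 y hy hx.2 hy.1
    have e1 := (hC3 y hy).2
    have e2 := (hC2 x hx).1
    have e3 := (hC2 1 h11).1
    linarith
  rcases le_total x y with hxy | hyx
  · rw [min_eq_left hxy, max_eq_right hxy]
    have hT := main_aux d hd C ⟨hC1, hC2, hC3, hC4⟩ hdiag hx.1 hxy hy.2
    exact le_min hlex (le_min hley (by linarith))
  · rw [min_eq_right hyx, max_eq_left hyx]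
    have hT := main_aux d hd (fun u v => C v u) (copula_swap ⟨hC1, hC2, hC3, hC4⟩)
      (fun t ht => hdiag t ht) hy.1 hyx hx.2
    exact le_min hlex (le_min hley (by linarith))
end

section
/- For a diagonal section δ, the function f₂(y) = y − (1/2)(δ̂(y) + TV(δ̂; [0,y])) is increasing and 1-Lipschitz on [0,1]. -/
open Set MeasureTheory Filter

lemma diag_lip (d : ℝ → ℝ) (hd : IsDiagonalSection d) :
    LipschitzOnWith 1 (fun t => t - d t) (Icc (0:ℝ) 1) := by
  apply LipschitzOnWith.of_dist_le_mul
  intro x hx y hy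
  rw [Real.dist_eq, Real.dist_eq, NNReal.coe_one, one_mul]
  rcases le_total x y with h | h
  · have := hd.2.2.1 x hx y hy h
    rw [abs_le, abs_of_nonpos (by linarith : x - y ≤ 0)]
    constructor <;> linarith
  · have := hd.2.2.1 y hy x hx h
    rw [abs_le, abs_of_nonneg (by linarith : 0 ≤ x - y)]
    constructor <;> linarith

lemma TVd_le (d : ℝ → ℝ) (hd : IsDiagonalSection d) {x y : ℝ} (hx : x ∈ Icc (0:ℝ) 1)
    (hy : y ∈ Icc (0:ℝ) 1) (hxy : x ≤ y) : TVd d x y ≤ y - x := by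
  have hlip := diag_lip d hd
  have h1 : eVariationOn (fun t => t - d t) (Icc (0:ℝ) 1 ∩ Icc x y)
      ≤ ENNReal.ofReal (y - x) := by
    calc eVariationOn (fun t => t - d t) (Icc (0:ℝ) 1 ∩ Icc x y)
        = eVariationOn ((fun t => t - d t) ∘ id) (Icc (0:ℝ) 1 ∩ Icc x y) := rfl
      _ ≤ 1 * eVariationOn id (Icc (0:ℝ) 1 ∩ Icc x y) :=
          hlip.comp_eVariationOn_le (fun t ht => ht.1)
      _ = eVariationOn id (Icc (0:ℝ) 1 ∩ Icc x y) := by rw [one_mul]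
      _ ≤ ENNReal.ofReal (id y - id x) :=
          (monotoneOn_id (s := Icc (0:ℝ) 1)).eVariationOn_le hx hy
      _ = ENNReal.ofReal (y - x) := rfl
  rw [TVd, variationOnFromTo.eq_of_le _ _ hxy]
  calc (eVariationOn (fun t => t - d t) (Icc (0:ℝ) 1 ∩ Icc x y)).toReal
      ≤ (ENNReal.ofReal (y - x)).toReal :=
        ENNReal.toReal_mono ENNReal.ofReal_ne_top h1
    _ = y - x := ENNReal.toReal_ofReal (by linarith)

lemma abs_le_TVd (d : ℝ → ℝ) (hd : IsDiagonalSection d) {x y : ℝ} (hx : x ∈ Icc (0:ℝ) 1)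
    (hy : y ∈ Icc (0:ℝ) 1) (hxy : x ≤ y) :
    |(y - d y) - (x - d x)| ≤ TVd d x y := by
  have h1 : eVariationOn (fun t => t - d t) (Icc (0:ℝ) 1 ∩ Icc x y)
      ≤ ENNReal.ofReal (y - x) := by
    calc eVariationOn (fun t => t - d t) (Icc (0:ℝ) 1 ∩ Icc x y)
        = eVariationOn ((fun t => t - d t) ∘ id) (Icc (0:ℝ) 1 ∩ Icc x y) := rfl
      _ ≤ 1 * eVariationOn id (Icc (0:ℝ) 1 ∩ Icc x y) :=
          (diag_lip d hd).comp_eVariationOn_le (fun t ht => ht.1)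
      _ = eVariationOn id (Icc (0:ℝ) 1 ∩ Icc x y) := by rw [one_mul]
      _ ≤ ENNReal.ofReal (id y - id x) :=
          (monotoneOn_id (s := Icc (0:ℝ) 1)).eVariationOn_le hx hy
  have hfin : eVariationOn (fun t => t - d t) (Icc (0:ℝ) 1 ∩ Icc x y) ≠ ⊤ :=
    ne_top_of_le_ne_top ENNReal.ofReal_ne_top h1
  have h2 := eVariationOn.edist_le (fun t => t - d t) (s := Icc (0:ℝ) 1 ∩ Icc x y)
    (x := y) (y := x) ⟨hy, hxy, le_refl y⟩ ⟨hx, le_refl x, hxy⟩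
  rw [TVd, variationOnFromTo.eq_of_le _ _ hxy]
  have h3 := ENNReal.toReal_mono hfin h2
  rwa [edist_dist, ENNReal.toReal_ofReal dist_nonneg, Real.dist_eq] at h3

theorem f2_monotone_lipschitz (d : ℝ → ℝ) (hd : IsDiagonalSection d) :
    MonotoneOn (fun y => y - (1/2)*((y - d y) + TVd d 0 y)) (Icc (0:ℝ) 1) ∧
    LipschitzOnWith 1 (fun y => y - (1/2)*((y - d y) + TVd d 0 y)) (Icc (0:ℝ) 1) := by
  have hlbv : LocallyBoundedVariationOn (fun t => t - d t) (Icc (0:ℝ) 1) :=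
    (diag_lip d hd).locallyBoundedVariationOn
  have h0 : (0:ℝ) ∈ Icc (0:ℝ) 1 := ⟨le_refl 0, zero_le_one⟩
  have key : ∀ x ∈ Icc (0:ℝ) 1, ∀ y ∈ Icc (0:ℝ) 1, x ≤ y →
      0 ≤ (y - (1/2)*((y - d y) + TVd d 0 y)) - (x - (1/2)*((x - d x) + TVd d 0 x)) ∧
      (y - (1/2)*((y - d y) + TVd d 0 y)) - (x - (1/2)*((x - d x) + TVd d 0 x)) ≤ y - x := by
    intro x hx y hy hxy
    have hadd : TVd d 0 x + TVd d x y = TVd d 0 y :=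
      variationOnFromTo.add hlbv h0 hx hy
    have h1 := TVd_le d hd hx hy hxy
    have h2 := abs_le_TVd d hd hx hy hxy
    rw [abs_le] at h2
    constructor <;> · obtain ⟨h2l, h2r⟩ := h2; linarith
  constructor
  · intro x hx y hy hxy
    have := (key x hx y hy hxy).1
    simp only
    linarith
  · apply LipschitzOnWith.of_dist_le_mul
    intro x hx y hy
    rw [Real.dist_eq, Real.dist_eq, NNReal.coe_one, one_mul]
    rcases le_total x y with h | h
    · obtain ⟨h1, h2⟩ := key x hx y hy h
      rw [abs_le, abs_of_nonpos (by linarith : x - y ≤ 0)]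
      constructor <;> linarith
    · obtain ⟨h1, h2⟩ := key y hy x hx h
      rw [abs_le, abs_of_nonneg (by linarith : 0 ≤ x - y)]
      constructor <;> linarith
end

section
/- For any diagonal section δ, the function U_δ(x,y) = min{x, y, y − (1/2)(δ̂(x) + δ̂(y) + TV(δ̂;[x,y]))} (where TV(δ̂;[x,y]) = TV(δ̂;[0,y]) − TV(δ̂;[0,x])) is a copula whose diagonal section equals δ, i.e., U_δ(x,x) = δ(x) for all x. -/
open Set MeasureTheory Filter

noncomputable def fdelta (d : ℝ → ℝ) (x y : ℝ) : ℝ :=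
  y - (1/2)*((x - d x) + (y - d y) + (TVd d 0 y - TVd d 0 x))

/-- The total variation from `x` to `y` dominates the increment of `f`. -/
lemma var_ge_abs {f : ℝ → ℝ} {s : Set ℝ} (hf : LocallyBoundedVariationOn f s)
    {x y : ℝ} (hx : x ∈ s) (hy : y ∈ s) (hxy : x ≤ y) :
    |f y - f x| ≤ variationOnFromTo f s x y := by
  rw [variationOnFromTo.eq_of_le f s hxy]
  have h1 : edist (f y) (f x) ≤ eVariationOn f (s ∩ Icc x y) :=
    eVariationOn.edist_le f ⟨hy, hxy, le_rfl⟩ ⟨hx, le_rfl, hxy⟩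
  have h2 := ENNReal.toReal_mono (hf x y hx hy) h1
  rwa [edist_dist, ENNReal.toReal_ofReal dist_nonneg, Real.dist_eq] at h2

/-- The total variation of a 1-Lipschitz function from `x` to `y` is at most `y - x`. -/
lemma var_le {f : ℝ → ℝ} (hlip : LipschitzOnWith 1 f (Icc (0:ℝ) 1))
    {x y : ℝ} (hx : x ∈ Icc (0:ℝ) 1) (hy : y ∈ Icc (0:ℝ) 1) (hxy : x ≤ y) :
    variationOnFromTo f (Icc (0:ℝ) 1) x y ≤ y - x := by
  rw [variationOnFromTo.eq_of_le f _ hxy]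
  have hmap : Set.MapsTo id (Icc (0:ℝ) 1 ∩ Icc x y) (Icc (0:ℝ) 1) := fun t ht => ht.1
  have h1 := hlip.comp_eVariationOn_le hmap
  have hmono : MonotoneOn id (Icc (0:ℝ) 1 ∩ Icc x y) := fun a _ b _ h => h
  have h2 := hmono.eVariationOn_le (a := x) (b := y) ⟨hx, le_rfl, hxy⟩ ⟨hy, hxy, le_rfl⟩
  rw [inter_assoc, inter_self] at h2
  have h3 : eVariationOn f (Icc (0:ℝ) 1 ∩ Icc x y) ≤ ENNReal.ofReal (y - x) := by
    calc eVariationOn f (Icc (0:ℝ) 1 ∩ Icc x y)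
        = eVariationOn (f ∘ id) (Icc (0:ℝ) 1 ∩ Icc x y) := rfl
      _ ≤ 1 * eVariationOn id (Icc (0:ℝ) 1 ∩ Icc x y) := by simpa using h1
      _ ≤ ENNReal.ofReal (y - x) := by rw [one_mul]; exact h2
  have := ENNReal.toReal_mono ENNReal.ofReal_ne_top h3
  rwa [ENNReal.toReal_ofReal (by linarith)] at this

/-- Supermodularity of `min x (min y (A y + B x))` for nondecreasing 1-Lipschitz-increment
`A`, `B`, abstracted to pointwise data. -/
lemma min_supermod {a b c e Ac Ae Ba Bb : ℝ} (hab : a ≤ b) (hce : c ≤ e)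
    (hA1 : Ac ≤ Ae) (hA2 : Ae - Ac ≤ e - c) (hB1 : Ba ≤ Bb) (hB2 : Bb - Ba ≤ b - a) :
    min b (min c (Ac + Bb)) + min a (min e (Ae + Ba)) ≤
    min b (min e (Ae + Bb)) + min a (min c (Ac + Ba)) := by
  simp only [min_def]
  split_ifs <;> linarith

theorem U_delta_is_copula (d : ℝ → ℝ) (hd : IsDiagonalSection d) :
    IsCopula (fun x y => min x (min y (fdelta d x y))) ∧
    ∀ x ∈ Icc (0:ℝ) 1, min x (min x (fdelta d x x)) = d x := by
  obtain ⟨hrange, hle, hinc, hd1⟩ := hd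
  have h01 : (0:ℝ) ∈ Icc (0:ℝ) 1 := ⟨le_rfl, zero_le_one⟩
  have h11 : (1:ℝ) ∈ Icc (0:ℝ) 1 := ⟨zero_le_one, le_rfl⟩
  have hd0 : d 0 = 0 := le_antisymm (hle 0 h01) (hrange 0 h01).1
  have hlip : LipschitzOnWith 1 (fun t => t - d t) (Icc (0:ℝ) 1) := by
    apply LipschitzOnWith.of_dist_le_mul
    intro x hx y hy
    rw [Real.dist_eq, Real.dist_eq, NNReal.coe_one, one_mul]
    rcases le_total x y with h | h
    · obtain ⟨p, q⟩ := hinc x hx y hy h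
      have hxy : |x - y| = y - x := by rw [abs_of_nonpos (by linarith)]; ring
      rw [hxy]
      show |(x - d x) - (y - d y)| ≤ y - x
      rw [abs_le]; constructor <;> linarith
    · obtain ⟨p, q⟩ := hinc y hy x hx h
      have hxy : |x - y| = x - y := abs_of_nonneg (by linarith)
      rw [hxy]
      show |(x - d x) - (y - d y)| ≤ x - y
      rw [abs_le]; constructor <;> linarith
  have hbv : LocallyBoundedVariationOn (fun t => t - d t) (Icc (0:ℝ) 1) :=
    hlip.locallyBoundedVariationOn
  have hT0 : TVd d 0 0 = 0 := variationOnFromTo.self _ _ _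
  have key : ∀ x ∈ Icc (0:ℝ) 1, ∀ y ∈ Icc (0:ℝ) 1, x ≤ y →
      ((y - d y) - (x - d x) ≤ TVd d 0 y - TVd d 0 x ∧
       (x - d x) - (y - d y) ≤ TVd d 0 y - TVd d 0 x ∧
       TVd d 0 y - TVd d 0 x ≤ y - x) := by
    intro x hx y hy hxy
    have hadd : TVd d 0 x + variationOnFromTo (fun t => t - d t) (Icc (0:ℝ) 1) x y
        = TVd d 0 y := variationOnFromTo.add hbv h01 hx hy
    have habs := var_ge_abs hbv hx hy hxy
    have p1 : (y - d y) - (x - d x) ≤ variationOnFromTo (fun t => t - d t) (Icc (0:ℝ) 1) x y :=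
      le_trans (le_abs_self _) habs
    have p2 : (x - d x) - (y - d y) ≤ variationOnFromTo (fun t => t - d t) (Icc (0:ℝ) 1) x y :=
      le_trans (le_abs_self _) (by rwa [abs_sub_comm] at habs)
    have p3 := var_le hlip hx hy hxy
    exact ⟨by linarith, by linarith, by linarith⟩
  constructor
  · refine ⟨?_, ?_, ?_, ?_⟩
    · -- range
      intro x hx y hy
      have h0f : 0 ≤ fdelta d x y := by
        have k1 := (key 0 h01 y hy hy.1).2.2
        have k2 := (key 0 h01 x hx hx.1).1
        have k3 := (hrange y hy).1
        simp only [fdelta]; linarith [hT0, hd0]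
      exact ⟨le_min hx.1 (le_min hy.1 h0f), le_trans (min_le_left _ _) hx.2⟩
    · -- grounded
      intro x hx
      constructor
      · show min x (min 0 (fdelta d x 0)) = 0
        have h0 : 0 ≤ fdelta d x 0 := by
          have k := (key 0 h01 x hx hx.1).1
          simp only [fdelta]; linarith [hT0, hd0]
        rw [min_eq_left h0, min_eq_right hx.1]
      · show min 0 (min x (fdelta d 0 x)) = 0
        have h0 : 0 ≤ fdelta d 0 x := by
          have k1 := (key 0 h01 x hx hx.1).2.2
          have k3 := (hrange x hx).1
          simp only [fdelta]; linarith [hT0, hd0]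
        rw [min_eq_left (le_min hx.1 h0)]
    · -- uniform marginals
      intro x hx
      constructor
      · show min x (min 1 (fdelta d x 1)) = x
        have hxf : x ≤ fdelta d x 1 := by
          have k1 := (key x hx 1 h11 hx.2).2.2
          have k2 := (hinc x hx 1 h11 hx.2).2
          simp only [fdelta]; linarith [hd1]
        rw [min_eq_left (le_min hx.2 hxf)]
      · show min 1 (min x (fdelta d 1 x)) = x
        have hxf : x ≤ fdelta d 1 x := by
          have k1 := (key x hx 1 h11 hx.2).2.1
          simp only [fdelta]; linarith [hd1]
        rw [min_eq_left hxf, min_eq_right hx.2]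
    · -- 2-increasing
      intro a ha b hb c hc e he hab hce
      show 0 ≤ min b (min e (fdelta d b e)) + min a (min c (fdelta d a c))
          - min b (min c (fdelta d b c)) - min a (min e (fdelta d a e))
      have kce := key c hc e he hce
      have kab := key a ha b hb hab
      have lce := hinc c hc e he hce
      have lab := hinc a ha b hb hab
      have H := min_supermod (a := a) (b := b) (c := c) (e := e)
        (Ac := c - (1/2)*((c - d c) + TVd d 0 c))
        (Ae := e - (1/2)*((e - d e) + TVd d 0 e))
        (Ba := (1/2)*(TVd d 0 a - (a - d a)))
        (Bb := (1/2)*(TVd d 0 b - (b - d b)))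
        hab hce (by linarith [kce.2.2, lce.2]) (by linarith [kce.2.1])
        (by linarith [kab.1]) (by linarith [kab.2.2, lab.2])
      have e1 : fdelta d b e = (e - (1/2)*((e - d e) + TVd d 0 e))
          + ((1/2)*(TVd d 0 b - (b - d b))) := by simp only [fdelta]; ring
      have e2 : fdelta d a c = (c - (1/2)*((c - d c) + TVd d 0 c))
          + ((1/2)*(TVd d 0 a - (a - d a))) := by simp only [fdelta]; ring
      have e3 : fdelta d b c = (c - (1/2)*((c - d c) + TVd d 0 c))
          + ((1/2)*(TVd d 0 b - (b - d b))) := by simp only [fdelta]; ring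
      have e4 : fdelta d a e = (e - (1/2)*((e - d e) + TVd d 0 e))
          + ((1/2)*(TVd d 0 a - (a - d a))) := by simp only [fdelta]; ring
      rw [e1, e2, e3, e4]
      linarith [H]
  · -- diagonal
    intro x hx
    have hfx : fdelta d x x = d x := by simp only [fdelta]; ring
    rw [hfx, min_eq_right (hle x hx), min_eq_right (hle x hx)]
end

section
/- Let F : [0,1]² → ℝ be 2-increasing, increasing in each variable, and 1-Lipschitz, with F(x,x) ≤ x for all x. Then the function (x,y) ↦ min{x, y, F(x,y)} is 2-increasing. -/
open Set MeasureTheory Filter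

theorem min_with_two_increasing (F : ℝ → ℝ → ℝ)
    (h2inc : ∀ a ∈ Icc (0:ℝ) 1, ∀ b ∈ Icc (0:ℝ) 1, ∀ c ∈ Icc (0:ℝ) 1, ∀ e ∈ Icc (0:ℝ) 1,
      a ≤ b → c ≤ e → 0 ≤ F b e + F a c - F b c - F a e)
    (hmono1 : ∀ y ∈ Icc (0:ℝ) 1, ∀ x₁ ∈ Icc (0:ℝ) 1, ∀ x₂ ∈ Icc (0:ℝ) 1, x₁ ≤ x₂ → F x₁ y ≤ F x₂ y)
    (hmono2 : ∀ x ∈ Icc (0:ℝ) 1, ∀ y₁ ∈ Icc (0:ℝ) 1, ∀ y₂ ∈ Icc (0:ℝ) 1, y₁ ≤ y₂ → F x y₁ ≤ F x y₂)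
    (hlip : ∀ x₁ ∈ Icc (0:ℝ) 1, ∀ x₂ ∈ Icc (0:ℝ) 1, ∀ y₁ ∈ Icc (0:ℝ) 1, ∀ y₂ ∈ Icc (0:ℝ) 1,
      |F x₁ y₁ - F x₂ y₂| ≤ |x₁ - x₂| + |y₁ - y₂|)
    (hdiag : ∀ x ∈ Icc (0:ℝ) 1, F x x ≤ x) :
    ∀ a ∈ Icc (0:ℝ) 1, ∀ b ∈ Icc (0:ℝ) 1, ∀ c ∈ Icc (0:ℝ) 1, ∀ e ∈ Icc (0:ℝ) 1,
      a ≤ b → c ≤ e →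
      0 ≤ min b (min e (F b e)) + min a (min c (F a c))
          - min b (min c (F b c)) - min a (min e (F a e)) := by
  intro a ha b hb c hc e he hab hce
  -- monotonicity facts
  have hm1 : F b c ≤ F b e := hmono2 b hb c hc e he hce
  have hm2 : F a e ≤ F b e := hmono1 e he a ha b hb hab
  -- Lipschitz facts
  have hl1 : F b c - F a c ≤ b - a := by
    have h := hlip b hb a ha c hc c hc
    have h' := le_abs_self (F b c - F a c)
    have hba : |b - a| = b - a := abs_of_nonneg (by linarith)
    have hcc : |c - c| = 0 := by simp
    rw [hba, hcc] at h
    linarith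
  have hl2 : F a e - F a c ≤ e - c := by
    have h := hlip a ha a ha e he c hc
    have h' := le_abs_self (F a e - F a c)
    have hec : |e - c| = e - c := abs_of_nonneg (by linarith)
    have haa : |a - a| = 0 := by simp
    rw [haa, hec] at h
    linarith
  -- 2-increasing fact
  have h2 := h2inc a ha b hb c hc e he hab hce
  -- upper bounds for inner corners
  have ubc1 : min b (min c (F b c)) ≤ b := min_le_left _ _
  have ubc2 : min b (min c (F b c)) ≤ c := le_trans (min_le_right _ _) (min_le_left _ _)
  have ubc3 : min b (min c (F b c)) ≤ F b c := le_trans (min_le_right _ _) (min_le_right _ _)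
  have uae1 : min a (min e (F a e)) ≤ a := min_le_left _ _
  have uae2 : min a (min e (F a e)) ≤ e := le_trans (min_le_right _ _) (min_le_left _ _)
  have uae3 : min a (min e (F a e)) ≤ F a e := le_trans (min_le_right _ _) (min_le_right _ _)
  -- case analysis on the outer corners
  rcases min_cases b (min e (F b e)) with ⟨h1, _⟩ | ⟨h1, _⟩ <;>
    [skip; rcases min_cases e (F b e) with ⟨h1', _⟩ | ⟨h1', _⟩] <;>
  rcases min_cases a (min c (F a c)) with ⟨h3, _⟩ | ⟨h3, _⟩ <;>
    [skip; rcases min_cases c (F a c) with ⟨h3', _⟩ | ⟨h3', _⟩; skip;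
     rcases min_cases c (F a c) with ⟨h3', _⟩ | ⟨h3', _⟩; skip;
     rcases min_cases c (F a c) with ⟨h3', _⟩ | ⟨h3', _⟩] <;>
  simp only [h1, h3] at * <;>
  first
  | linarith [h1']
  | linarith [h3']
  | linarith [h1', h3']
  | linarith
end

section
/- For any diagonal section δ, the pointwise supremum of all copulas with diagonal section δ, evaluated at (x,y), equals min{x, y, max{x,y} − (1/2)(δ̂(x) + δ̂(y) + TV(δ̂; [min{x,y}, max{x,y}]))}. -/
open Set MeasureTheory Filter

namespace ExactUB

/-- `δ̂`, the "hat" function. -/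
noncomputable def fd (d : ℝ → ℝ) (t : ℝ) : ℝ := t - d t

/-- cumulative variation of `δ̂` from `0`. -/
noncomputable def Vv (d : ℝ → ℝ) (t : ℝ) : ℝ :=
  variationOnFromTo (fun u => u - d u) (Icc (0:ℝ) 1) 0 t

lemma d_zero {d : ℝ → ℝ} (hd : IsDiagonalSection d) : d 0 = 0 := by
  have h1 := (hd.1 0 ⟨le_rfl, zero_le_one⟩).1
  have h2 := hd.2.1 0 ⟨le_rfl, zero_le_one⟩
  linarith

lemma fd_nonneg {d : ℝ → ℝ} (hd : IsDiagonalSection d) {t : ℝ} (ht : t ∈ Icc (0:ℝ) 1) :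
    0 ≤ fd d t := by
  have := hd.2.1 t ht; simp only [fd]; linarith

lemma fd_one {d : ℝ → ℝ} (hd : IsDiagonalSection d) : fd d 1 = 0 := by
  simp [fd, hd.2.2.2]

lemma fd_zero {d : ℝ → ℝ} (hd : IsDiagonalSection d) : fd d 0 = 0 := by
  simp [fd, d_zero hd]

lemma lip_fd {d : ℝ → ℝ} (hd : IsDiagonalSection d) :
    LipschitzOnWith 1 (fun t => t - d t) (Icc (0:ℝ) 1) := by
  rw [lipschitzOnWith_iff_dist_le_mul]
  intro x hx y hy
  simp only [NNReal.coe_one, one_mul, Real.dist_eq]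
  rcases le_total x y with h | h
  · have := hd.2.2.1 x hx y hy h
    rw [abs_sub_comm, abs_of_nonpos (by linarith [abs_nonneg (y-x)] : x - y ≤ 0)]
    rw [abs_le]
    constructor <;> [skip; skip] <;> nlinarith [this.1, this.2]
  · have := hd.2.2.1 y hy x hx h
    rw [abs_of_nonneg (by linarith : 0 ≤ x - y)]
    rw [abs_le]
    constructor <;> [skip; skip] <;> nlinarith [this.1, this.2]

lemma lbv_fd {d : ℝ → ℝ} (hd : IsDiagonalSection d) :
    LocallyBoundedVariationOn (fun t => t - d t) (Icc (0:ℝ) 1) :=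
  (lip_fd hd).locallyBoundedVariationOn

lemma Vv_zero (d : ℝ → ℝ) : Vv d 0 = 0 := variationOnFromTo.self _ _ _

lemma Vv_add {d : ℝ → ℝ} (hd : IsDiagonalSection d) {s t : ℝ} (hs : s ∈ Icc (0:ℝ) 1)
    (ht : t ∈ Icc (0:ℝ) 1) :
    Vv d s + variationOnFromTo (fun u => u - d u) (Icc (0:ℝ) 1) s t = Vv d t :=
  variationOnFromTo.add (lbv_fd hd) ⟨le_rfl, zero_le_one⟩ hs ht

lemma var_le {d : ℝ → ℝ} (hd : IsDiagonalSection d) {s t : ℝ} (hs : s ∈ Icc (0:ℝ) 1)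
    (ht : t ∈ Icc (0:ℝ) 1) (hst : s ≤ t) :
    variationOnFromTo (fun u => u - d u) (Icc (0:ℝ) 1) s t ≤ t - s := by
  rw [variationOnFromTo.eq_of_le _ _ hst]
  have hmaps : MapsTo (id : ℝ → ℝ) (Icc (0:ℝ) 1 ∩ Icc s t) (Icc (0:ℝ) 1) := fun x hx => hx.1
  have h1 : eVariationOn ((fun u => u - d u) ∘ id) (Icc (0:ℝ) 1 ∩ Icc s t)
      ≤ 1 * eVariationOn id (Icc (0:ℝ) 1 ∩ Icc s t) :=
    (lip_fd hd).comp_eVariationOn_le hmaps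
  have h2 : eVariationOn (id : ℝ → ℝ) (Icc (0:ℝ) 1 ∩ Icc s t) ≤ ENNReal.ofReal (t - s) := by
    have := (monotoneOn_id (s := Icc (0:ℝ) 1)).eVariationOn_le (a := s) (b := t) hs ht
    simpa using this
  refine ENNReal.toReal_le_of_le_ofReal (by linarith) ?_
  calc eVariationOn (fun u => u - d u) (Icc (0:ℝ) 1 ∩ Icc s t)
      = eVariationOn ((fun u => u - d u) ∘ id) (Icc (0:ℝ) 1 ∩ Icc s t) := rfl
    _ ≤ 1 * eVariationOn id (Icc (0:ℝ) 1 ∩ Icc s t) := h1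
    _ ≤ 1 * ENNReal.ofReal (t - s) := by exact mul_le_mul_right h2 _
    _ = ENNReal.ofReal (t - s) := one_mul _

lemma var_ge {d : ℝ → ℝ} (hd : IsDiagonalSection d) {s t : ℝ} (hs : s ∈ Icc (0:ℝ) 1)
    (ht : t ∈ Icc (0:ℝ) 1) (hst : s ≤ t) :
    |fd d t - fd d s| ≤ variationOnFromTo (fun u => u - d u) (Icc (0:ℝ) 1) s t := by
  rw [variationOnFromTo.eq_of_le _ _ hst]
  have hmem1 : s ∈ Icc (0:ℝ) 1 ∩ Icc s t := ⟨hs, le_rfl, hst⟩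
  have hmem2 : t ∈ Icc (0:ℝ) 1 ∩ Icc s t := ⟨ht, hst, le_rfl⟩
  have hedist := eVariationOn.edist_le (fun u => u - d u) hmem2 hmem1
  have hfin : eVariationOn (fun u => u - d u) (Icc (0:ℝ) 1 ∩ Icc s t) ≠ ⊤ :=
    lbv_fd hd s t hs ht
  have := ENNReal.toReal_mono hfin hedist
  rw [edist_dist, ENNReal.toReal_ofReal dist_nonneg, Real.dist_eq] at this
  simpa [fd] using this

lemma var_pair {d : ℝ → ℝ} (hd : IsDiagonalSection d) {s t : ℝ} (hs : s ∈ Icc (0:ℝ) 1)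
    (ht : t ∈ Icc (0:ℝ) 1) (hst : s ≤ t) :
    |fd d t - fd d s| ≤ Vv d t - Vv d s ∧ Vv d t - Vv d s ≤ t - s := by
  have hadd := Vv_add hd hs ht
  constructor
  · have := var_ge hd hs ht hst; linarith
  · have := var_le hd hs ht hst; linarith


section PartA

variable {d : ℝ → ℝ} {C : ℝ → ℝ → ℝ}

lemma mem01 : (0:ℝ) ∈ Icc (0:ℝ) 1 := ⟨le_rfl, zero_le_one⟩
lemma mem11 : (1:ℝ) ∈ Icc (0:ℝ) 1 := ⟨zero_le_one, le_rfl⟩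

lemma cop_mono_left (hC : IsCopula C) {s t y : ℝ} (hs : s ∈ Icc (0:ℝ) 1)
    (ht : t ∈ Icc (0:ℝ) 1) (hy : y ∈ Icc (0:ℝ) 1) (hst : s ≤ t) : C s y ≤ C t y := by
  have h := hC.2.2.2 s hs t ht 0 mem01 y hy hst hy.1
  have e1 := (hC.2.1 s hs).1
  have e2 := (hC.2.1 t ht).1
  linarith

lemma cop_mono_right (hC : IsCopula C) {x c e : ℝ} (hx : x ∈ Icc (0:ℝ) 1)
    (hc : c ∈ Icc (0:ℝ) 1) (he : e ∈ Icc (0:ℝ) 1) (hce : c ≤ e) : C x c ≤ C x e := by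
  have h := hC.2.2.2 0 mem01 x hx c hc e he hx.1 hce
  have e1 := (hC.2.1 c hc).2
  have e2 := (hC.2.1 e he).2
  linarith

lemma cop_le_diag_right (hC : IsCopula C) (hdg : ∀ t ∈ Icc (0:ℝ) 1, C t t = d t)
    {t y : ℝ} (ht : t ∈ Icc (0:ℝ) 1) (hy : y ∈ Icc (0:ℝ) 1) (hty : t ≤ y) :
    C t y ≤ y - (t - d t) := by
  have h := hC.2.2.2 t ht 1 mem11 t ht y hy ht.2 hty
  have e1 := (hC.2.2.1 y hy).2
  have e2 := (hC.2.2.1 t ht).2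
  have e3 := hdg t ht
  linarith

lemma cop_step (hC : IsCopula C) (hdg : ∀ t ∈ Icc (0:ℝ) 1, C t t = d t)
    {s t y : ℝ} (hs : s ∈ Icc (0:ℝ) 1) (ht : t ∈ Icc (0:ℝ) 1) (hy : y ∈ Icc (0:ℝ) 1)
    (hst : s ≤ t) (hty : t ≤ y) :
    C s y ≤ C t y + (t - d t) - (s - d s) := by
  have h1 := hC.2.2.2 s hs t ht t ht y hy hst hty
  have h2 := hC.2.2.2 s hs 1 mem11 s hs t ht hs.2 hst
  have e1 := (hC.2.2.1 t ht).2
  have e2 := (hC.2.2.1 s hs).2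
  have e3 := hdg t ht
  have e4 := hdg s hs
  linarith

lemma chain (hC : IsCopula C) (hdg : ∀ t ∈ Icc (0:ℝ) 1, C t t = d t)
    {y : ℝ} (hy : y ∈ Icc (0:ℝ) 1) :
    ∀ (n : ℕ) (u : ℕ → ℝ), Monotone u → (∀ i, u i ∈ Icc (0:ℝ) 1) → u n ≤ y →
      fd d (u 0) + fd d (u n) +
        ∑ i ∈ Finset.range n, |fd d (u (i+1)) - fd d (u i)| ≤ 2*(y - C (u 0) y) := by
  intro n
  induction n with
  | zero =>
    intro u _ hus hun
    have := cop_le_diag_right hC hdg (hus 0) hy hun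
    simp only [Finset.range_zero, Finset.sum_empty, fd]
    linarith
  | succ n ih =>
    intro u hu hus hun
    have h01 : u 0 ≤ u 1 := hu (by omega)
    have h1n : u 1 ≤ u (n+1) := hu (by omega)
    have ihp := ih (fun i => u (i+1)) (fun i j hij => hu (by omega)) (fun i => hus (i+1)) hun
    rw [Finset.sum_range_succ']
    have hkey : fd d (u 0) + |fd d (u 1) - fd d (u 0)| - fd d (u 1)
        ≤ 2*(C (u 1) y - C (u 0) y) := by
      rcases le_total (fd d (u 0)) (fd d (u 1)) with h | h
      · rw [abs_of_nonneg (by linarith)]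
        have := cop_mono_left hC (hus 0) (hus 1) hy h01
        linarith
      · rw [abs_of_nonpos (by linarith)]
        have := cop_step hC hdg (hus 0) (hus 1) hy h01 (le_trans h1n hun)
        simp only [fd] at h ⊢
        linarith
    linarith

lemma partA {d : ℝ → ℝ} (hd : IsDiagonalSection d) (hC : IsCopula C)
    (hdg : ∀ t ∈ Icc (0:ℝ) 1, C t t = d t)
    {x y : ℝ} (hx : x ∈ Icc (0:ℝ) 1) (hy : y ∈ Icc (0:ℝ) 1) (hxy : x ≤ y) :
    C x y ≤ min x (min y (y - (1/2)*((x - d x) + (y - d y) + TVd d x y))) := by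
  have hone1 := (hC.2.2.1 x hx).1
  have hone2 := (hC.2.2.1 y hy).2
  refine le_min ?_ (le_min ?_ ?_)
  · have := cop_mono_right hC hx hy mem11 hy.2
    linarith
  · have := cop_mono_left hC hx mem11 hy hx.2
    linarith
  · set K : ℝ := 2*(y - C x y) - (x - d x) - (y - d y) with hK
    have hsum : ∀ (n : ℕ) (u : ℕ → ℝ), Monotone u →
        (∀ i, u i ∈ Icc (0:ℝ) 1 ∩ Icc x y) →
        ∑ i ∈ Finset.range n, |fd d (u (i+1)) - fd d (u i)| ≤ K := by
      intro n u hu hus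
      set w : ℕ → ℝ := fun i => if i = 0 then x else if i ≤ n + 1 then u (i - 1) else y with hwdef
      have hw0 : w 0 = x := by simp [hwdef]
      have hwlast : w (n+2) = y := by
        simp only [hwdef]
        rw [if_neg (by omega), if_neg (by omega)]
      have hwmid : ∀ i, 1 ≤ i → i ≤ n + 1 → w i = u (i - 1) := by
        intro i h1 h2
        simp only [hwdef]
        rw [if_neg (by omega), if_pos h2]
      have hwmono : Monotone w := by
        apply monotone_nat_of_le_succ
        intro i
        rcases Nat.eq_zero_or_pos i with h0 | hpos
        · subst h0
          rw [hw0, hwmid 1 le_rfl (by omega)]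
          exact (hus 0).2.1
        · rcases le_or_gt (i+1) (n+1) with hle | hgt
          · rw [hwmid i hpos (by omega), hwmid (i+1) (by omega) hle]
            exact hu (by omega)
          · rcases le_or_gt i (n+1) with hle2 | hgt2
            · have : i = n + 1 := by omega
              subst this
              rw [hwmid (n+1) (by omega) le_rfl]
              simp only [hwdef]
              rw [if_neg (by omega), if_neg (by omega)]
              simpa using (hus n).2.2
            · simp only [hwdef]
              rw [if_neg (by omega), if_neg (by omega), if_neg (by omega), if_neg (by omega)]
        
      have hwS : ∀ i, w i ∈ Icc (0:ℝ) 1 := by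
        intro i
        simp only [hwdef]
        split
        · exact hx
        · split
          · exact (hus _).1
          · exact hy
      have hch := chain hC hdg hy (n+2) w hwmono hwS (le_of_eq hwlast)
      rw [hw0, hwlast] at hch
      rw [Finset.sum_range_succ'] at hch
      rw [Finset.sum_range_succ] at hch
      have hcong : ∀ i ∈ Finset.range n,
          |fd d (w (i+1+1)) - fd d (w (i+1))| = |fd d (u (i+1)) - fd d (u i)| := by
        intro i hi
        simp only [Finset.mem_range] at hi
        rw [hwmid (i+1) (by omega) (by omega), hwmid (i+1+1) (by omega) (by omega)]
        norm_num
      rw [Finset.sum_congr rfl hcong] at hch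
      simp only [fd] at hch ⊢
      have ha1 : (0:ℝ) ≤ |w (n+1+1) - d (w (n+1+1)) - (w (n+1) - d (w (n+1)))| := abs_nonneg _
      have ha2 : (0:ℝ) ≤ |w (0+1) - d (w (0+1)) - (w 0 - d (w 0))| := abs_nonneg _
      linarith
    have hK0 : 0 ≤ K := by
      have := hsum 0 (fun _ => x) monotone_const (fun i => ⟨hx, le_rfl, hxy⟩)
      simpa using this
    have hTV : TVd d x y ≤ K := by
      rw [show TVd d x y = variationOnFromTo (fun t => t - d t) (Icc (0:ℝ) 1) x y from rfl,
        variationOnFromTo.eq_of_le _ _ hxy]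
      refine ENNReal.toReal_le_of_le_ofReal hK0 ?_
      refine iSup_le ?_
      rintro ⟨n, u, hu, hus⟩
      have hrw : ∀ i ∈ Finset.range n,
          edist ((fun t => t - d t) (u (i+1))) ((fun t => t - d t) (u i))
            = ENNReal.ofReal |fd d (u (i+1)) - fd d (u i)| := by
        intro i _
        rw [edist_dist, Real.dist_eq]
        rfl
      rw [Finset.sum_congr rfl hrw, ← ENNReal.ofReal_sum_of_nonneg (fun i _ => abs_nonneg _)]
      exact ENNReal.ofReal_le_ofReal (hsum n u hu hus)
    linarith

end PartA


section PartB

variable (d : ℝ → ℝ) (a b : ℝ)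

/-- `W(t) = t - V(t)`, a nondecreasing function. -/
noncomputable def Wf (t : ℝ) : ℝ := t - Vv d t

/-- clamp of `t` to `[a,b]`. -/
noncomputable def clmp (t : ℝ) : ℝ := max a (min t b)

/-- relay mass up to `t`. -/
noncomputable def kp (t : ℝ) : ℝ := Wf d (clmp a b t) - Wf d a

noncomputable def pf (t : ℝ) : ℝ := (Vv d t + fd d t)/2 + kp d a b t
noncomputable def qf (t : ℝ) : ℝ := (Vv d t - fd d t)/2 + kp d a b t
noncomputable def rf (t : ℝ) : ℝ := (Vv d t - fd d t)/2
noncomputable def sf (t : ℝ) : ℝ := (Vv d t + fd d t)/2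
noncomputable def phi (t : ℝ) : ℝ := Wf d t - kp d a b t

/-- The attaining copula. -/
noncomputable def Hc (u v : ℝ) : ℝ :=
  min (phi d a b u) (phi d a b v) + min (pf d a b u) (qf d a b v) + min (rf d u) (sf d v)

variable {d a b}
variable (hd : IsDiagonalSection d) (ha : a ∈ Icc (0:ℝ) 1) (hb : b ∈ Icc (0:ℝ) 1)
  (hab : a ≤ b)

section Mono

include hd

lemma mono_W {s t : ℝ} (hs : s ∈ Icc (0:ℝ) 1) (ht : t ∈ Icc (0:ℝ) 1) (hst : s ≤ t) :
    Wf d s ≤ Wf d t := by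
  have h := (var_pair hd hs ht hst).2
  simp only [Wf]; linarith

lemma mono_V {s t : ℝ} (hs : s ∈ Icc (0:ℝ) 1) (ht : t ∈ Icc (0:ℝ) 1) (hst : s ≤ t) :
    Vv d s ≤ Vv d t := by
  have h := (var_pair hd hs ht hst).1
  have := abs_nonneg (fd d t - fd d s)
  linarith

lemma mono_r {s t : ℝ} (hs : s ∈ Icc (0:ℝ) 1) (ht : t ∈ Icc (0:ℝ) 1) (hst : s ≤ t) :
    rf d s ≤ rf d t := by
  have h := (var_pair hd hs ht hst).1
  have h2 := le_abs_self (fd d t - fd d s)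
  simp only [rf]; linarith

lemma mono_s {s t : ℝ} (hs : s ∈ Icc (0:ℝ) 1) (ht : t ∈ Icc (0:ℝ) 1) (hst : s ≤ t) :
    sf d s ≤ sf d t := by
  have h := (var_pair hd hs ht hst).1
  have h2 := neg_abs_le (fd d t - fd d s)
  simp only [sf]; linarith

end Mono

include hd ha hb hab

lemma clmp_mem {t : ℝ} (ht : t ∈ Icc (0:ℝ) 1) : clmp a b t ∈ Icc (0:ℝ) 1 := by
  constructor
  · exact le_trans ha.1 (le_max_left _ _)
  · exact max_le ha.2 (le_trans (min_le_right _ _) hb.2)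

omit hd ha hb hab in
lemma clmp_mono {s t : ℝ} (hst : s ≤ t) : clmp a b s ≤ clmp a b t :=
  max_le_max le_rfl (min_le_min hst le_rfl)

lemma mono_k {s t : ℝ} (hs : s ∈ Icc (0:ℝ) 1) (ht : t ∈ Icc (0:ℝ) 1) (hst : s ≤ t) :
    kp d a b s ≤ kp d a b t := by
  have := mono_W hd (clmp_mem hd ha hb hab hs) (clmp_mem hd ha hb hab ht)
    (clmp_mono hst)
  simp only [kp]; linarith

lemma mono_p {s t : ℝ} (hs : s ∈ Icc (0:ℝ) 1) (ht : t ∈ Icc (0:ℝ) 1) (hst : s ≤ t) :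
    pf d a b s ≤ pf d a b t := by
  have h1 := mono_s hd hs ht hst
  have h2 := mono_k hd ha hb hab hs ht hst
  simp only [pf]; simp only [sf] at h1; linarith

lemma mono_q {s t : ℝ} (hs : s ∈ Icc (0:ℝ) 1) (ht : t ∈ Icc (0:ℝ) 1) (hst : s ≤ t) :
    qf d a b s ≤ qf d a b t := by
  have h1 := mono_r hd hs ht hst
  have h2 := mono_k hd ha hb hab hs ht hst
  simp only [qf]; simp only [rf] at h1; linarith

lemma mono_phi {s t : ℝ} (hs : s ∈ Icc (0:ℝ) 1) (ht : t ∈ Icc (0:ℝ) 1) (hst : s ≤ t) :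
    phi d a b s ≤ phi d a b t := by
  simp only [phi, kp]
  rcases le_or_gt t a with hta | hat
  · have e1 : clmp a b s = a := by
      simp only [clmp]
      rw [min_eq_left (le_trans (le_trans hst hta) hab), max_eq_left (le_trans hst hta)]
    have e2 : clmp a b t = a := by
      simp only [clmp]
      rw [min_eq_left (le_trans hta hab), max_eq_left hta]
    rw [e1, e2]
    have := mono_W hd hs ht hst
    linarith
  · rcases le_or_gt b s with hbs | hsb
    · have e1 : clmp a b s = b := by
        simp only [clmp]
        rw [min_eq_right hbs, max_eq_right hab]
      have e2 : clmp a b t = b := by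
        simp only [clmp]
        rw [min_eq_right (le_trans hbs hst), max_eq_right hab]
      rw [e1, e2]
      have := mono_W hd hs ht hst
      linarith
    · have hcs : s ≤ clmp a b s := by
        simp only [clmp]
        rw [min_eq_left (le_of_lt hsb)]
        exact le_max_right _ _
      have hct : clmp a b t ≤ t := by
        simp only [clmp]
        exact max_le (le_of_lt hat) (min_le_left _ _)
      have hcc : clmp a b s ≤ clmp a b t := clmp_mono hst
      have m1 := mono_W hd hs (clmp_mem hd ha hb hab hs) hcs
      have m2 := mono_W hd (clmp_mem hd ha hb hab ht) ht hct
      linarith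

omit ha hb hab in
lemma Wf_zero : Wf d 0 = 0 := by simp [Wf, Vv_zero]

lemma clmp_zero : clmp a b 0 = a := by
  simp only [clmp]
  rw [min_eq_left hb.1, max_eq_left ha.1]

lemma clmp_one : clmp a b 1 = b := by
  simp only [clmp]
  rw [min_eq_right hb.2, max_eq_right hab]

omit hd ha hb hab in
lemma clmp_self : clmp a b a = a := by
  simp only [clmp]
  rcases le_total a b with h | h
  · rw [min_eq_left h, max_self]
  · rw [min_eq_right h, max_eq_left h]

omit hd ha hb hab in
lemma clmp_b (hba : a ≤ b) : clmp a b b = b := by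
  simp only [clmp, min_self, max_eq_right hba]

lemma kp_zero : kp d a b 0 = 0 := by
  simp [kp, clmp_zero hd ha hb hab]

omit ha hb hab in
lemma kp_self : kp d a b a = 0 := by simp [kp, clmp_self]

lemma phi_zero : phi d a b 0 = 0 := by
  simp [phi, Wf_zero hd, kp_zero hd ha hb hab]

lemma pf_zero : pf d a b 0 = 0 := by
  simp [pf, kp_zero hd ha hb hab, Vv_zero, fd_zero hd]

lemma qf_zero : qf d a b 0 = 0 := by
  simp [qf, kp_zero hd ha hb hab, Vv_zero, fd_zero hd]

omit ha hb hab in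
lemma rf_zero : rf d 0 = 0 := by simp [rf, Vv_zero, fd_zero hd]

omit ha hb hab in
lemma sf_zero : sf d 0 = 0 := by simp [sf, Vv_zero, fd_zero hd]

lemma pf_one_eq_qf_one : pf d a b 1 = qf d a b 1 := by
  simp [pf, qf, fd_one hd]

omit ha hb hab in
lemma rf_one_eq_sf_one : rf d 1 = sf d 1 := by
  simp [rf, sf, fd_one hd]

-- nonnegativity on [0,1]
lemma phi_nonneg {t : ℝ} (ht : t ∈ Icc (0:ℝ) 1) : 0 ≤ phi d a b t := by
  have := mono_phi hd ha hb hab mem01 ht ht.1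
  rw [phi_zero hd ha hb hab] at this; exact this

lemma pf_nonneg {t : ℝ} (ht : t ∈ Icc (0:ℝ) 1) : 0 ≤ pf d a b t := by
  have := mono_p hd ha hb hab mem01 ht ht.1
  rw [pf_zero hd ha hb hab] at this; exact this

lemma qf_nonneg {t : ℝ} (ht : t ∈ Icc (0:ℝ) 1) : 0 ≤ qf d a b t := by
  have := mono_q hd ha hb hab mem01 ht ht.1
  rw [qf_zero hd ha hb hab] at this; exact this

omit ha hb hab in
lemma rf_nonneg {t : ℝ} (ht : t ∈ Icc (0:ℝ) 1) : 0 ≤ rf d t := by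
  have := mono_r hd mem01 ht ht.1
  rw [rf_zero hd] at this; exact this

omit ha hb hab in
lemma sf_nonneg {t : ℝ} (ht : t ∈ Icc (0:ℝ) 1) : 0 ≤ sf d t := by
  have := mono_s hd mem01 ht ht.1
  rw [sf_zero hd] at this; exact this

omit hd ha hb hab in
lemma qf_le_pf (hd : IsDiagonalSection d) {t : ℝ} (ht : t ∈ Icc (0:ℝ) 1) :
    qf d a b t ≤ pf d a b t := by
  have := fd_nonneg hd ht
  simp only [pf, qf]; linarith

omit ha hb hab in
lemma rf_le_sf {t : ℝ} (ht : t ∈ Icc (0:ℝ) 1) : rf d t ≤ sf d t := by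
  have := fd_nonneg hd ht
  simp only [rf, sf]; linarith

omit hd ha hb hab in
lemma min2inc {A B C' E : ℝ} (h1 : A ≤ B) (h2 : C' ≤ E) :
    min B C' + min A E ≤ min B E + min A C' := by
  rcases le_total A C' with h | h
  · rw [min_eq_left h]
    have i1 : min A E ≤ A := min_le_left _ _
    have i2 : min B C' ≤ min B E := min_le_min le_rfl h2
    linarith
  · rw [min_eq_right h]
    have i1 : min B C' ≤ C' := min_le_right _ _
    have i2 : min A E ≤ min B E := min_le_min h1 le_rfl
    linarith

lemma Hc_x1 {t : ℝ} (ht : t ∈ Icc (0:ℝ) 1) : Hc d a b t 1 = t := by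
  simp only [Hc]
  rw [min_eq_left (mono_phi hd ha hb hab ht mem11 ht.2),
    min_eq_left ((mono_p hd ha hb hab ht mem11 ht.2).trans_eq (pf_one_eq_qf_one hd ha hb hab)),
    min_eq_left ((mono_r hd ht mem11 ht.2).trans_eq (rf_one_eq_sf_one hd))]
  simp only [phi, pf, rf, Wf, fd]
  ring

lemma Hc_1x {t : ℝ} (ht : t ∈ Icc (0:ℝ) 1) : Hc d a b 1 t = t := by
  simp only [Hc]
  rw [min_eq_right (mono_phi hd ha hb hab ht mem11 ht.2),
    min_eq_right ((mono_q hd ha hb hab ht mem11 ht.2).trans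
      (le_of_eq (pf_one_eq_qf_one hd ha hb hab).symm)),
    min_eq_right ((mono_s hd ht mem11 ht.2).trans (le_of_eq (rf_one_eq_sf_one hd).symm))]
  simp only [phi, qf, sf, Wf, fd]
  ring

lemma Hc_x0 {t : ℝ} (ht : t ∈ Icc (0:ℝ) 1) : Hc d a b t 0 = 0 := by
  simp only [Hc]
  rw [phi_zero hd ha hb hab, qf_zero hd ha hb hab, sf_zero hd,
    min_eq_right (phi_nonneg hd ha hb hab ht),
    min_eq_right (pf_nonneg hd ha hb hab ht),
    min_eq_right (rf_nonneg hd ht)]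
  ring

lemma Hc_0x {t : ℝ} (ht : t ∈ Icc (0:ℝ) 1) : Hc d a b 0 t = 0 := by
  simp only [Hc]
  rw [phi_zero hd ha hb hab, pf_zero hd ha hb hab, rf_zero hd,
    min_eq_left (phi_nonneg hd ha hb hab ht),
    min_eq_left (qf_nonneg hd ha hb hab ht),
    min_eq_left (sf_nonneg hd ht)]
  ring

lemma Hc_copula : IsCopula (Hc d a b) := by
  refine ⟨?_, ?_, ?_, ?_⟩
  · intro x hx y hy
    constructor
    · have t1 : 0 ≤ min (phi d a b x) (phi d a b y) :=
        le_min (phi_nonneg hd ha hb hab hx) (phi_nonneg hd ha hb hab hy)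
      have t2 : 0 ≤ min (pf d a b x) (qf d a b y) :=
        le_min (pf_nonneg hd ha hb hab hx) (qf_nonneg hd ha hb hab hy)
      have t3 : 0 ≤ min (rf d x) (sf d y) :=
        le_min (rf_nonneg hd hx) (sf_nonneg hd hy)
      simp only [Hc]; linarith
    · have h1 : Hc d a b x y ≤ Hc d a b x 1 := by
        simp only [Hc]
        have t1 : min (phi d a b x) (phi d a b y) ≤ min (phi d a b x) (phi d a b 1) :=
          min_le_min le_rfl (mono_phi hd ha hb hab hy mem11 hy.2)
        have t2 : min (pf d a b x) (qf d a b y) ≤ min (pf d a b x) (qf d a b 1) :=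
          min_le_min le_rfl (mono_q hd ha hb hab hy mem11 hy.2)
        have t3 : min (rf d x) (sf d y) ≤ min (rf d x) (sf d 1) :=
          min_le_min le_rfl (mono_s hd hy mem11 hy.2)
        linarith
      rw [Hc_x1 hd ha hb hab hx] at h1
      exact h1.trans hx.2
  · intro x hx
    exact ⟨Hc_x0 hd ha hb hab hx, Hc_0x hd ha hb hab hx⟩
  · intro x hx
    exact ⟨Hc_x1 hd ha hb hab hx, Hc_1x hd ha hb hab hx⟩
  · intro a' ha' b' hb' c hc e he h1 h2
    simp only [Hc]
    have i1 := min2inc (mono_phi hd ha hb hab ha' hb' h1) (mono_phi hd ha hb hab hc he h2)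
    have i2 := min2inc (mono_p hd ha hb hab ha' hb' h1) (mono_q hd ha hb hab hc he h2)
    have i3 := min2inc (mono_r hd ha' hb' h1) (mono_s hd hc he h2)
    linarith

lemma Hc_diag {t : ℝ} (ht : t ∈ Icc (0:ℝ) 1) : Hc d a b t t = d t := by
  simp only [Hc, min_self]
  rw [min_eq_right (qf_le_pf hd ht), min_eq_left (rf_le_sf hd ht)]
  simp only [phi, qf, rf, Wf, fd, kp]
  ring

lemma Hc_value : Hc d a b a b =
    min a (b - (1/2)*((a - d a) + (b - d b) + (Vv d b - Vv d a))) := by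
  simp only [Hc]
  rw [min_eq_left (mono_phi hd ha hb hab ha hb hab),
    min_eq_left ((mono_r hd ha hb hab).trans (rf_le_sf hd hb))]
  have e1 : phi d a b a + pf d a b a + rf d a = a := by
    simp only [phi, pf, rf, Wf, fd, kp_self, clmp_self]
    ring
  have e2 : phi d a b a + qf d a b b + rf d a =
      b - (1/2)*((a - d a) + (b - d b) + (Vv d b - Vv d a)) := by
    simp only [phi, qf, rf, Wf, fd, kp_self, kp, clmp_self, clmp_b hab]
    ring
  rcases le_total (pf d a b a) (qf d a b b) with h | h
  · rw [min_eq_left h, min_eq_left (by linarith [e1, e2] : a ≤ b - (1/2)*((a - d a) + (b - d b) + (Vv d b - Vv d a)))]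
    linarith [e1]
  · rw [min_eq_right h, min_eq_right (by linarith [e1, e2] : b - (1/2)*((a - d a) + (b - d b) + (Vv d b - Vv d a)) ≤ a)]
    linarith [e2]

end PartB

section Final

lemma flip_copula {C : ℝ → ℝ → ℝ} (hC : IsCopula C) : IsCopula (fun u v => C v u) := by
  obtain ⟨h1, h2, h3, h4⟩ := hC
  refine ⟨fun x hx y hy => h1 y hy x hx, fun x hx => ⟨(h2 x hx).2, (h2 x hx).1⟩,
    fun x hx => ⟨(h3 x hx).2, (h3 x hx).1⟩, ?_⟩
  intro a ha b hb c hc e he hab hce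
  have := h4 c hc e he a ha b hb hce hab
  linarith

lemma main_le {d : ℝ → ℝ} (hd : IsDiagonalSection d) {x y : ℝ}
    (hx : x ∈ Icc (0:ℝ) 1) (hy : y ∈ Icc (0:ℝ) 1) (hxy : x ≤ y) :
    sSup {c | ∃ C : ℝ → ℝ → ℝ, IsCopula C ∧ (∀ t ∈ Icc (0:ℝ) 1, C t t = d t) ∧ c = C x y}
      = min x (min y (y - (1/2)*((x - d x) + (y - d y) + TVd d x y))) := by
  have hTVeq : TVd d x y = Vv d y - Vv d x := by
    have h := Vv_add hd hx hy
    simp only [TVd]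
    linarith
  have hTV0 : 0 ≤ TVd d x y := variationOnFromTo.nonneg_of_le _ _ hxy
  have hfx : 0 ≤ x - d x := fd_nonneg hd hx
  have hfy : 0 ≤ y - d y := fd_nonneg hd hy
  have hE : y - (1/2)*((x - d x) + (y - d y) + TVd d x y) ≤ y := by linarith
  have hval : Hc d x y x y
      = min x (min y (y - (1/2)*((x - d x) + (y - d y) + TVd d x y))) := by
    rw [Hc_value hd hx hy hxy, min_eq_right hE, ← hTVeq]
  refine IsGreatest.csSup_eq ⟨⟨Hc d x y, Hc_copula hd hx hy hxy,
    fun t ht => Hc_diag hd hx hy hxy ht, hval.symm⟩, ?_⟩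
  rintro c ⟨C, hC, hdg, rfl⟩
  exact partA hd hC hdg hx hy hxy

end Final

end ExactUB

theorem exact_upper_bound (d : ℝ → ℝ) (hd : IsDiagonalSection d) :
    ∀ x ∈ Icc (0:ℝ) 1, ∀ y ∈ Icc (0:ℝ) 1,
      sSup {c | ∃ C : ℝ → ℝ → ℝ, IsCopula C ∧ (∀ t ∈ Icc (0:ℝ) 1, C t t = d t) ∧ c = C x y}
        = min x (min y (max x y -
            (1/2)*((x - d x) + (y - d y) + TVd d (min x y) (max x y)))) := by
  intro x hx y hy
  rcases le_total x y with h | h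
  · rw [min_eq_left h, max_eq_right h]
    exact ExactUB.main_le hd hx hy h
  · rw [min_eq_right h, max_eq_left h]
    have hset : {c | ∃ C : ℝ → ℝ → ℝ, IsCopula C ∧ (∀ t ∈ Icc (0:ℝ) 1, C t t = d t) ∧ c = C x y}
        = {c | ∃ C : ℝ → ℝ → ℝ, IsCopula C ∧ (∀ t ∈ Icc (0:ℝ) 1, C t t = d t) ∧ c = C y x} := by
      ext c
      constructor
      · rintro ⟨C, h1, h2, h3⟩
        exact ⟨fun u v => C v u, ExactUB.flip_copula h1, fun t ht => h2 t ht, h3⟩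
      · rintro ⟨C, h1, h2, h3⟩
        exact ⟨fun u v => C v u, ExactUB.flip_copula h1, fun t ht => h2 t ht, h3⟩
    rw [hset, ExactUB.main_le hd hy hx h,
      show x - (1/2)*((y - d y) + (x - d x) + TVd d y x)
        = x - (1/2)*((x - d x) + (y - d y) + TVd d y x) from by ring,
      min_left_comm]
end

section
/- Let δ be a diagonal section, f^δ(x,y) = y − (1/2)(δ̂(x) + δ̂(y) + TV(δ̂;[0,y]) − TV(δ̂;[0,x])), D_f°(δ) = {(x,y) : f^δ(x,y) < min{x,y}}, and D_f(δ) the union of the closure of D_f°(δ) with the main diagonal. If (x,y) ∈ D_f(δ), then the closed triangle with vertices (x,y), (x,x), (y,y) is contained in D_f(δ). -/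
open Set MeasureTheory Filter

def DfO (d : ℝ → ℝ) : Set (ℝ × ℝ) :=
  {p | p.1 ∈ Icc (0:ℝ) 1 ∧ p.2 ∈ Icc (0:ℝ) 1 ∧ fdelta d p.1 p.2 < min p.1 p.2}

def Df (d : ℝ → ℝ) : Set (ℝ × ℝ) :=
  closure (DfO d) ∪ {p | p.1 ∈ Icc (0:ℝ) 1 ∧ p.2 = p.1}

section Aux

variable {d : ℝ → ℝ}

lemma hLip (hd : IsDiagonalSection d) :
    LipschitzOnWith 1 (fun t => t - d t) (Icc (0:ℝ) 1) := by
  rw [lipschitzOnWith_iff_dist_le_mul]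
  intro a ha b hb
  rw [Real.dist_eq, Real.dist_eq, NNReal.coe_one, one_mul]
  rcases le_total a b with hab | hab
  · have h1 := hd.2.2.1 a ha b hb hab
    rw [abs_of_nonpos (by linarith : a - b ≤ 0), abs_le]
    constructor <;> linarith [h1.1, h1.2]
  · have h1 := hd.2.2.1 b hb a ha hab
    rw [abs_of_nonneg (by linarith : 0 ≤ a - b), abs_le]
    constructor <;> linarith [h1.1, h1.2]

lemma hBV (hd : IsDiagonalSection d) :
    LocallyBoundedVariationOn (fun t => t - d t) (Icc (0:ℝ) 1) :=
  (hLip hd).locallyBoundedVariationOn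

lemma TV_add (hd : IsDiagonalSection d) {a b c : ℝ} (ha : a ∈ Icc (0:ℝ) 1)
    (hb : b ∈ Icc (0:ℝ) 1) (hc : c ∈ Icc (0:ℝ) 1) :
    TVd d a b + TVd d b c = TVd d a c :=
  variationOnFromTo.add (hBV hd) ha hb hc

lemma TV_le (hd : IsDiagonalSection d) {a b : ℝ} (ha : a ∈ Icc (0:ℝ) 1)
    (hb : b ∈ Icc (0:ℝ) 1) (hab : a ≤ b) : TVd d a b ≤ b - a := by
  unfold TVd
  rw [variationOnFromTo.eq_of_le _ _ hab]
  have h1 : eVariationOn (fun t => t - d t) (Icc (0:ℝ) 1 ∩ Icc a b)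
      ≤ ENNReal.ofReal (b - a) := by
    calc eVariationOn (fun t => t - d t) (Icc (0:ℝ) 1 ∩ Icc a b)
        = eVariationOn ((fun t => t - d t) ∘ id) (Icc (0:ℝ) 1 ∩ Icc a b) := rfl
      _ ≤ (1:NNReal) * eVariationOn id (Icc (0:ℝ) 1 ∩ Icc a b) :=
          (hLip hd).comp_eVariationOn_le (fun z hz => hz.1)
      _ = eVariationOn id (Icc (0:ℝ) 1 ∩ Icc a b) := by
          rw [ENNReal.coe_one, one_mul]
      _ ≤ ENNReal.ofReal (id b - id a) := by
          have hmono : MonotoneOn (id : ℝ → ℝ) (Icc (0:ℝ) 1) := fun _ _ _ _ h => h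
          exact hmono.eVariationOn_le ha hb
  exact ENNReal.toReal_le_of_le_ofReal (by simpa using sub_nonneg.2 hab) h1

lemma TV_diff (hd : IsDiagonalSection d) {a b : ℝ} (ha : a ∈ Icc (0:ℝ) 1)
    (hb : b ∈ Icc (0:ℝ) 1) (hab : a ≤ b) :
    |(b - d b) - (a - d a)| ≤ TVd d a b := by
  unfold TVd
  rw [variationOnFromTo.eq_of_le _ _ hab]
  have hma : a ∈ Icc (0:ℝ) 1 ∩ Icc a b := ⟨ha, le_refl a, hab⟩
  have hmb : b ∈ Icc (0:ℝ) 1 ∩ Icc a b := ⟨hb, hab, le_refl b⟩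
  have h1 := eVariationOn.edist_le (fun t => t - d t) hma hmb
  have h2 := ENNReal.toReal_mono (hBV hd a b ha hb) h1
  rw [← dist_edist] at h2
  have h3 := (le_of_eq (Real.dist_eq _ _).symm).trans h2
  rw [show b - d b - (a - d a) = -((a - d a) - (b - d b)) by ring, abs_neg]
  exact h3

/-- Case x < y : if `fdelta d X Y < X` and `X ≤ u ≤ v ≤ Y`, then `fdelta d u v < u`. -/
lemma mem1 (hd : IsDiagonalSection d) {X Y u v : ℝ}
    (hX : X ∈ Icc (0:ℝ) 1) (hY : Y ∈ Icc (0:ℝ) 1)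
    (hXu : X ≤ u) (huv : u ≤ v) (hvY : v ≤ Y)
    (hf : fdelta d X Y < X) : fdelta d u v < u := by
  have h0 : (0:ℝ) ∈ Icc (0:ℝ) 1 := by constructor <;> norm_num
  have hu : u ∈ Icc (0:ℝ) 1 := ⟨le_trans hX.1 hXu, le_trans (huv.trans hvY) hY.2⟩
  have hv : v ∈ Icc (0:ℝ) 1 := ⟨le_trans hu.1 huv, le_trans hvY hY.2⟩
  have tv1 := TV_add hd h0 hv hY
  have tv2 := TV_add hd h0 hX hu
  have b1 := TV_le hd hv hY hvY
  have b2 := TV_le hd hX hu hXu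
  have m1 := (hd.2.2.1 v hv Y hY hvY).1
  have m2 := (hd.2.2.1 X hX u hu hXu).2
  unfold fdelta at hf ⊢
  linarith

/-- Case y < x : if `fdelta d X Y < Y` and `Y ≤ v ≤ u ≤ X`, then `fdelta d u v < v`. -/
lemma mem2 (hd : IsDiagonalSection d) {X Y u v : ℝ}
    (hX : X ∈ Icc (0:ℝ) 1) (hY : Y ∈ Icc (0:ℝ) 1)
    (hYv : Y ≤ v) (hvu : v ≤ u) (huX : u ≤ X)
    (hf : fdelta d X Y < Y) : fdelta d u v < v := by
  have h0 : (0:ℝ) ∈ Icc (0:ℝ) 1 := by constructor <;> norm_num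
  have hv : v ∈ Icc (0:ℝ) 1 := ⟨le_trans hY.1 hYv, le_trans (hvu.trans huX) hX.2⟩
  have hu : u ∈ Icc (0:ℝ) 1 := ⟨le_trans hv.1 hvu, le_trans huX hX.2⟩
  have a1 := TV_add hd h0 hY hv
  have a2 := TV_add hd h0 hv hu
  have a3 := TV_add hd h0 hu hX
  have d1 := abs_le.1 (TV_diff hd hu hX huX)
  have d2 := abs_le.1 (TV_diff hd hY hv hYv)
  unfold fdelta at hf ⊢
  linarith [d1.2, d2.1]

lemma isClosed_Df : IsClosed (Df d) := by
  apply IsClosed.union isClosed_closure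
  have : {p : ℝ × ℝ | p.1 ∈ Icc (0:ℝ) 1 ∧ p.2 = p.1}
      = (Prod.fst ⁻¹' Icc (0:ℝ) 1) ∩ {p : ℝ × ℝ | p.2 = p.1} := rfl
  rw [this]
  exact (isClosed_Icc.preimage continuous_fst).inter (isClosed_eq continuous_snd continuous_fst)

end Aux

theorem triangle_in_Df (d : ℝ → ℝ) (hd : IsDiagonalSection d)
    (x y : ℝ) (hx : x ∈ Icc (0:ℝ) 1) (hy : y ∈ Icc (0:ℝ) 1)
    (h : (x, y) ∈ Df d) :
    convexHull ℝ ({(x, y), (x, x), (y, y)} : Set (ℝ × ℝ)) ⊆ Df d := by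
  rcases h with hcl | hdiag
  · -- closure case
    intro p hp
    rw [show ({(x, y), (x, x), (y, y)} : Set (ℝ × ℝ)) = insert (x, y) {(x, x), (y, y)} from rfl,
      convexHull_insert (insert_nonempty _ _), convexHull_pair, mem_convexJoin] at hp
    obtain ⟨q1, hq1, z, hz, hpseg⟩ := hp
    rw [mem_singleton_iff] at hq1
    subst hq1
    obtain ⟨s, t, hs, ht, hst, rfl⟩ := hz
    obtain ⟨a, b, ha, hb, hab, rfl⟩ := hpseg
    set F : ℝ × ℝ → ℝ × ℝ :=
      fun q => (a * q.1 + b * (s * q.1 + t * q.2), a * q.2 + b * (s * q.1 + t * q.2)) with hF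
    have hFcont : Continuous F := by fun_prop
    have hpe : a • (x, y) + b • (s • (x, x) + t • (y, y)) = F (x, y) := by
      simp only [hF, Prod.smul_def, smul_eq_mul, Prod.mk_add_mk, Prod.mk.injEq]
    have hmaps : ∀ q ∈ DfO d, F q ∈ Df d := by
      rintro ⟨X, Y⟩ ⟨hX, hY, hfXY⟩
      set m : ℝ := s * X + t * Y with hm
      have hFq : F (X, Y) = (a * X + b * m, a * Y + b * m) := rfl
      rcases lt_trichotomy X Y with hXY | hXY | hXY
      · -- X < Y
        have hYX : (0:ℝ) ≤ Y - X := by linarith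
        have e1 : m - X = t * (Y - X) := by rw [hm]; linear_combination X * hst
        have e2 : Y - m = s * (Y - X) := by rw [hm]; linear_combination (-Y) * hst
        have hmX : X ≤ m := by nlinarith [mul_nonneg ht hYX]
        have hmY : m ≤ Y := by nlinarith [mul_nonneg hs hYX]
        have e3 : (a * X + b * m) - X = b * (m - X) := by linear_combination X * hab
        have e4 : (a * Y + b * m) - (a * X + b * m) = a * (Y - X) := by ring
        have e5 : Y - (a * Y + b * m) = b * (Y - m) := by linear_combination (-Y) * hab
        have hXu : X ≤ a * X + b * m := by
          nlinarith [mul_nonneg hb (by linarith : (0:ℝ) ≤ m - X)]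
        have huv : a * X + b * m ≤ a * Y + b * m := by
          nlinarith [mul_nonneg ha hYX]
        have hvY : a * Y + b * m ≤ Y := by
          nlinarith [mul_nonneg hb (by linarith : (0:ℝ) ≤ Y - m)]
        rw [min_eq_left hXY.le] at hfXY
        left
        apply subset_closure
        refine ⟨⟨le_trans hX.1 hXu, le_trans (huv.trans hvY) hY.2⟩,
          ⟨le_trans (le_trans hX.1 hXu) huv, le_trans hvY hY.2⟩, ?_⟩
        rw [hFq]
        simp only
        rw [min_eq_left huv]
        exact mem1 hd hX hY hXu huv hvY hfXY
      · -- X = Y : degenerate, the whole triangle is the point (X, X)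
        have hmX : m = X := by rw [hm, ← hXY]; linear_combination X * hst
        have hux : a * X + b * m = X := by rw [hmX]; linear_combination X * hab
        right
        rw [hFq]
        refine ⟨?_, ?_⟩
        · simp only [hux]; exact hX
        · simp only [hux, ← hXY, hux]
      · -- Y < X
        have hXY' : (0:ℝ) ≤ X - Y := by linarith
        have e1 : m - Y = s * (X - Y) := by rw [hm]; linear_combination Y * hst
        have e2 : X - m = t * (X - Y) := by rw [hm]; linear_combination (-X) * hst
        have hmY : Y ≤ m := by nlinarith [mul_nonneg hs hXY']
        have hmX : m ≤ X := by nlinarith [mul_nonneg ht hXY']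
        have e3 : (a * Y + b * m) - Y = b * (m - Y) := by linear_combination Y * hab
        have e4 : (a * X + b * m) - (a * Y + b * m) = a * (X - Y) := by ring
        have e5 : X - (a * X + b * m) = b * (X - m) := by linear_combination (-X) * hab
        have hYv : Y ≤ a * Y + b * m := by
          nlinarith [mul_nonneg hb (by linarith : (0:ℝ) ≤ m - Y)]
        have hvu : a * Y + b * m ≤ a * X + b * m := by
          nlinarith [mul_nonneg ha hXY']
        have huX : a * X + b * m ≤ X := by
          nlinarith [mul_nonneg hb (by linarith : (0:ℝ) ≤ X - m)]
        rw [min_eq_right hXY.le] at hfXY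
        left
        apply subset_closure
        refine ⟨⟨le_trans (le_trans hY.1 hYv) hvu, le_trans huX hX.2⟩,
          ⟨le_trans hY.1 hYv, le_trans (hvu.trans huX) hX.2⟩, ?_⟩
        rw [hFq]
        simp only
        rw [min_eq_right hvu]
        exact mem2 hd hX hY hYv hvu huX hfXY
    rw [hpe]
    have h1 : F (x, y) ∈ F '' closure (DfO d) := mem_image_of_mem F hcl
    have h2 : F '' closure (DfO d) ⊆ closure (F '' DfO d) :=
      image_closure_subset_closure_image hFcont
    have h3 : closure (F '' DfO d) ⊆ Df d := by
      apply closure_minimal _ isClosed_Df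
      rintro q ⟨q', hq', rfl⟩
      exact hmaps q' hq'
    exact h3 (h2 h1)
  · -- diagonal case: y = x
    obtain ⟨hx1, hyx⟩ := hdiag
    have hyx' : y = x := hyx
    have hset : ({(x, x), (x, x), (x, x)} : Set (ℝ × ℝ)) = {(x, x)} := by simp
    rw [hyx', hset, convexHull_singleton]
    intro p hp
    rw [mem_singleton_iff] at hp
    subst hp
    exact Or.inr ⟨hx, rfl⟩
end

section
/- Let δ be a diagonal section and D_f(δ) as above. Then the functions g_U(x) = max{y : (x,y) ∈ D_f(δ)} and g_L(x) = min{y : (x,y) ∈ D_f(δ)} are well defined, satisfy g_L(x) ≤ x ≤ g_U(x), and are increasing; moreover g_U is right-continuous and g_L is left-continuous. -/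
open Set MeasureTheory Filter Topology

noncomputable def gU (d : ℝ → ℝ) (x : ℝ) : ℝ := sSup {y | (x, y) ∈ Df d}

noncomputable def gL (d : ℝ → ℝ) (x : ℝ) : ℝ := sInf {y | (x, y) ∈ Df d}

/-! ### Auxiliary lemmas -/

def ehat (d : ℝ → ℝ) : ℝ → ℝ := fun t => t - d t

section Aux

variable {d : ℝ → ℝ}

lemma ehat_diff_bounds (hd : IsDiagonalSection d) {u v : ℝ} (hu : u ∈ Icc (0:ℝ) 1) (hv : v ∈ Icc (0:ℝ) 1)
    (huv : u ≤ v) : -(v - u) ≤ ehat d v - ehat d u ∧ ehat d v - ehat d u ≤ v - u := by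
  obtain ⟨h1, h2⟩ := hd.2.2.1 u hu v hv huv
  simp only [ehat]
  constructor <;> linarith

lemma ehat_lip (hd : IsDiagonalSection d) : LipschitzOnWith 1 (ehat d) (Icc (0:ℝ) 1) := by
  apply LipschitzOnWith.of_dist_le_mul
  intro x hx y hy
  rw [Real.dist_eq, Real.dist_eq, NNReal.coe_one, one_mul]
  rcases le_total x y with h | h
  · obtain ⟨h1, h2⟩ := ehat_diff_bounds hd hx hy h
    have habs : |x - y| = y - x := by
      rw [abs_sub_comm]; exact abs_of_nonneg (by linarith)
    rw [habs, abs_sub_comm, abs_le]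
    constructor <;> linarith
  · obtain ⟨h1, h2⟩ := ehat_diff_bounds hd hy hx h
    have habs : |x - y| = x - y := abs_of_nonneg (by linarith)
    rw [habs, abs_le]
    constructor <;> linarith

lemma ehat_lbv (hd : IsDiagonalSection d) : LocallyBoundedVariationOn (ehat d) (Icc (0:ℝ) 1) :=
  (ehat_lip hd).locallyBoundedVariationOn

lemma tv_ge (hd : IsDiagonalSection d) {u v : ℝ} (hu : u ∈ Icc (0:ℝ) 1) (hv : v ∈ Icc (0:ℝ) 1) (huv : u ≤ v) :
    ehat d v - ehat d u ≤ variationOnFromTo (ehat d) (Icc (0:ℝ) 1) u v := by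
  have hmono := variationOnFromTo.sub_self_monotoneOn (ehat_lbv hd) hu
  have := hmono hu hv huv
  simp only [Pi.sub_apply, variationOnFromTo.self] at this
  linarith

lemma tv_le (hd : IsDiagonalSection d) {u v : ℝ} (hu : u ∈ Icc (0:ℝ) 1) (hv : v ∈ Icc (0:ℝ) 1) (huv : u ≤ v) :
    variationOnFromTo (ehat d) (Icc (0:ℝ) 1) u v ≤ v - u := by
  rw [variationOnFromTo.eq_of_le _ _ huv]
  apply ENNReal.toReal_le_of_le_ofReal (by linarith)
  have h1 : eVariationOn (ehat d ∘ id) (Icc (0:ℝ) 1 ∩ Icc u v) ≤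
      (1 : NNReal) * eVariationOn id (Icc (0:ℝ) 1 ∩ Icc u v) :=
    (ehat_lip hd).comp_eVariationOn_le (fun z hz => hz.1)
  have h2 : eVariationOn (id : ℝ → ℝ) (Icc (0:ℝ) 1 ∩ Icc u v) ≤ ENNReal.ofReal (v - u) := by
    have := (monotoneOn_id (s := Icc (0:ℝ) 1)).eVariationOn_le hu hv
    simpa using this
  calc eVariationOn (ehat d) (Icc (0:ℝ) 1 ∩ Icc u v)
      = eVariationOn (ehat d ∘ id) (Icc (0:ℝ) 1 ∩ Icc u v) := by rw [Function.comp_id]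
    _ ≤ (1 : NNReal) * eVariationOn id (Icc (0:ℝ) 1 ∩ Icc u v) := h1
    _ = eVariationOn id (Icc (0:ℝ) 1 ∩ Icc u v) := by simp
    _ ≤ ENNReal.ofReal (v - u) := h2

lemma fdelta_diff (hd : IsDiagonalSection d) {u v : ℝ} (hu : u ∈ Icc (0:ℝ) 1) (hv : v ∈ Icc (0:ℝ) 1) (y : ℝ) :
    fdelta d v y - fdelta d u y
      = (1/2) * (variationOnFromTo (ehat d) (Icc (0:ℝ) 1) u v - (ehat d v - ehat d u)) := by
  have h0 : (0:ℝ) ∈ Icc (0:ℝ) 1 := ⟨le_refl 0, zero_le_one⟩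
  have hadd := variationOnFromTo.add (ehat_lbv hd) h0 hu hv
  have hTV : TVd d 0 u = variationOnFromTo (ehat d) (Icc (0:ℝ) 1) 0 u := rfl
  have hTV' : TVd d 0 v = variationOnFromTo (ehat d) (Icc (0:ℝ) 1) 0 v := rfl
  simp only [fdelta, ehat, hTV, hTV']
  linarith

lemma fdelta_mono (hd : IsDiagonalSection d) {u v : ℝ} (hu : u ∈ Icc (0:ℝ) 1) (hv : v ∈ Icc (0:ℝ) 1) (huv : u ≤ v)
    (y : ℝ) : fdelta d u y ≤ fdelta d v y := by
  have h1 := fdelta_diff hd hu hv y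
  have h2 := tv_ge hd hu hv huv
  linarith

lemma fdelta_lip (hd : IsDiagonalSection d) {u v : ℝ} (hu : u ∈ Icc (0:ℝ) 1) (hv : v ∈ Icc (0:ℝ) 1) (huv : u ≤ v)
    (y : ℝ) : fdelta d v y ≤ fdelta d u y + (v - u) := by
  have h1 := fdelta_diff hd hu hv y
  have h2 := tv_le hd hu hv huv
  have h3 := (ehat_diff_bounds hd hu hv huv).1
  linarith

lemma DfO_shift_right (hd : IsDiagonalSection d) {a b c : ℝ} (h : (a, b) ∈ DfO d) (hac : a ≤ c) (hcb : c ≤ b) :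
    (c, b) ∈ DfO d := by
  obtain ⟨ha, hb, hlt⟩ := h
  have hc : c ∈ Icc (0:ℝ) 1 := ⟨le_trans ha.1 hac, le_trans hcb hb.2⟩
  refine ⟨hc, hb, ?_⟩
  have h1 := fdelta_lip hd ha hc hac b
  have h2 : min a b ≤ a := min_le_left _ _
  have h3 : min c b = c := min_eq_left hcb
  simp only at hlt h1 ⊢
  rw [h3]
  linarith

lemma DfO_shift_left (hd : IsDiagonalSection d) {a b c : ℝ} (h : (a, b) ∈ DfO d) (hbc : b ≤ c) (hca : c ≤ a) :
    (c, b) ∈ DfO d := by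
  obtain ⟨ha, hb, hlt⟩ := h
  have hc : c ∈ Icc (0:ℝ) 1 := ⟨le_trans hb.1 hbc, le_trans hca ha.2⟩
  refine ⟨hc, hb, ?_⟩
  have h1 := fdelta_mono hd hc ha hca b
  have h2 : min a b ≤ b := min_le_right _ _
  have h3 : min c b = b := min_eq_right hbc
  simp only at hlt h1 ⊢
  rw [h3]
  linarith

lemma closure_shift_right (hd : IsDiagonalSection d) {x y x' : ℝ} (h : (x, y) ∈ closure (DfO d)) (h1 : x ≤ x')
    (h2 : x' < y) : (x', y) ∈ closure (DfO d) := by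
  obtain ⟨p, hp, hplim⟩ := mem_closure_iff_seq_limit.1 h
  have ha : Tendsto (fun n => (p n).1) atTop (𝓝 x) := (continuous_fst.tendsto _).comp hplim
  have hb : Tendsto (fun n => (p n).2) atTop (𝓝 y) := (continuous_snd.tendsto _).comp hplim
  have hc : Tendsto (fun n => max (p n).1 (min x' (p n).2)) atTop (𝓝 x') := by
    have := ha.max ((tendsto_const_nhds (x := x')).min hb)
    rwa [min_eq_left h2.le, max_eq_right h1] at this
  have hq : Tendsto (fun n => (max (p n).1 (min x' (p n).2), (p n).2)) atTop (𝓝 (x', y)) :=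
    hc.prodMk_nhds hb
  refine mem_closure_of_tendsto hq ?_
  have hev : ∀ᶠ n in atTop, (p n).1 < (p n).2 := ha.eventually_lt hb (lt_of_le_of_lt h1 h2)
  filter_upwards [hev] with n hn
  exact DfO_shift_right hd (hp n) (le_max_left _ _) (max_le hn.le (min_le_right _ _))

lemma closure_shift_left (hd : IsDiagonalSection d) {x y x' : ℝ} (h : (x', y) ∈ closure (DfO d)) (h2 : y < x)
    (h1 : x ≤ x') : (x, y) ∈ closure (DfO d) := by
  obtain ⟨p, hp, hplim⟩ := mem_closure_iff_seq_limit.1 h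
  have ha : Tendsto (fun n => (p n).1) atTop (𝓝 x') := (continuous_fst.tendsto _).comp hplim
  have hb : Tendsto (fun n => (p n).2) atTop (𝓝 y) := (continuous_snd.tendsto _).comp hplim
  have hc : Tendsto (fun n => max (p n).2 (min (p n).1 x)) atTop (𝓝 x) := by
    have := hb.max (ha.min (tendsto_const_nhds (x := x)))
    rwa [min_eq_right h1, max_eq_right h2.le] at this
  have hq : Tendsto (fun n => (max (p n).2 (min (p n).1 x), (p n).2)) atTop (𝓝 (x, y)) :=
    hc.prodMk_nhds hb
  refine mem_closure_of_tendsto hq ?_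
  have hev : ∀ᶠ n in atTop, (p n).2 < (p n).1 := hb.eventually_lt ha (lt_of_lt_of_le h2 h1)
  filter_upwards [hev] with n hn
  exact DfO_shift_left hd (hp n) (le_max_left _ _) (max_le hn.le (min_le_left _ _))

lemma Df_isClosed (d : ℝ → ℝ) : IsClosed (Df d) := by
  apply IsClosed.union isClosed_closure
  have : {p : ℝ × ℝ | p.1 ∈ Icc (0:ℝ) 1 ∧ p.2 = p.1}
      = (Prod.fst ⁻¹' Icc (0:ℝ) 1) ∩ {p : ℝ × ℝ | p.2 = p.1} := rfl
  rw [this]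
  exact (isClosed_Icc.preimage continuous_fst).inter (isClosed_eq continuous_snd continuous_fst)

lemma Df_subset (d : ℝ → ℝ) : Df d ⊆ Icc (0:ℝ) 1 ×ˢ Icc (0:ℝ) 1 := by
  apply union_subset
  · apply closure_minimal _ (isClosed_Icc.prod isClosed_Icc)
    rintro p ⟨h1, h2, _⟩
    exact ⟨h1, h2⟩
  · rintro p ⟨h1, h2⟩
    exact ⟨h1, h2 ▸ h1⟩

lemma diag_mem_Df {x : ℝ} (hx : x ∈ Icc (0:ℝ) 1) : (x, x) ∈ Df d := Or.inr ⟨hx, rfl⟩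

lemma isGreatest_slice {x : ℝ} (hx : x ∈ Icc (0:ℝ) 1) :
    IsGreatest {y | (x, y) ∈ Df d} (gU d x) := by
  have hcl : IsClosed {y | (x, y) ∈ Df d} := (Df_isClosed d).preimage (Continuous.prodMk_right x)
  have hne : x ∈ {y | (x, y) ∈ Df d} := diag_mem_Df hx
  have hbdd : BddAbove {y | (x, y) ∈ Df d} := ⟨1, fun y hy => ((Df_subset d) hy).2.2⟩
  exact ⟨hcl.csSup_mem ⟨x, hne⟩ hbdd, fun y hy => le_csSup hbdd hy⟩

lemma isLeast_slice {x : ℝ} (hx : x ∈ Icc (0:ℝ) 1) :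
    IsLeast {y | (x, y) ∈ Df d} (gL d x) := by
  have hcl : IsClosed {y | (x, y) ∈ Df d} := (Df_isClosed d).preimage (Continuous.prodMk_right x)
  have hne : x ∈ {y | (x, y) ∈ Df d} := diag_mem_Df hx
  have hbdd : BddBelow {y | (x, y) ∈ Df d} := ⟨0, fun y hy => ((Df_subset d) hy).2.1⟩
  exact ⟨hcl.csInf_mem ⟨x, hne⟩ hbdd, fun y hy => csInf_le hbdd hy⟩

lemma gL_le_self {x : ℝ} (hx : x ∈ Icc (0:ℝ) 1) : gL d x ≤ x :=
  (isLeast_slice hx).2 (diag_mem_Df hx)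

lemma self_le_gU {x : ℝ} (hx : x ∈ Icc (0:ℝ) 1) : x ≤ gU d x :=
  (isGreatest_slice hx).2 (diag_mem_Df hx)

lemma gU_mono (hd : IsDiagonalSection d) : MonotoneOn (gU d) (Icc (0:ℝ) 1) := by
  intro a ha b hb hab
  set y := gU d a with hy_def
  have hy : (a, y) ∈ Df d := (isGreatest_slice (d := d) ha).1
  by_cases hyb : y ≤ b
  · exact le_trans hyb (self_le_gU hb)
  · push_neg at hyb
    rcases hy with hcl | ⟨_, heq⟩
    · have : (b, y) ∈ closure (DfO d) := closure_shift_right hd hcl hab hyb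
      exact (isGreatest_slice (d := d) hb).2 (Or.inl this)
    · exfalso; simp only at heq; exact absurd (heq ▸ hab) (not_le.2 (heq ▸ hyb))

lemma gL_mono (hd : IsDiagonalSection d) : MonotoneOn (gL d) (Icc (0:ℝ) 1) := by
  intro a ha b hb hab
  set y := gL d b with hy_def
  have hy : (b, y) ∈ Df d := (isLeast_slice (d := d) hb).1
  by_cases hya : a ≤ y
  · exact le_trans (gL_le_self ha) hya
  · push_neg at hya
    rcases hy with hcl | ⟨_, heq⟩
    · have : (a, y) ∈ closure (DfO d) := closure_shift_left hd hcl hya hab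
      exact (isLeast_slice (d := d) ha).2 (Or.inl this)
    · exfalso; simp only at heq; exact absurd (heq ▸ hab) (not_le.2 (heq ▸ hya))

lemma Df_compact (d : ℝ → ℝ) : IsCompact (Df d) :=
  (isCompact_Icc.prod isCompact_Icc).of_isClosed_subset (Df_isClosed d) (Df_subset d)

lemma exists_right (hd : IsDiagonalSection d) {x : ℝ} (hx : x ∈ Icc (0:ℝ) 1) (hx1 : x < 1) {ε : ℝ} (hε : 0 < ε) :
    ∃ x', x < x' ∧ x' ≤ 1 ∧ gU d x' < gU d x + ε := by
  by_contra hcon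
  push_neg at hcon
  set u : ℕ → ℝ := fun n => x + (1 - x) / (n + 1) with hu_def
  have hupos : ∀ n : ℕ, (0:ℝ) < (1 - x) / (n + 1) := fun n =>
    div_pos (by linarith) (by positivity)
  have humem : ∀ n : ℕ, x < u n ∧ u n ≤ 1 := by
    intro n
    constructor
    · simp only [hu_def]; linarith [hupos n]
    · have : (1 - x) / (n + 1 : ℝ) ≤ 1 - x :=
        div_le_self (by linarith) (by push_cast; linarith [Nat.cast_nonneg (α := ℝ) n])
      simp only [hu_def]; linarith
  have huIcc : ∀ n : ℕ, u n ∈ Icc (0:ℝ) 1 := fun n =>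
    ⟨le_trans hx.1 (humem n).1.le, (humem n).2⟩
  have hu_tendsto : Tendsto u atTop (𝓝 x) := by
    have h1 : Tendsto (fun n : ℕ => (1 - x) * (1 / (n + 1 : ℝ))) atTop (𝓝 ((1 - x) * 0)) :=
      tendsto_const_nhds.mul tendsto_one_div_add_atTop_nhds_zero_nat
    rw [mul_zero] at h1
    have h2 : Tendsto (fun n : ℕ => x + (1 - x) * (1 / (n + 1 : ℝ))) atTop (𝓝 (x + 0)) :=
      tendsto_const_nhds.add h1
    rw [add_zero] at h2
    convert h2 using 2 with n
    rw [mul_one_div]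
  set p : ℕ → ℝ × ℝ := fun n => (u n, gU d (u n)) with hp_def
  have hpDf : ∀ n, p n ∈ Df d := fun n => (isGreatest_slice (d := d) (huIcc n)).1
  obtain ⟨a, haDf, φ, hφ, hconv⟩ := (Df_compact d).tendsto_subseq hpDf
  have h1 : Tendsto (fun n => (p (φ n)).1) atTop (𝓝 a.1) := (continuous_fst.tendsto _).comp hconv
  have h1' : Tendsto (fun n => u (φ n)) atTop (𝓝 x) := hu_tendsto.comp hφ.tendsto_atTop
  have hx_eq : a.1 = x := tendsto_nhds_unique h1 h1'
  have h2 : Tendsto (fun n => (p (φ n)).2) atTop (𝓝 a.2) := (continuous_snd.tendsto _).comp hconv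
  have hge : gU d x + ε ≤ a.2 :=
    ge_of_tendsto' h2 (fun n => hcon (u (φ n)) (humem (φ n)).1 (humem (φ n)).2)
  have hmemDf : (x, a.2) ∈ Df d := by
    have : (a.1, a.2) ∈ Df d := by simpa using haDf
    rwa [hx_eq] at this
  have hle : a.2 ≤ gU d x := (isGreatest_slice (d := d) hx).2 hmemDf
  linarith

lemma exists_left (hd : IsDiagonalSection d) {x : ℝ} (hx : x ∈ Icc (0:ℝ) 1) (hx0 : 0 < x) {ε : ℝ} (hε : 0 < ε) :
    ∃ x', 0 ≤ x' ∧ x' < x ∧ gL d x - ε < gL d x' := by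
  by_contra hcon
  push_neg at hcon
  set u : ℕ → ℝ := fun n => x - x / (n + 1) with hu_def
  have hupos : ∀ n : ℕ, (0:ℝ) < x / (n + 1) := fun n => div_pos hx0 (by positivity)
  have humem : ∀ n : ℕ, 0 ≤ u n ∧ u n < x := by
    intro n
    constructor
    · have : x / (n + 1 : ℝ) ≤ x :=
        div_le_self hx0.le (by push_cast; linarith [Nat.cast_nonneg (α := ℝ) n])
      simp only [hu_def]; linarith
    · simp only [hu_def]; linarith [hupos n]
  have huIcc : ∀ n : ℕ, u n ∈ Icc (0:ℝ) 1 := fun n =>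
    ⟨(humem n).1, le_trans (humem n).2.le hx.2⟩
  have hu_tendsto : Tendsto u atTop (𝓝 x) := by
    have h1 : Tendsto (fun n : ℕ => x * (1 / (n + 1 : ℝ))) atTop (𝓝 (x * 0)) :=
      tendsto_const_nhds.mul tendsto_one_div_add_atTop_nhds_zero_nat
    rw [mul_zero] at h1
    have h2 : Tendsto (fun n : ℕ => x - x * (1 / (n + 1 : ℝ))) atTop (𝓝 (x - 0)) :=
      tendsto_const_nhds.sub h1
    rw [sub_zero] at h2
    convert h2 using 2 with n
    rw [mul_one_div]
  set p : ℕ → ℝ × ℝ := fun n => (u n, gL d (u n)) with hp_def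
  have hpDf : ∀ n, p n ∈ Df d := fun n => (isLeast_slice (d := d) (huIcc n)).1
  obtain ⟨a, haDf, φ, hφ, hconv⟩ := (Df_compact d).tendsto_subseq hpDf
  have h1 : Tendsto (fun n => (p (φ n)).1) atTop (𝓝 a.1) := (continuous_fst.tendsto _).comp hconv
  have h1' : Tendsto (fun n => u (φ n)) atTop (𝓝 x) := hu_tendsto.comp hφ.tendsto_atTop
  have hx_eq : a.1 = x := tendsto_nhds_unique h1 h1'
  have h2 : Tendsto (fun n => (p (φ n)).2) atTop (𝓝 a.2) := (continuous_snd.tendsto _).comp hconv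
  have hle' : a.2 ≤ gL d x - ε :=
    le_of_tendsto h2 (Eventually.of_forall fun n => hcon (u (φ n)) (humem (φ n)).1 (humem (φ n)).2)
  have hmemDf : (x, a.2) ∈ Df d := by
    have : (a.1, a.2) ∈ Df d := by simpa using haDf
    rwa [hx_eq] at this
  have hge : gL d x ≤ a.2 := (isLeast_slice (d := d) hx).2 hmemDf
  linarith

end Aux

theorem gU_gL_properties (d : ℝ → ℝ) (hd : IsDiagonalSection d) :
    (∀ x ∈ Icc (0:ℝ) 1, IsGreatest {y | (x, y) ∈ Df d} (gU d x)) ∧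
    (∀ x ∈ Icc (0:ℝ) 1, IsLeast {y | (x, y) ∈ Df d} (gL d x)) ∧
    (∀ x ∈ Icc (0:ℝ) 1, gL d x ≤ x ∧ x ≤ gU d x) ∧
    MonotoneOn (gU d) (Icc (0:ℝ) 1) ∧ MonotoneOn (gL d) (Icc (0:ℝ) 1) ∧
    (∀ x ∈ Icc (0:ℝ) 1, ContinuousWithinAt (gU d) (Icc x 1) x) ∧
    (∀ x ∈ Icc (0:ℝ) 1, ContinuousWithinAt (gL d) (Icc 0 x) x) := by
  refine ⟨fun x hx => isGreatest_slice hx, fun x hx => isLeast_slice hx,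
    fun x hx => ⟨gL_le_self hx, self_le_gU hx⟩, gU_mono hd, gL_mono hd, ?_, ?_⟩
  · -- right continuity of gU
    intro x hx
    by_cases hx1 : x = 1
    · subst hx1
      rw [Icc_self]
      exact continuousWithinAt_singleton
    · have hx1' : x < 1 := lt_of_le_of_ne hx.2 hx1
      rw [Metric.continuousWithinAt_iff]
      intro ε hε
      obtain ⟨x', hxx', hx'1, hlt⟩ := exists_right hd hx hx1' hε
      refine ⟨x' - x, by linarith, fun t ht hdist => ?_⟩
      have htIcc : t ∈ Icc (0:ℝ) 1 := ⟨le_trans hx.1 ht.1, ht.2⟩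
      have hx'Icc : x' ∈ Icc (0:ℝ) 1 := ⟨le_trans hx.1 hxx'.le, hx'1⟩
      rw [Real.dist_eq, abs_lt] at hdist
      have htx' : t ≤ x' := by linarith [hdist.2]
      have h1 : gU d x ≤ gU d t := gU_mono hd hx htIcc ht.1
      have h2 : gU d t ≤ gU d x' := gU_mono hd htIcc hx'Icc htx'
      rw [Real.dist_eq, abs_of_nonneg (by linarith)]
      linarith
  · -- left continuity of gL
    intro x hx
    by_cases hx0 : x = 0
    · subst hx0
      rw [Icc_self]
      exact continuousWithinAt_singleton
    · have hx0' : 0 < x := lt_of_le_of_ne hx.1 (Ne.symm hx0)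
      rw [Metric.continuousWithinAt_iff]
      intro ε hε
      obtain ⟨x', hx'0, hx'x, hlt⟩ := exists_left hd hx hx0' hε
      refine ⟨x - x', by linarith, fun t ht hdist => ?_⟩
      have htIcc : t ∈ Icc (0:ℝ) 1 := ⟨ht.1, le_trans ht.2 hx.2⟩
      have hx'Icc : x' ∈ Icc (0:ℝ) 1 := ⟨hx'0, le_trans hx'x.le hx.2⟩
      rw [Real.dist_eq, abs_lt] at hdist
      have hx't : x' ≤ t := by linarith [hdist.1]
      have h1 : gL d x' ≤ gL d t := gL_mono hd hx'Icc htIcc hx't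
      have h2 : gL d t ≤ gL d x := gL_mono hd htIcc hx ht.2
      rw [Real.dist_eq, abs_of_nonpos (by linarith)]
      linarith
end

section
/- Let δ be a diagonal section and Λ = {x ∈ [0,1] : δ(x) < x}. Then the exact upper bound C̄_δ of all copulas with diagonal section δ equals K_δ(x,y) = min{x, y, (δ(x)+δ(y))/2} if and only if δ'(x) ∈ {0,2} for almost every x ∈ Λ. -/
open Set MeasureTheory Filter
open Topology

noncomputable def Cbar (d : ℝ → ℝ) (x y : ℝ) : ℝ :=
  min x (min y (max x y - (1/2)*((x - d x) + (y - d y) + TVd d (min x y) (max x y))))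

lemma aux_mono_deriv_nonneg {φ : ℝ → ℝ} {m x : ℝ} (hφ : Monotone φ)
    (h : HasDerivAt φ m x) : 0 ≤ m := by
  have ht : Tendsto (slope φ x) (𝓝[≠] x) (𝓝 m) := hasDerivAt_iff_tendsto_slope.1 h
  refine ge_of_tendsto ht (Eventually.of_forall fun y => ?_)
  rcases lt_trichotomy x y with hxy | rfl | hxy
  · have := hφ hxy.le
    rw [slope_def_field]
    exact div_nonneg (by linarith) (by linarith)
  · simp [slope_def_field]
  · have := hφ hxy.le
    rw [slope_def_field]
    exact div_nonneg_of_nonpos (by linarith) (by linarith)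

lemma aux_abs_deriv_le {F G : ℝ → ℝ} {x e c : ℝ} (hF : HasDerivAt F e x) (hG : HasDerivAt G c x)
    (h : ∀ a b, a ≤ b → |F b - F a| ≤ G b - G a) : |e| ≤ c := by
  have h1 : Monotone (fun t => G t - F t) := by
    intro a b hab
    have := abs_le.1 (h a b hab)
    dsimp; linarith [this.2]
  have h2 : Monotone (fun t => G t + F t) := by
    intro a b hab
    have := abs_le.1 (h a b hab)
    dsimp; linarith [this.1]
  have d1 := aux_mono_deriv_nonneg h1 (hG.sub hF)
  have d2 := aux_mono_deriv_nonneg h2 (hG.add hF)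
  rw [abs_le]; constructor <;> linarith

lemma aux_ftc_mono (h : ℝ → ℝ) (hm : Monotone h) (hm' : Monotone (fun t => t - h t)) :
    ∃ g : ℝ → ℝ, Measurable g ∧ (∀ t, 0 ≤ g t) ∧ (∀ᵐ t ∂(volume : Measure ℝ), g t ≤ 1) ∧
      (∀ᵐ t ∂(volume : Measure ℝ), HasDerivAt h (g t) t) ∧
      (∀ a b : ℝ, a ≤ b → h b - h a = ∫ t in a..b, g t) := by
  -- h is continuous
  have hcont : Continuous h := by
    have hlip : LipschitzWith 1 h := by
      rw [lipschitzWith_iff_dist_le_mul]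
      intro a b
      rw [NNReal.coe_one, one_mul, Real.dist_eq, Real.dist_eq, abs_sub_le_iff]
      rcases le_total a b with hab | hab
      · have h1 := hm hab
        have h2 := hm' hab
        simp only at h2
        constructor <;>
          linarith [abs_nonneg (a - b), neg_le_abs (a - b), le_abs_self (a - b)]
      · have h1 := hm hab
        have h2 := hm' hab
        simp only at h2
        constructor <;>
          linarith [abs_nonneg (a - b), neg_le_abs (a - b), le_abs_self (a - b)]
    exact hlip.continuous
  have hcont' : Continuous (fun t => t - h t) := continuous_id.sub hcont
  have hsf : ∀ x, hm.stieltjesFunction x = h x := by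
    intro x
    rw [hm.stieltjesFunction_eq]
    exact rightLim_eq_of_tendsto
      ((hcont.tendsto x).mono_left nhdsWithin_le_nhds)
  have hsf' : ∀ x, hm'.stieltjesFunction x = x - h x := by
    intro x
    rw [hm'.stieltjesFunction_eq]
    exact rightLim_eq_of_tendsto
      ((hcont'.tendsto x).mono_left nhdsWithin_le_nhds)
  set μ := hm.stieltjesFunction.measure with hμdef
  set κ := hm'.stieltjesFunction.measure with hκdef
  have hsum : μ + κ = (volume : Measure ℝ) := by
    refine Measure.ext_of_Ioc' (μ + κ) volume (fun a b hab => ?_) (fun a b hab => ?_)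
    · rw [Measure.add_apply, StieltjesFunction.measure_Ioc, StieltjesFunction.measure_Ioc]
      exact ENNReal.add_ne_top.2 ⟨ENNReal.ofReal_ne_top, ENNReal.ofReal_ne_top⟩
    · rw [Measure.add_apply, StieltjesFunction.measure_Ioc, StieltjesFunction.measure_Ioc,
        Real.volume_Ioc, hsf, hsf, hsf', hsf',
        ← ENNReal.ofReal_add (by have := hm hab.le; linarith)
          (by have := hm' hab.le; simp only at this; linarith)]
      congr 1
      ring
  have hle : μ ≤ (volume : Measure ℝ) := hsum ▸ Measure.le_add_right le_rfl
  have hac : μ ≪ (volume : Measure ℝ) := hle.absolutelyContinuous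
  set g : ℝ → ℝ := fun t => (μ.rnDeriv volume t).toReal with hgdef
  have hgmeas : Measurable g := (Measure.measurable_rnDeriv μ volume).ennreal_toReal
  have hgderiv : ∀ᵐ t ∂(volume : Measure ℝ), HasDerivAt h (g t) t := hm.ae_hasDerivAt
  have hgderiv' : ∀ᵐ t ∂(volume : Measure ℝ), HasDerivAt (fun t => t - h t)
      ((κ.rnDeriv volume t).toReal) t := hm'.ae_hasDerivAt
  have hg1 : ∀ᵐ t ∂(volume : Measure ℝ), g t ≤ 1 := by
    filter_upwards [hgderiv, hgderiv'] with t h1 h2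
    have h3 : HasDerivAt (fun s : ℝ => s) (g t + (κ.rnDeriv volume t).toReal) t := by
      have := h1.add h2
      have e : (h + fun t => t - h t) = fun s : ℝ => s := by funext s; simp
      rw [e] at this
      exact this
    have h4 : g t + (κ.rnDeriv volume t).toReal = 1 := h3.unique (hasDerivAt_id t)
    have : 0 ≤ (κ.rnDeriv volume t).toReal := ENNReal.toReal_nonneg
    linarith
  refine ⟨g, hgmeas, fun t => ENNReal.toReal_nonneg, hg1, hgderiv, fun a b hab => ?_⟩
  have hwd : (volume : Measure ℝ).withDensity (μ.rnDeriv volume) = μ :=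
    Measure.withDensity_rnDeriv_eq μ volume hac
  have hIoc : μ (Ioc a b) = ∫⁻ t in Ioc a b, μ.rnDeriv volume t := by
    conv_lhs => rw [← hwd]
    rw [withDensity_apply _ measurableSet_Ioc]
  have hfin : ∀ᵐ t ∂(volume : Measure ℝ).restrict (Ioc a b), μ.rnDeriv volume t < ⊤ :=
    ae_restrict_of_ae (Measure.rnDeriv_lt_top μ volume)
  have hint : ∫ t in Ioc a b, g t ∂(volume : Measure ℝ) =
      (∫⁻ t in Ioc a b, μ.rnDeriv volume t).toReal :=
    integral_toReal (Measure.measurable_rnDeriv μ volume).aemeasurable hfin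
  rw [intervalIntegral.integral_of_le hab, hint, ← hIoc]
  rw [hμdef, StieltjesFunction.measure_Ioc, hsf, hsf]
  rw [ENNReal.toReal_ofReal (by have := hm hab; linarith)]

lemma aux_interval_integrable (g : ℝ → ℝ) (hgm : Measurable g)
    (hgb : ∀ᵐ t ∂(volume : Measure ℝ), |g t| ≤ 1) (a b : ℝ) :
    IntervalIntegrable g volume a b := by
  rw [intervalIntegrable_iff]
  refine Integrable.mono' (g := fun _ => (1:ℝ)) ?_ hgm.aestronglyMeasurable.restrict ?_
  · exact integrableOn_const measure_Ioc_lt_top.ne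
  · exact ae_restrict_of_ae (by simpa [Real.norm_eq_abs] using hgb)

theorem Cbar_eq_K_iff (d : ℝ → ℝ) (hd : IsDiagonalSection d) :
    (∀ x ∈ Icc (0:ℝ) 1, ∀ y ∈ Icc (0:ℝ) 1,
      Cbar d x y = min x (min y ((d x + d y)/2))) ↔
    (∀ᵐ x ∂(volume : Measure ℝ), (x ∈ Icc (0:ℝ) 1 ∧ d x < x) →
      (HasDerivAt d 0 x ∨ HasDerivAt d 2 x)) := by
  obtain ⟨hd1, hd2, hd3, hd4⟩ := hd
  set fd : ℝ → ℝ := fun t => t - d t with hfddef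
  have hfd : ∀ t, fd t = t - d t := fun t => rfl
  have hTVeq : ∀ a b, TVd d a b = variationOnFromTo fd (Icc 0 1) a b := fun a b => rfl
  have hd0 : d 0 = 0 := le_antisymm (hd2 0 (by norm_num)) ((hd1 0 (by norm_num)).1)
  -- Lipschitz property of fd on [0,1]
  have hfd_lip : ∀ x ∈ Icc (0:ℝ) 1, ∀ y ∈ Icc (0:ℝ) 1, x ≤ y → |fd y - fd x| ≤ y - x := by
    intro x hx y hy hxy
    obtain ⟨h1, h2⟩ := hd3 x hx y hy hxy
    rw [hfd, hfd, abs_le]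
    constructor <;> linarith
  have hfd_nonneg : ∀ x ∈ Icc (0:ℝ) 1, 0 ≤ fd x := by
    intro x hx; rw [hfd]; linarith [hd2 x hx]
  -- the projection onto [0,1]
  set prj : ℝ → ℝ := fun t => max 0 (min 1 t) with hprjdef
  have hprj_mem : ∀ t, prj t ∈ Icc (0:ℝ) 1 :=
    fun t => ⟨le_max_left _ _, max_le zero_le_one (min_le_left _ _)⟩
  have hprj_mono : Monotone prj :=
    fun a b hab => max_le_max le_rfl (min_le_min le_rfl hab)
  have hprj_id : ∀ t ∈ Icc (0:ℝ) 1, prj t = t := by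
    intro t ht
    simp only [hprjdef]
    rw [min_eq_right ht.2, max_eq_right ht.1]
  clear_value fd
  have hprj_lip : ∀ a b : ℝ, a ≤ b → prj b - prj a ≤ b - a := by
    intro a b hab
    have m1 : min 1 b ≤ min 1 a + (b - a) := by
      rcases le_total 1 a with h | h
      · rw [min_eq_left h]; have := min_le_left 1 b; linarith
      · rw [min_eq_right h]; have := min_le_right 1 b; linarith
    have m2 : max 0 (min 1 b) ≤ max 0 (min 1 a) + (b - a) := by
      refine max_le ?_ ?_
      · have := le_max_left 0 (min 1 a); linarith
      · have := le_max_right 0 (min 1 a); linarith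
    simp only [hprjdef]
    linarith
  clear_value prj
  -- F = fd ∘ prj and its decomposition
  set F : ℝ → ℝ := fun t => fd (prj t) with hFdef
  have hF_eq : ∀ t ∈ Icc (0:ℝ) 1, F t = fd t := by
    intro t ht; simp only [hFdef]; rw [hprj_id t ht]
  have hF_lip : ∀ a b : ℝ, a ≤ b → |F b - F a| ≤ b - a := by
    intro a b hab
    have h1 := hfd_lip (prj a) (hprj_mem a) (prj b) (hprj_mem b) (hprj_mono hab)
    have h2 := hprj_lip a b hab
    calc |F b - F a| ≤ prj b - prj a := h1
      _ ≤ b - a := h2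
  clear_value F
  set P : ℝ → ℝ := fun t => (t + F t)/2 with hPdef
  set N : ℝ → ℝ := fun t => (t - F t)/2 with hNdef
  clear_value P N
  have hP_mono : Monotone P := by
    intro a b hab
    have := abs_le.1 (hF_lip a b hab)
    simp only [hPdef]
    linarith [this.1]
  have hN_mono : Monotone N := by
    intro a b hab
    have := abs_le.1 (hF_lip a b hab)
    simp only [hNdef]
    linarith [this.2]
  obtain ⟨gP, hgPmeas, hgPnn, hgPle, hgPd, hgPi⟩ := aux_ftc_mono P hP_mono
    (by intro a b hab
        have := abs_le.1 (hF_lip a b hab)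
        simp only [hPdef]
        linarith [this.2])
  obtain ⟨gN, hgNmeas, hgNnn, hgNle, hgNd, hgNi⟩ := aux_ftc_mono N hN_mono
    (by intro a b hab
        have := abs_le.1 (hF_lip a b hab)
        simp only [hNdef]
        linarith [this.1])
  set FD : ℝ → ℝ := fun t => gP t - gN t with hFDdef
  clear_value FD
  have hFDabs_meas : Measurable (fun t => |FD t|) := by
    simp only [hFDdef]
    exact (hgPmeas.sub hgNmeas).abs
  have hFD_bd : ∀ᵐ t ∂(volume : Measure ℝ), |FD t| ≤ 1 := by
    filter_upwards [hgPle, hgNle] with t h1 h2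
    simp only [hFDdef]
    rw [abs_le]
    constructor <;> [linarith [hgPnn t]; linarith [hgNnn t]]
  have hFDabs_bd : ∀ᵐ t ∂(volume : Measure ℝ), |(fun t => |FD t|) t| ≤ 1 := by
    filter_upwards [hFD_bd] with t h1
    rwa [abs_abs]
  have hFd : ∀ᵐ t ∂(volume : Measure ℝ), HasDerivAt F (FD t) t := by
    filter_upwards [hgPd, hgNd] with t h1 h2
    have h3 := h1.sub h2
    have h4 : (fun t => P t - N t) = F := by
      funext s; simp only [hPdef, hNdef]; ring
    rw [show P - N = F from h4] at h3
    simp only [hFDdef]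
    exact h3
  have hF_ftc : ∀ a b : ℝ, a ≤ b → F b - F a = ∫ t in a..b, FD t := by
    intro a b hab
    have h1 := hgPi a b hab
    have h2 := hgNi a b hab
    have h3 : ∫ t in a..b, FD t = (∫ t in a..b, gP t) - ∫ t in a..b, gN t := by
      simp only [hFDdef]
      exact intervalIntegral.integral_sub
        (aux_interval_integrable gP hgPmeas (by
          filter_upwards [hgPle] with t h; rw [abs_of_nonneg (hgPnn t)]; exact h) a b)
        (aux_interval_integrable gN hgNmeas (by
          filter_upwards [hgNle] with t h; rw [abs_of_nonneg (hgNnn t)]; exact h) a b)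
    rw [h3, ← h1, ← h2]
    simp only [hPdef, hNdef]
    ring
  have hFD_ii : ∀ a b : ℝ, IntervalIntegrable (fun t => |FD t|) volume a b :=
    fun a b => aux_interval_integrable _ hFDabs_meas hFDabs_bd a b
  -- the variation function G
  have hLip : LipschitzOnWith 1 fd (Icc 0 1) := by
    apply LipschitzOnWith.of_dist_le_mul
    intro x hx y hy
    rw [NNReal.coe_one, one_mul, Real.dist_eq, Real.dist_eq]
    rcases le_total x y with hxy | hxy
    · rw [abs_sub_comm]
      calc |fd y - fd x| ≤ y - x := hfd_lip x hx y hy hxy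
        _ ≤ |x - y| := by rw [abs_sub_comm]; exact le_abs_self _
    · calc |fd x - fd y| ≤ x - y := hfd_lip y hy x hx hxy
        _ ≤ |x - y| := le_abs_self _
  have hBV : LocallyBoundedVariationOn fd (Icc 0 1) := hLip.locallyBoundedVariationOn
  have hVle : ∀ a b : ℝ, a ∈ Icc (0:ℝ) 1 → b ∈ Icc (0:ℝ) 1 → a ≤ b →
      eVariationOn fd (Icc a b) ≤ ENNReal.ofReal (b - a) := by
    intro a b ha hb hab
    have h1 : eVariationOn (fd ∘ id) (Icc a b) ≤ 1 * eVariationOn id (Icc a b) :=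
      hLip.comp_eVariationOn_le (fun x hx => Icc_subset_Icc ha.1 hb.2 hx)
    have h2 : eVariationOn (id : ℝ → ℝ) (Icc a b) ≤ ENNReal.ofReal (b - a) := by
      have h3 : eVariationOn (id : ℝ → ℝ) (Icc a b ∩ Icc a b) ≤ ENNReal.ofReal (id b - id a) :=
        MonotoneOn.eVariationOn_le (fun x _ y _ hxy => hxy)
          (left_mem_Icc.2 hab) (right_mem_Icc.2 hab)
      rwa [inter_self] at h3
    calc eVariationOn fd (Icc a b) = eVariationOn (fd ∘ id) (Icc a b) := rfl
      _ ≤ 1 * eVariationOn id (Icc a b) := h1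
      _ = eVariationOn id (Icc a b) := one_mul _
      _ ≤ ENNReal.ofReal (b - a) := h2
  have hVle' : ∀ a b : ℝ, a ∈ Icc (0:ℝ) 1 → b ∈ Icc (0:ℝ) 1 → a ≤ b →
      eVariationOn fd (Icc (0:ℝ) 1 ∩ Icc a b) ≤ ENNReal.ofReal (b - a) := by
    intro a b ha hb hab
    rw [inter_eq_self_of_subset_right (Icc_subset_Icc ha.1 hb.2)]
    exact hVle a b ha hb hab
  have hVFT_le : ∀ a b : ℝ, a ∈ Icc (0:ℝ) 1 → b ∈ Icc (0:ℝ) 1 → a ≤ b →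
      variationOnFromTo fd (Icc 0 1) a b ≤ b - a := by
    intro a b ha hb hab
    rw [variationOnFromTo.eq_of_le _ _ hab]
    exact ENNReal.toReal_le_of_le_ofReal (by linarith) (hVle' a b ha hb hab)
  have hVFT_lb : ∀ a b : ℝ, a ∈ Icc (0:ℝ) 1 → b ∈ Icc (0:ℝ) 1 → a ≤ b →
      |fd b - fd a| ≤ variationOnFromTo fd (Icc 0 1) a b := by
    intro a b ha hb hab
    rw [variationOnFromTo.eq_of_le _ _ hab,
      inter_eq_self_of_subset_right (Icc_subset_Icc ha.1 hb.2)]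
    have h1 : edist (fd a) (fd b) ≤ eVariationOn fd (Icc a b) :=
      eVariationOn.edist_le fd (left_mem_Icc.2 hab) (right_mem_Icc.2 hab)
    have h2 : eVariationOn fd (Icc a b) ≠ ⊤ :=
      ((hVle a b ha hb hab).trans_lt ENNReal.ofReal_lt_top).ne
    calc |fd b - fd a| = (edist (fd a) (fd b)).toReal := by
          rw [edist_dist, Real.dist_eq, ENNReal.toReal_ofReal (abs_nonneg _), abs_sub_comm]
      _ ≤ (eVariationOn fd (Icc a b)).toReal := ENNReal.toReal_mono h2 h1
  set G : ℝ → ℝ := fun t => variationOnFromTo fd (Icc 0 1) 0 (prj t) with hGdef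
  clear_value G
  have h0mem : (0:ℝ) ∈ Icc (0:ℝ) 1 := by norm_num
  have hG_diff : ∀ u v : ℝ, u ∈ Icc (0:ℝ) 1 → v ∈ Icc (0:ℝ) 1 →
      G v - G u = variationOnFromTo fd (Icc 0 1) u v := by
    intro u v hu hv
    have := variationOnFromTo.add hBV h0mem hu hv
    simp only [hGdef]
    rw [hprj_id u hu, hprj_id v hv]
    linarith
  have hG_mono : Monotone G := by
    intro a b hab
    simp only [hGdef]
    exact variationOnFromTo.monotoneOn hBV h0mem (hprj_mem a) (hprj_mem b) (hprj_mono hab)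
  have hG_lip : ∀ a b : ℝ, a ≤ b → G b - G a ≤ b - a := by
    intro a b hab
    have h1 : G b - G a = variationOnFromTo fd (Icc 0 1) (prj a) (prj b) := by
      have := variationOnFromTo.add hBV h0mem (hprj_mem a) (hprj_mem b)
      simp only [hGdef]; linarith
    rw [h1]
    calc variationOnFromTo fd (Icc 0 1) (prj a) (prj b) ≤ prj b - prj a :=
          hVFT_le _ _ (hprj_mem a) (hprj_mem b) (hprj_mono hab)
      _ ≤ b - a := hprj_lip a b hab
  obtain ⟨gG, hgGmeas, hgGnn, hgGle, hgGd, hgGi⟩ := aux_ftc_mono G hG_mono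
    (by intro a b hab
        have := hG_lip a b hab
        simp only
        linarith)
  -- |F b - F a| ≤ G b - G a globally
  have hFG : ∀ a b : ℝ, a ≤ b → |F b - F a| ≤ G b - G a := by
    intro a b hab
    have h1 : G b - G a = variationOnFromTo fd (Icc 0 1) (prj a) (prj b) := by
      have := variationOnFromTo.add hBV h0mem (hprj_mem a) (hprj_mem b)
      simp only [hGdef]; linarith
    rw [h1]
    simp only [hFdef]
    exact hVFT_lb (prj a) (prj b) (hprj_mem a) (hprj_mem b) (hprj_mono hab)
  have hcomp : ∀ᵐ t ∂(volume : Measure ℝ), |FD t| ≤ gG t := by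
    filter_upwards [hFd, hgGd] with t h1 h2
    exact aux_abs_deriv_le h1 h2 hFG
  -- The key identity: variation equals the integral of |FD|
  have hE : ∀ u v : ℝ, u ∈ Icc (0:ℝ) 1 → v ∈ Icc (0:ℝ) 1 → u ≤ v →
      variationOnFromTo fd (Icc 0 1) u v = ∫ t in u..v, |FD t| := by
    intro u v hu hv huv
    refine le_antisymm ?_ ?_
    · -- variation ≤ integral
      rw [variationOnFromTo.eq_of_le _ _ huv,
        inter_eq_self_of_subset_right (Icc_subset_Icc hu.1 hv.2)]
      refine ENNReal.toReal_le_of_le_ofReal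
        (intervalIntegral.integral_nonneg huv fun t _ => abs_nonneg _) ?_
      refine iSup_le ?_
      rintro ⟨n, ⟨p, hpmono, hpmem⟩⟩
      have hreal : ∑ i ∈ Finset.range n, |F (p (i+1)) - F (p i)| ≤ ∫ t in u..v, |FD t| := by
        have c1 : ∀ i : ℕ, |F (p (i+1)) - F (p i)| ≤ ∫ t in (p i)..(p (i+1)), |FD t| := by
          intro i
          rw [hF_ftc _ _ (hpmono (Nat.le_succ i))]
          exact intervalIntegral.abs_integral_le_integral_abs (hpmono (Nat.le_succ i))
        calc ∑ i ∈ Finset.range n, |F (p (i+1)) - F (p i)|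
            ≤ ∑ i ∈ Finset.range n, ∫ t in (p i)..(p (i+1)), |FD t| :=
              Finset.sum_le_sum fun i _ => c1 i
          _ = ∫ t in (p 0)..(p n), |FD t| :=
              intervalIntegral.sum_integral_adjacent_intervals fun k _ => hFD_ii _ _
          _ ≤ ∫ t in u..v, |FD t| := by
              refine intervalIntegral.integral_mono_interval (hpmem 0).1
                (hpmono (Nat.zero_le n)) (hpmem n).2
                (ae_of_all _ fun t => abs_nonneg (FD t)) (hFD_ii u v)
      calc ∑ i ∈ Finset.range n, edist (fd (p (i+1))) (fd (p i))
          = ENNReal.ofReal (∑ i ∈ Finset.range n, |F (p (i+1)) - F (p i)|) := by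
            rw [ENNReal.ofReal_sum_of_nonneg (fun i _ => abs_nonneg _)]
            refine Finset.sum_congr rfl fun i _ => ?_
            rw [edist_dist, Real.dist_eq,
              ← hF_eq _ (Icc_subset_Icc hu.1 hv.2 (hpmem (i+1))),
              ← hF_eq _ (Icc_subset_Icc hu.1 hv.2 (hpmem i))]
        _ ≤ ENNReal.ofReal (∫ t in u..v, |FD t|) := ENNReal.ofReal_le_ofReal hreal
    · -- integral ≤ variation
      have h1 : ∫ t in u..v, |FD t| ≤ ∫ t in u..v, gG t := by
        refine intervalIntegral.integral_mono_ae huv (hFD_ii u v)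
          (aux_interval_integrable gG hgGmeas (by
            filter_upwards [hgGle] with t h; rw [abs_of_nonneg (hgGnn t)]; exact h) u v) hcomp
      have h2 : G v - G u = ∫ t in u..v, gG t := hgGi u v huv
      have h3 := hG_diff u v hu hv
      linarith
  -- nonnegativity of TV
  have hVFT_nn : ∀ u v : ℝ, u ≤ v → 0 ≤ variationOnFromTo fd (Icc 0 1) u v :=
    fun u v huv => variationOnFromTo.nonneg_of_le fd _ huv
  -- the reduction: LHS ↔ Star
  have key_iff : (∀ x ∈ Icc (0:ℝ) 1, ∀ y ∈ Icc (0:ℝ) 1,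
      Cbar d x y = min x (min y ((d x + d y)/2))) ↔
      (∀ x y : ℝ, x ∈ Icc (0:ℝ) 1 → y ∈ Icc (0:ℝ) 1 → x ≤ y → y - x < fd x + fd y →
        variationOnFromTo fd (Icc 0 1) x y = y - x) := by
    constructor
    · intro H x y hx hy hxy hlt
      have h := H x hx y hy
      simp only [Cbar] at h
      rw [min_eq_left hxy, max_eq_right hxy, hTVeq] at h
      set V := variationOnFromTo fd (Icc 0 1) x y with hVdef
      have hV1 : 0 ≤ V := hVFT_nn x y hxy
      have hV2 : V ≤ y - x := hVFT_le x y hx hy hxy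
      rw [hfd, hfd] at hlt
      have hKx : (d x + d y)/2 < x := by linarith
      have hKy : (d x + d y)/2 ≤ y := by linarith [hd2 x hx, hd2 y hy]
      have e1 : min x (min y ((d x + d y)/2)) = (d x + d y)/2 := by
        rw [min_eq_right hKy, min_eq_right hKx.le]
      rw [e1] at h
      by_contra hne
      have hVlt : V < y - x := lt_of_le_of_ne hV2 hne
      have hlt2 : (d x + d y)/2 <
          min x (min y (y - 1/2*((x - d x) + (y - d y) + V))) :=
        lt_min hKx (lt_min (by linarith) (by linarith))
      rw [h] at hlt2
      exact lt_irrefl _ hlt2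
    · intro H
      have hsymm : ∀ x y : ℝ, Cbar d x y = Cbar d y x := by
        intro x y
        simp only [Cbar]
        rw [min_comm y x, max_comm y x]
        conv_rhs => rw [min_left_comm]
        have e2 : max x y - 1/2*((y - d y) + (x - d x) + TVd d (min x y) (max x y))
            = max x y - 1/2*((x - d x) + (y - d y) + TVd d (min x y) (max x y)) := by ring
        rw [e2]
      have key : ∀ x y : ℝ, x ∈ Icc (0:ℝ) 1 → y ∈ Icc (0:ℝ) 1 → x ≤ y →
          Cbar d x y = min x (min y ((d x + d y)/2)) := by
        intro x y hx hy hxy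
        simp only [Cbar]
        rw [min_eq_left hxy, max_eq_right hxy, hTVeq]
        rcases lt_or_ge (y - x) (fd x + fd y) with hc | hc
        · rw [H x y hx hy hxy hc]
          have e3 : y - 1/2*((x - d x) + (y - d y) + (y - x)) = (d x + d y)/2 := by ring
          rw [e3]
        · have hV1 := hVFT_nn x y hxy
          have hV2 := hVFT_le x y hx hy hxy
          rw [hfd, hfd] at hc
          have h1 : x ≤ min y ((d x + d y)/2) := le_min hxy (by linarith)
          have h2 : x ≤ min y
              (y - 1/2*((x - d x) + (y - d y) + variationOnFromTo fd (Icc 0 1) x y)) :=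
            le_min hxy (by linarith)
          rw [min_eq_left h1, min_eq_left h2]
      intro x hx y hy
      rcases le_total x y with h | h
      · exact key x y hx hy h
      · rw [hsymm x y, key y x hy hx h, min_left_comm, add_comm (d y) (d x)]
  rw [key_iff]
  constructor
  · -- Star → a.e. derivative condition
    intro H
    set A : Set ℝ := {x | HasDerivAt d 0 x ∨ HasDerivAt d 2 x} with hAdef
    have perq : ∀ u v : ℝ, u ∈ Icc (0:ℝ) 1 → v ∈ Icc (0:ℝ) 1 → u ≤ v →
        v - u < fd u + fd v → volume (Ioo u v \ A) = 0 := by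
      intro u v hu hv huv hlt
      have hVar := H u v hu hv huv hlt
      have hInt : ∫ t in u..v, |FD t| = v - u := by rw [← hE u v hu hv huv, hVar]
      have hzero : ∫ t in u..v, (1 - |FD t|) = 0 := by
        rw [intervalIntegral.integral_sub intervalIntegrable_const (hFD_ii u v), hInt,
          intervalIntegral.integral_const]
        simp
      have hii : IntervalIntegrable (fun t => 1 - |FD t|) volume u v :=
        intervalIntegrable_const.sub (hFD_ii u v)
      have hnn : 0 ≤ᵐ[(volume : Measure ℝ).restrict (Ioc u v ∪ Ioc v u)]
          (fun t => 1 - |FD t|) :=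
        ae_restrict_of_ae (by filter_upwards [hFD_bd] with t h; dsimp; linarith)
      have heq0 := (intervalIntegral.integral_eq_zero_iff_of_nonneg_ae hnn hii).1 hzero
      have h1 : ∀ᵐ t ∂(volume : Measure ℝ), t ∈ Ioc u v ∪ Ioc v u → 1 - |FD t| = 0 :=
        ae_imp_of_ae_restrict heq0
      have h2 : ∀ᵐ t ∂(volume : Measure ℝ), t ∈ Ioo u v → t ∈ A := by
        filter_upwards [h1, hFd] with t habs hFt ht
        have ht01 : t ∈ Ioo (0:ℝ) 1 := ⟨lt_of_le_of_lt hu.1 ht.1, lt_of_lt_of_le ht.2 hv.2⟩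
        have habs' : |FD t| = 1 := by
          have := habs (Or.inl ⟨ht.1, ht.2.le⟩)
          linarith
        have hloc : (fun s => s - d s) =ᶠ[𝓝 t] F := by
          filter_upwards [isOpen_Ioo.mem_nhds ht01] with s hs
          rw [hF_eq s ⟨hs.1.le, hs.2.le⟩, hfd]
        have hF' : HasDerivAt (fun s => s - d s) (FD t) t := hFt.congr_of_eventuallyEq hloc
        have hD : HasDerivAt d (1 - FD t) t := by
          have h5 := (hasDerivAt_id t).sub hF'
          have h6 : (fun s : ℝ => id s - (s - d s)) = d := by funext s; simp
          rwa [show (id - fun s : ℝ => s - d s : ℝ → ℝ) = d from h6] at h5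
        rcases (abs_eq (by norm_num : (0:ℝ) ≤ 1)).1 habs' with h7 | h7
        · left
          rw [h7] at hD
          simpa using hD
        · right
          rw [h7] at hD
          norm_num at hD
          exact hD
      have h3 : Ioo u v \ A = {t | ¬ (t ∈ Ioo u v → t ∈ A)} := by
        ext t
        simp only [mem_diff, mem_setOf_eq, Classical.not_imp, mem_Ioo]
      rw [h3]
      exact ae_iff.1 h2
    rw [ae_iff]
    have hsub : {x | ¬((x ∈ Icc (0:ℝ) 1 ∧ d x < x) →
        (HasDerivAt d 0 x ∨ HasDerivAt d 2 x))} ⊆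
        ({0, 1} : Set ℝ) ∪ ⋃ (q : ℚ × ℚ) (_ : (q.1:ℝ) ∈ Icc (0:ℝ) 1 ∧ (q.2:ℝ) ∈ Icc (0:ℝ) 1 ∧
          (q.1:ℝ) ≤ (q.2:ℝ) ∧ (q.2:ℝ) - (q.1:ℝ) < fd q.1 + fd q.2),
          (Ioo (q.1:ℝ) (q.2:ℝ) \ A) := by
      intro x hx
      simp only [mem_setOf_eq] at hx
      obtain ⟨⟨hxmem, hxlt⟩, hxA⟩ := Classical.not_imp.1 hx
      by_cases hx0 : x = 0 ∨ x = 1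
      · left
        rcases hx0 with h | h <;> simp [h]
      · push_neg at hx0
        have hx01 : x ∈ Ioo (0:ℝ) 1 :=
          ⟨lt_of_le_of_ne hxmem.1 (Ne.symm hx0.1), lt_of_le_of_ne hxmem.2 hx0.2⟩
        have hc : 0 < x - d x := by linarith
        have hcx : x - d x ≤ x := by linarith [(hd1 x hxmem).1]
        have hcx2 : x - d x ≤ 1 - x := by
          have h9 := (hd3 x hxmem 1 (by norm_num) hxmem.2).2
          rw [hd4] at h9
          linarith
        obtain ⟨u, hu1, hu2⟩ := exists_rat_btwn (show x - (x - d x)/4 < x by linarith)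
        obtain ⟨v, hv1, hv2⟩ := exists_rat_btwn (show x < x + (x - d x)/4 by linarith)
        right
        have huI : (u:ℝ) ∈ Icc (0:ℝ) 1 := ⟨by linarith, by linarith [hxmem.2]⟩
        have hvI : (v:ℝ) ∈ Icc (0:ℝ) 1 := ⟨by linarith [hxmem.1], by linarith⟩
        have hfdx : fd x = x - d x := hfd x
        have hfdu : 3*(x - d x)/4 ≤ fd u := by
          have h10 := (abs_le.1 (hfd_lip u huI x hxmem (by linarith))).2
          linarith
        have hfdv : 3*(x - d x)/4 ≤ fd v := by
          have h10 := (abs_le.1 (hfd_lip x hxmem v hvI (by linarith))).1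
          linarith
        refine mem_iUnion.2 ⟨(u, v), mem_iUnion.2
          ⟨⟨huI, hvI, by linarith, by linarith⟩, ⟨⟨hu2, hv1⟩, hxA⟩⟩⟩
    refine measure_mono_null hsub (measure_union_null ?_ ?_)
    · exact ((Set.finite_singleton (1:ℝ)).insert 0).measure_zero volume
    · exact measure_iUnion_null fun q => measure_iUnion_null fun hq =>
        perq q.1 q.2 hq.1 hq.2.1 hq.2.2.1 hq.2.2.2
  · -- a.e. derivative condition → Star
    intro H x y hx hy hxy hlt
    have hpos : ∀ t ∈ Icc x y, 0 < fd t := by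
      intro t ht
      have h1 : t ∈ Icc (0:ℝ) 1 := ⟨le_trans hx.1 ht.1, le_trans ht.2 hy.2⟩
      have l1 := (abs_le.1 (hfd_lip x hx t h1 ht.1)).1
      have l2 := (abs_le.1 (hfd_lip t h1 y hy ht.2)).2
      linarith
    have h1 : ∀ᵐ t ∂(volume : Measure ℝ), t ∈ Ioo x y → |FD t| = 1 := by
      filter_upwards [H, hFd] with t hH hFt ht
      have ht01 : t ∈ Ioo (0:ℝ) 1 := ⟨lt_of_le_of_lt hx.1 ht.1, lt_of_lt_of_le ht.2 hy.2⟩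
      have htI : t ∈ Icc (0:ℝ) 1 := ⟨ht01.1.le, ht01.2.le⟩
      have hdt : d t < t := by
        have h5 := hpos t ⟨ht.1.le, ht.2.le⟩
        rw [hfd] at h5
        linarith
      have hloc : F =ᶠ[𝓝 t] (fun s => s - d s) := by
        filter_upwards [isOpen_Ioo.mem_nhds ht01] with s hs
        rw [hF_eq s ⟨hs.1.le, hs.2.le⟩, hfd]
      rcases hH ⟨htI, hdt⟩ with h0 | h2
      · have h5 : HasDerivAt (fun s => s - d s) 1 t := by
          have h6 := (hasDerivAt_id t).sub h0
          exact (by simpa using h6 : HasDerivAt (id - d) 1 t)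
        have h6 : HasDerivAt F 1 t := h5.congr_of_eventuallyEq hloc
        rw [hFt.unique h6]
        norm_num
      · have h5 : HasDerivAt (fun s => s - d s) (-1) t := by
          have h6 := (hasDerivAt_id t).sub h2
          norm_num at h6
          exact h6
        have h6 : HasDerivAt F (-1) t := h5.congr_of_eventuallyEq hloc
        rw [hFt.unique h6]
        norm_num
    have hInt : ∫ t in x..y, |FD t| = y - x := by
      have hny : ∀ᵐ t ∂(volume : Measure ℝ), t ∉ ({y} : Set ℝ) :=
        measure_eq_zero_iff_ae_notMem.1 (measure_singleton y)
      have hcongr : ∀ᵐ t ∂(volume : Measure ℝ), t ∈ Set.uIoc x y → |FD t| = (fun _ => (1:ℝ)) t := by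
        filter_upwards [h1, hny] with t h1t hty ht
        rw [uIoc_of_le hxy] at ht
        have hty' : t ≠ y := fun h => hty (by simp [h])
        exact h1t ⟨ht.1, lt_of_le_of_ne ht.2 hty'⟩
      rw [intervalIntegral.integral_congr_ae hcongr]
      simp
    rw [hE x y hx hy hxy, hInt]
end

section
/- Let δ be a diagonal section. Then C̄_δ = A_δ, where A_δ(x,y) = min{x, y, max{x,y} − max_{t ∈ [x∧y, x∨y]} δ̂(t)}, if and only if for all x < y in [0,1] at which δ̂ is differentiable with δ̂'(x) < 0 < δ̂'(y), one has y − x ≥ max{δ̂(x), δ̂(y)}. -/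
open Set MeasureTheory Filter Topology
open scoped ENNReal NNReal

namespace CbarAux

lemma min_arith {x y A B : ℝ} (hxy : x ≤ y) (hB0 : 0 ≤ B) (hAB : B ≤ A) :
    (min x (min y (y - A)) = min x (min y (y - B))) ↔ (x ≤ y - A ∨ A = B) := by
  have h1 : min y (y - A) = y - A := min_eq_right (by linarith)
  have h2 : min y (y - B) = y - B := min_eq_right (by linarith)
  rw [h1, h2]
  rcases le_total x (y - A) with h | h
  · rw [min_eq_left h, min_eq_left (by linarith)]
    exact ⟨fun _ => Or.inl h, fun _ => rfl⟩
  · rcases le_total x (y - B) with h' | h'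
    · rw [min_eq_right h, min_eq_left h']
      constructor
      · intro he; left; linarith
      · rintro (h'' | h'') <;> linarith
    · rw [min_eq_right h, min_eq_right h']
      constructor
      · intro he; right; linarith
      · rintro (h'' | h'') <;> linarith

section Basic

variable {d : ℝ → ℝ}

lemma d_mono (hd : IsDiagonalSection d) {a b : ℝ} (ha : a ∈ Icc (0:ℝ) 1)
    (hb : b ∈ Icc (0:ℝ) 1) (hab : a ≤ b) : d a ≤ d b := by
  have := (hd.2.2.1 a ha b hb hab).1; linarith

lemma d_growth (hd : IsDiagonalSection d) {a b : ℝ} (ha : a ∈ Icc (0:ℝ) 1)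
    (hb : b ∈ Icc (0:ℝ) 1) (hab : a ≤ b) : d b - d a ≤ 2*(b-a) :=
  (hd.2.2.1 a ha b hb hab).2

lemma f_nonneg (hd : IsDiagonalSection d) {t : ℝ} (ht : t ∈ Icc (0:ℝ) 1) :
    0 ≤ t - d t := sub_nonneg.2 (hd.2.1 t ht)

lemma f_lip (hd : IsDiagonalSection d) :
    LipschitzOnWith 1 (fun t => t - d t) (Icc (0:ℝ) 1) := by
  rw [lipschitzOnWith_iff_dist_le_mul]
  intro a ha b hb
  simp only [NNReal.coe_one, one_mul, Real.dist_eq]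
  rcases le_total b a with h | h
  · have h1 := (hd.2.2.1 b hb a ha h).1
    have h2 := (hd.2.2.1 b hb a ha h).2
    rw [abs_le, abs_of_nonneg (by linarith : (0:ℝ) ≤ a - b)]
    constructor <;> linarith
  · have h1 := (hd.2.2.1 a ha b hb h).1
    have h2 := (hd.2.2.1 a ha b hb h).2
    rw [abs_le, abs_of_nonpos (by linarith : a - b ≤ 0)]
    constructor <;> linarith

lemma f_cont (hd : IsDiagonalSection d) :
    ContinuousOn (fun t => t - d t) (Icc (0:ℝ) 1) := (f_lip hd).continuousOn

lemma f_lbv (hd : IsDiagonalSection d) :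
    LocallyBoundedVariationOn (fun t => t - d t) (Icc (0:ℝ) 1) :=
  (f_lip hd).locallyBoundedVariationOn

lemma TVd_eq_of_le {a b : ℝ} (hab : a ≤ b) :
    TVd d a b = (eVariationOn (fun t => t - d t) (Icc (0:ℝ) 1 ∩ Icc a b)).toReal := by
  rw [TVd, variationOnFromTo.eq_of_le _ _ hab]

lemma abs_sub_le_TVd (hd : IsDiagonalSection d) {a b : ℝ} (ha : a ∈ Icc (0:ℝ) 1)
    (hb : b ∈ Icc (0:ℝ) 1) (hab : a ≤ b) :
    |(b - d b) - (a - d a)| ≤ TVd d a b := by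
  rw [TVd_eq_of_le hab]
  have h1 : edist ((fun t => t - d t) b) ((fun t => t - d t) a)
      ≤ eVariationOn (fun t => t - d t) (Icc (0:ℝ) 1 ∩ Icc a b) :=
    eVariationOn.edist_le _ ⟨hb, hab, le_refl b⟩ ⟨ha, le_refl a, hab⟩
  rw [edist_dist] at h1
  have h2 := ENNReal.toReal_mono (f_lbv hd a b ha hb) h1
  rw [ENNReal.toReal_ofReal dist_nonneg] at h2
  rw [Real.dist_eq] at h2
  have he : b - d b - (a - d a) = b - d b + d a - a := by ring
  rw [he]
  simp only [] at h2
  convert h2 using 1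
  ring

lemma TVd_add (hd : IsDiagonalSection d) {a b c : ℝ} (ha : a ∈ Icc (0:ℝ) 1)
    (hb : b ∈ Icc (0:ℝ) 1) (hc : c ∈ Icc (0:ℝ) 1) :
    TVd d a c = TVd d a b + TVd d b c :=
  (variationOnFromTo.add (f_lbv hd) ha hb hc).symm

lemma TVd_nonneg {a b : ℝ} (hab : a ≤ b) : 0 ≤ TVd d a b :=
  variationOnFromTo.nonneg_of_le _ _ hab

lemma exists_sSup_eq (hd : IsDiagonalSection d) {x y : ℝ} (hx : x ∈ Icc (0:ℝ) 1)
    (hy : y ∈ Icc (0:ℝ) 1) (hxy : x ≤ y) :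
    ∃ tM ∈ Icc x y, (∀ t ∈ Icc x y, t - d t ≤ tM - d tM) ∧
      sSup ((fun t => t - d t) '' Icc x y) = tM - d tM := by
  obtain ⟨tM, htM, hmax⟩ := isCompact_Icc.exists_isMaxOn (nonempty_Icc.2 hxy)
    ((f_cont hd).mono (Icc_subset_Icc hx.1 hy.2))
  have hmax' : ∀ t ∈ Icc x y, t - d t ≤ tM - d tM := fun t ht => hmax ht
  refine ⟨tM, htM, hmax', ?_⟩
  apply IsGreatest.csSup_eq
  refine ⟨mem_image_of_mem _ htM, ?_⟩
  rintro _ ⟨t, ht, rfl⟩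
  exact hmax' t ht

lemma TVd_ge_two (hd : IsDiagonalSection d) {a c b : ℝ} (ha : a ∈ Icc (0:ℝ) 1)
    (hc : c ∈ Icc (0:ℝ) 1) (hb : b ∈ Icc (0:ℝ) 1) (hac : a ≤ c) (hcb : c ≤ b) :
    ((c - d c) - (a - d a)) + ((c - d c) - (b - d b)) ≤ TVd d a b := by
  have h1 := abs_sub_le_TVd hd ha hc hac
  have h2 := abs_sub_le_TVd hd hc hb hcb
  have h3 := TVd_add hd ha hc hb
  have h4 : (c - d c) - (a - d a) ≤ |(c - d c) - (a - d a)| := le_abs_self _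
  have h5 : (c - d c) - (b - d b) ≤ |(b - d b) - (c - d c)| := by
    rw [abs_sub_comm]; exact le_abs_self _
  linarith

lemma two_sSup_le (hd : IsDiagonalSection d) {x y : ℝ} (hx : x ∈ Icc (0:ℝ) 1)
    (hy : y ∈ Icc (0:ℝ) 1) (hxy : x ≤ y) :
    2 * sSup ((fun t => t - d t) '' Icc x y) ≤ (x - d x) + (y - d y) + TVd d x y := by
  obtain ⟨tM, htM, hmax, hsup⟩ := exists_sSup_eq hd hx hy hxy
  have htM' : tM ∈ Icc (0:ℝ) 1 := Icc_subset_Icc hx.1 hy.2 htM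
  have := TVd_ge_two hd hx htM' hy htM.1 htM.2
  rw [hsup]; linarith

lemma sSup_nonneg' (hd : IsDiagonalSection d) {x y : ℝ} (hx : x ∈ Icc (0:ℝ) 1)
    (hy : y ∈ Icc (0:ℝ) 1) (hxy : x ≤ y) :
    0 ≤ sSup ((fun t => t - d t) '' Icc x y) := by
  obtain ⟨tM, htM, hmax, hsup⟩ := exists_sSup_eq hd hx hy hxy
  rw [hsup]
  exact f_nonneg hd (Icc_subset_Icc hx.1 hy.2 htM)

/-- The reduction of the pointwise equality to the key disjunction. -/
lemma red (hd : IsDiagonalSection d) {x y : ℝ} (hx : x ∈ Icc (0:ℝ) 1)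
    (hy : y ∈ Icc (0:ℝ) 1) (hxy : x ≤ y) :
    (Cbar d x y = min x (min y (max x y -
        sSup ((fun t => t - d t) '' Icc (min x y) (max x y))))) ↔
      ((x - d x) + (y - d y) + TVd d x y ≤ 2*(y - x) ∨
        (x - d x) + (y - d y) + TVd d x y
          = 2 * sSup ((fun t => t - d t) '' Icc x y)) := by
  have hmin : min x y = x := min_eq_left hxy
  have hmax : max x y = y := max_eq_right hxy
  rw [Cbar, hmin, hmax]
  set V := TVd d x y with hV
  set B := sSup ((fun t => t - d t) '' Icc x y) with hB
  set A := (1/2)*((x - d x) + (y - d y) + V) with hA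
  have hAB : B ≤ A := by
    have := two_sSup_le hd hx hy hxy
    rw [hA]; rw [← hB] at this; linarith
  have hB0 : 0 ≤ B := sSup_nonneg' hd hx hy hxy
  rw [min_arith hxy hB0 hAB]
  constructor
  · rintro (h | h)
    · left; rw [hA] at h; linarith
    · right; rw [hA] at h; linarith
  · rintro (h | h)
    · left; rw [hA]; linarith
    · right; rw [hA]; linarith

end Basic


section Sym

variable {d : ℝ → ℝ}

lemma Cbar_comm (d : ℝ → ℝ) (x y : ℝ) : Cbar d x y = Cbar d y x := by
  rw [Cbar, Cbar, min_comm y x, max_comm y x, min_left_comm x y]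
  ring_nf

lemma Amin_comm (d : ℝ → ℝ) (x y : ℝ) :
    min x (min y (max x y - sSup ((fun t => t - d t) '' Icc (min x y) (max x y))))
      = min y (min x (max y x - sSup ((fun t => t - d t) '' Icc (min y x) (max y x)))) := by
  rw [min_comm y x, max_comm y x, min_left_comm x y]

end Sym

section Slope

lemma exists_lt_right {h : ℝ → ℝ} {τ D : ℝ} (hD : HasDerivAt h D τ) (hneg : D < 0)
    {b : ℝ} (hb : τ < b) : ∃ t ∈ Ioo τ b, h t < h τ := by
  rw [hasDerivAt_iff_tendsto_slope] at hD
  have h2 : Tendsto (slope h τ) (𝓝[>] τ) (𝓝 D) :=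
    hD.mono_left (nhdsWithin_mono _ fun y hy => ne_of_gt hy)
  have h3 : ∀ᶠ t in 𝓝[>] τ, slope h τ t < 0 := h2.eventually (eventually_lt_nhds hneg)
  have h4 : Ioo τ b ∈ 𝓝[>] τ := Ioo_mem_nhdsGT_of_mem ⟨le_refl τ, hb⟩
  obtain ⟨t, hts, htI⟩ := (h3.and (eventually_of_mem h4 (fun t ht => ht))).exists
  refine ⟨t, htI, ?_⟩
  rw [slope_def_field, div_neg_iff] at hts
  rcases hts with ⟨h5, h6⟩ | ⟨h5, h6⟩
  · linarith [htI.1]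
  · linarith

lemma exists_lt_left {h : ℝ → ℝ} {τ D : ℝ} (hD : HasDerivAt h D τ) (hpos : 0 < D)
    {a : ℝ} (ha : a < τ) : ∃ t ∈ Ioo a τ, h t < h τ := by
  rw [hasDerivAt_iff_tendsto_slope] at hD
  have h2 : Tendsto (slope h τ) (𝓝[<] τ) (𝓝 D) :=
    hD.mono_left (nhdsWithin_mono _ fun y hy => ne_of_lt hy)
  have h3 : ∀ᶠ t in 𝓝[<] τ, 0 < slope h τ t := h2.eventually (eventually_gt_nhds hpos)
  have h4 : Ioo a τ ∈ 𝓝[<] τ := Ioo_mem_nhdsLT_of_mem ⟨ha, le_refl τ⟩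
  obtain ⟨t, hts, htI⟩ := (h3.and (eventually_of_mem h4 (fun t ht => ht))).exists
  refine ⟨t, htI, ?_⟩
  rw [slope_def_field, div_pos_iff] at hts
  rcases hts with ⟨h5, h6⟩ | ⟨h5, h6⟩
  · linarith [htI.2]
  · linarith

lemma deriv_le_of_growth {h : ℝ → ℝ} {C : ℝ}
    (hgrow : ∀ a b : ℝ, a ≤ b → h b - h a ≤ C * (b - a)) {τ D : ℝ}
    (hD : HasDerivAt h D τ) : D ≤ C := by
  rw [hasDerivAt_iff_tendsto_slope] at hD
  have h2 : Tendsto (slope h τ) (𝓝[>] τ) (𝓝 D) :=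
    hD.mono_left (nhdsWithin_mono _ fun y hy => ne_of_gt hy)
  apply le_of_tendsto h2
  filter_upwards [self_mem_nhdsWithin] with t ht
  have ht' : τ < t := ht
  rw [slope_def_field, div_le_iff₀ (by linarith : (0:ℝ) < t - τ)]
  exact hgrow τ t ht'.le

end Slope


section Forward

variable {d : ℝ → ℝ}

lemma exists_max' (hd : IsDiagonalSection d) {a b : ℝ} (ha : a ∈ Icc (0:ℝ) 1)
    (hb : b ∈ Icc (0:ℝ) 1) (hab : a ≤ b) :
    ∃ c ∈ Icc a b, ∀ t ∈ Icc a b, t - d t ≤ c - d c := by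
  obtain ⟨c, hc, hmax⟩ := isCompact_Icc.exists_isMaxOn (nonempty_Icc.2 hab)
    ((f_cont hd).mono (Icc_subset_Icc ha.1 hb.2))
  exact ⟨c, hc, fun t ht => hmax ht⟩

lemma exists_min' (hd : IsDiagonalSection d) {a b : ℝ} (ha : a ∈ Icc (0:ℝ) 1)
    (hb : b ∈ Icc (0:ℝ) 1) (hab : a ≤ b) :
    ∃ c ∈ Icc a b, ∀ t ∈ Icc a b, c - d c ≤ t - d t := by
  obtain ⟨c, hc, hmin⟩ := isCompact_Icc.exists_isMinOn (nonempty_Icc.2 hab)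
    ((f_cont hd).mono (Icc_subset_Icc ha.1 hb.2))
  exact ⟨c, hc, fun t ht => hmin ht⟩

lemma forward (hd : IsDiagonalSection d)
    (hL : ∀ x ∈ Icc (0:ℝ) 1, ∀ y ∈ Icc (0:ℝ) 1,
      Cbar d x y = min x (min y (max x y -
        sSup ((fun t => t - d t) '' Icc (min x y) (max x y))))) :
    ∀ x ∈ Icc (0:ℝ) 1, ∀ y ∈ Icc (0:ℝ) 1, x < y →
      ∀ dx dy : ℝ, HasDerivAt (fun t => t - d t) dx x → HasDerivAt (fun t => t - d t) dy y →
      dx < 0 → 0 < dy → max (x - d x) (y - d y) ≤ y - x := by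
  intro x hx y hy hxy dx dy hdx hdy hneg hpos
  by_contra hcon
  push_neg at hcon
  obtain ⟨x', hx'I, hx'⟩ := exists_lt_right hdx hneg hxy
  obtain ⟨y', hy'I, hy'⟩ := exists_lt_left hdy hpos hxy
  obtain ⟨tm, htm, hmin⟩ := exists_min' hd hx hy hxy.le
  have htm01 : tm ∈ Icc (0:ℝ) 1 := Icc_subset_Icc hx.1 hy.2 htm
  obtain ⟨t1, ht1, hmax1⟩ := exists_max' hd hx htm01 htm.1
  obtain ⟨t2, ht2, hmax2⟩ := exists_max' hd htm01 hy htm.2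
  have ht101 : t1 ∈ Icc (0:ℝ) 1 := Icc_subset_Icc hx.1 htm01.2 ht1
  have ht201 : t2 ∈ Icc (0:ℝ) 1 := Icc_subset_Icc htm01.1 hy.2 ht2
  obtain ⟨tM, htM, hmaxM, hsup⟩ := exists_sSup_eq hd hx hy hxy.le
  have hVsplit : TVd d x y = TVd d x tm + TVd d tm y := TVd_add hd hx htm01 hy
  have h1 := TVd_ge_two hd hx ht101 htm01 ht1.1 ht1.2
  have h2 := TVd_ge_two hd htm01 ht201 hy ht2.1 ht2.2
  have hm1 : tm - d tm ≤ x' - d x' := hmin x' (Ioo_subset_Icc_self hx'I)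
  have hm2 : tm - d tm ≤ y' - d y' := hmin y' (Ioo_subset_Icc_self hy'I)
  have hM1x : x - d x ≤ t1 - d t1 := hmax1 x ⟨le_refl x, htm.1⟩
  have hM2y : y - d y ≤ t2 - d t2 := hmax2 y ⟨htm.2, le_refl y⟩
  have htMle : tM - d tM ≤ max (t1 - d t1) (t2 - d t2) := by
    rcases le_total tM tm with h | h
    · exact le_max_of_le_left (hmax1 tM ⟨htM.1, h⟩)
    · exact le_max_of_le_right (hmax2 tM ⟨h, htM.2⟩)
  have hdis := (red hd hx hy hxy.le).mp (hL x hx y hy)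
  rw [hsup] at hdis
  rcases le_total (t1 - d t1) (t2 - d t2) with hc | hc
  · have hmm : max (t1 - d t1) (t2 - d t2) = t2 - d t2 := max_eq_right hc
    have hAB : max (x - d x) (y - d y) ≤ t2 - d t2 :=
      max_le (le_trans hM1x hc) hM2y
    rw [hmm] at htMle
    rcases hdis with h | h
    · have : x' - d x' < t1 - d t1 := lt_of_lt_of_le hx' hM1x
      linarith
    · have : x' - d x' < t1 - d t1 := lt_of_lt_of_le hx' hM1x
      linarith
  · have hmm : max (t1 - d t1) (t2 - d t2) = t1 - d t1 := max_eq_left hc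
    have hAB : max (x - d x) (y - d y) ≤ t1 - d t1 :=
      max_le hM1x (le_trans hM2y hc)
    rw [hmm] at htMle
    rcases hdis with h | h
    · have : y' - d y' < t2 - d t2 := lt_of_lt_of_le hy' hM2y
      linarith
    · have : y' - d y' < t2 - d t2 := lt_of_lt_of_le hy' hM2y
      linarith

end Forward


section Stieltjes

variable {d : ℝ → ℝ}

noncomputable def clampR (t : ℝ) : ℝ := max 0 (min t 1)

lemma clamp_mem (t : ℝ) : clampR t ∈ Icc (0:ℝ) 1 :=
  ⟨le_max_left _ _, max_le zero_le_one (min_le_right _ _)⟩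

lemma clamp_of_mem {t : ℝ} (ht : t ∈ Icc (0:ℝ) 1) : clampR t = t := by
  rw [clampR, min_eq_left ht.2, max_eq_right ht.1]

lemma clamp_mono : Monotone clampR := fun a b hab =>
  max_le_max (le_refl 0) (min_le_min hab (le_refl 1))

lemma clamp_sub_le {a b : ℝ} (hab : a ≤ b) : clampR b - clampR a ≤ b - a := by
  rw [clampR, clampR]
  rcases le_total a 1 with ha1 | ha1 <;> rcases le_total b 1 with hb1 | hb1 <;>
    rcases le_total a 0 with ha0 | ha0 <;> rcases le_total b 0 with hb0 | hb0 <;>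
    simp [min_eq_left, min_eq_right, max_eq_left, max_eq_right, *] <;>
    linarith

lemma ed_growth (hd : IsDiagonalSection d) {a b : ℝ} (hab : a ≤ b) :
    d (clampR b) - d (clampR a) ≤ 2 * (b - a) := by
  have h1 := d_growth hd (clamp_mem a) (clamp_mem b) (clamp_mono hab)
  have h2 := clamp_sub_le hab
  linarith

lemma ed_mono (hd : IsDiagonalSection d) {a b : ℝ} (hab : a ≤ b) :
    d (clampR a) ≤ d (clampR b) :=
  d_mono hd (clamp_mem a) (clamp_mem b) (clamp_mono hab)

lemma ed_lip (hd : IsDiagonalSection d) : LipschitzWith 2 (fun t => d (clampR t)) := by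
  apply LipschitzWith.of_dist_le_mul
  intro a b
  rcases le_total a b with h | h
  · rw [Real.dist_eq, Real.dist_eq, abs_of_nonpos (by linarith [ed_mono hd h] : d (clampR a) - d (clampR b) ≤ 0),
      abs_of_nonpos (by linarith : a - b ≤ 0)]
    have := ed_growth hd h
    push_cast
    linarith
  · rw [Real.dist_eq, Real.dist_eq, abs_of_nonneg (by linarith [ed_mono hd h] : 0 ≤ d (clampR a) - d (clampR b)),
      abs_of_nonneg (by linarith : 0 ≤ a - b)]
    have := ed_growth hd h
    push_cast
    linarith

noncomputable def Sdf (d : ℝ → ℝ) (hd : IsDiagonalSection d) : StieltjesFunction ℝ where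
  toFun := fun t => d (clampR t)
  mono' := fun _ _ hab => ed_mono hd hab
  right_continuous' := fun x => ((ed_lip hd).continuous.continuousAt).continuousWithinAt

lemma Sdf_apply (hd : IsDiagonalSection d) (t : ℝ) : Sdf d hd t = d (clampR t) := rfl

noncomputable def Sdf2 (d : ℝ → ℝ) (hd : IsDiagonalSection d) : StieltjesFunction ℝ where
  toFun := fun t => 2*t - d (clampR t)
  mono' := fun a b hab => by have := ed_growth hd hab; simp only; linarith
  right_continuous' := fun x => (((continuous_const.mul continuous_id).sub
    (ed_lip hd).continuous).continuousAt).continuousWithinAt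

lemma measure_ac (hd : IsDiagonalSection d) : (Sdf d hd).measure ≪ (volume : Measure ℝ) := by
  have hsum : (Sdf d hd).measure + (Sdf2 d hd).measure = (2:ℝ≥0∞) • volume := by
    refine Measure.ext_of_Ioc' _ _ (fun a b _ => ?_) (fun a b hab => ?_)
    · rw [Measure.add_apply, StieltjesFunction.measure_Ioc, StieltjesFunction.measure_Ioc]
      exact ENNReal.add_ne_top.2 ⟨ENNReal.ofReal_ne_top, ENNReal.ofReal_ne_top⟩
    rw [Measure.add_apply, StieltjesFunction.measure_Ioc, StieltjesFunction.measure_Ioc,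
      Measure.smul_apply, Real.volume_Ioc, smul_eq_mul]
    have e1 : Sdf d hd b - Sdf d hd a = d (clampR b) - d (clampR a) := rfl
    have e2 : Sdf2 d hd b - Sdf2 d hd a = (2*b - d (clampR b)) - (2*a - d (clampR a)) := rfl
    rw [e1, e2]
    have h1 : 0 ≤ d (clampR b) - d (clampR a) := by linarith [ed_mono hd hab.le]
    have h2 : 0 ≤ (2*b - d (clampR b)) - (2*a - d (clampR a)) := by
      linarith [ed_growth hd hab.le]
    rw [← ENNReal.ofReal_add h1 h2]
    rw [show (2:ℝ≥0∞) = ENNReal.ofReal (2:ℝ) by simp]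
    rw [← ENNReal.ofReal_mul (by norm_num)]
    congr 1
    ring
  have hle : (Sdf d hd).measure ≤ (2:ℝ≥0∞) • volume := by
    rw [← hsum]
    exact Measure.le_add_right (le_refl _)
  have h2 : ((2:ℝ≥0∞) • (volume : Measure ℝ)) ≪ volume := by
    intro s hs
    rw [Measure.smul_apply, hs, smul_eq_mul, mul_zero]
  exact (Measure.absolutelyContinuous_of_le hle).trans h2

noncomputable def gfun (d : ℝ → ℝ) (hd : IsDiagonalSection d) : ℝ → ℝ :=
  fun τ => 1 - ((Sdf d hd).measure.rnDeriv volume τ).toReal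

lemma g_meas (hd : IsDiagonalSection d) : Measurable (gfun d hd) :=
  measurable_const.sub (Measure.measurable_rnDeriv _ _).ennreal_toReal

lemma ae_package (hd : IsDiagonalSection d) :
    ∀ᵐ τ, HasDerivAt (Sdf d hd) (1 - gfun d hd τ) τ ∧ |gfun d hd τ| ≤ 1 := by
  filter_upwards [(Sdf d hd).ae_hasDerivAt] with τ hτ
  have hD2 : ((Sdf d hd).measure.rnDeriv volume τ).toReal ≤ 2 := by
    refine deriv_le_of_growth (fun a b hab => ?_) hτ
    have := ed_growth hd hab
    simpa [Sdf_apply] using this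
  have hD0 : 0 ≤ ((Sdf d hd).measure.rnDeriv volume τ).toReal := ENNReal.toReal_nonneg
  constructor
  · have : 1 - gfun d hd τ = ((Sdf d hd).measure.rnDeriv volume τ).toReal := by
      rw [gfun]; ring
    rw [this]; exact hτ
  · rw [gfun, abs_le]; constructor <;> linarith

lemma hasDerivAt_f_of_interior (hd : IsDiagonalSection d) {τ D : ℝ} (hτ : τ ∈ Ioo (0:ℝ) 1)
    (hS : HasDerivAt (Sdf d hd) D τ) : HasDerivAt (fun t => t - d t) (1 - D) τ := by
  have h1 : HasDerivAt (fun t => t - Sdf d hd t) (1 - D) τ := (hasDerivAt_id τ).sub hS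
  apply h1.congr_of_eventuallyEq
  have hmem : Ioo (0:ℝ) 1 ∈ 𝓝 τ := isOpen_Ioo.mem_nhds hτ
  filter_upwards [hmem] with t ht
  rw [Sdf_apply, clamp_of_mem (Ioo_subset_Icc_self ht)]

lemma FTC_e (hd : IsDiagonalSection d) {a b : ℝ} (hab : a ≤ b) :
    d (clampR b) - d (clampR a)
      = ∫ τ in a..b, ((Sdf d hd).measure.rnDeriv volume τ).toReal := by
  have h1 : (Sdf d hd).measure (Ioc a b) = ENNReal.ofReal (d (clampR b) - d (clampR a)) :=
    StieltjesFunction.measure_Ioc _ a b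
  have h2 : (Sdf d hd).measure (Ioc a b)
      = ∫⁻ τ in Ioc a b, (Sdf d hd).measure.rnDeriv volume τ := by
    conv_lhs => rw [← Measure.withDensity_rnDeriv_eq _ _ (measure_ac hd)]
    rw [withDensity_apply _ measurableSet_Ioc]
  rw [intervalIntegral.integral_of_le hab]
  rw [integral_toReal ((Measure.measurable_rnDeriv _ _).aemeasurable)
    (ae_restrict_of_ae (Measure.rnDeriv_lt_top _ _))]
  rw [← h2, h1, ENNReal.toReal_ofReal (by linarith [ed_mono hd hab] : (0:ℝ) ≤ d (clampR b) - d (clampR a))]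

lemma intInt_of_bound (g : ℝ → ℝ) (hm : Measurable g) (C : ℝ) (hb : ∀ᵐ τ, |g τ| ≤ C)
    (a b : ℝ) : IntervalIntegrable g volume a b := by
  rw [intervalIntegrable_iff]
  apply Measure.integrableOn_of_bounded (M := C)
  · exact ne_of_lt measure_Ioc_lt_top
  · exact hm.aestronglyMeasurable
  · exact ae_restrict_of_ae (hb.mono fun τ h => by rwa [Real.norm_eq_abs])

lemma g_ae_bound (hd : IsDiagonalSection d) : ∀ᵐ τ, |gfun d hd τ| ≤ 1 :=
  (ae_package hd).mono fun τ h => h.2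

lemma g_intInt (hd : IsDiagonalSection d) (a b : ℝ) :
    IntervalIntegrable (gfun d hd) volume a b :=
  intInt_of_bound _ (g_meas hd) 1 (g_ae_bound hd) a b

lemma g_abs_intInt (hd : IsDiagonalSection d) (a b : ℝ) :
    IntervalIntegrable (fun τ => |gfun d hd τ|) volume a b :=
  intInt_of_bound _ (g_meas hd).abs 1 ((g_ae_bound hd).mono fun τ h => by rwa [abs_abs]) a b

lemma gp_intInt (hd : IsDiagonalSection d) (a b : ℝ) :
    IntervalIntegrable (fun τ => max (gfun d hd τ) 0) volume a b := by
  refine intInt_of_bound _ ((g_meas hd).max measurable_const) 1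
    ((g_ae_bound hd).mono fun τ h => ?_) a b
  rw [abs_le] at h ⊢
  constructor
  · exact le_trans h.1 (le_max_left _ _)
  · exact max_le h.2 zero_le_one

lemma gm_intInt (hd : IsDiagonalSection d) (a b : ℝ) :
    IntervalIntegrable (fun τ => max (-gfun d hd τ) 0) volume a b := by
  refine intInt_of_bound _ ((g_meas hd).neg.max measurable_const) 1
    ((g_ae_bound hd).mono fun τ h => ?_) a b
  rw [abs_le] at h ⊢
  constructor
  · exact le_trans (by linarith [h.1] : (-1:ℝ) ≤ -gfun d hd τ) (le_max_left _ _)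
  · exact max_le (by linarith [h.1] : -gfun d hd τ ≤ 1) zero_le_one

lemma FTC_f (hd : IsDiagonalSection d) {a b : ℝ} (ha : a ∈ Icc (0:ℝ) 1)
    (hb : b ∈ Icc (0:ℝ) 1) (hab : a ≤ b) :
    (b - d b) - (a - d a) = ∫ τ in a..b, gfun d hd τ := by
  have h1 := FTC_e hd hab
  rw [clamp_of_mem ha, clamp_of_mem hb] at h1
  have h2 : IntervalIntegrable (fun τ => ((Sdf d hd).measure.rnDeriv volume τ).toReal)
      volume a b := by
    have : (fun τ => ((Sdf d hd).measure.rnDeriv volume τ).toReal)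
        = fun τ => 1 - gfun d hd τ := by
      funext τ; rw [gfun]; ring
    rw [this]
    exact (intervalIntegrable_const (c := (1:ℝ))).sub (g_intInt hd a b)
  have h3 : ∫ τ in a..b, gfun d hd τ
      = ∫ τ in a..b, ((1:ℝ) - ((Sdf d hd).measure.rnDeriv volume τ).toReal) := by
    congr 1
  rw [h3, intervalIntegral.integral_sub intervalIntegrable_const h2,
    intervalIntegral.integral_const, ← h1]
  simp
  ring

end Stieltjes


section Integral

variable {d : ℝ → ℝ}

lemma TV_le_int (hd : IsDiagonalSection d) {x y : ℝ} (hx : x ∈ Icc (0:ℝ) 1)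
    (hy : y ∈ Icc (0:ℝ) 1) (hxy : x ≤ y) :
    TVd d x y ≤ ∫ τ in x..y, |gfun d hd τ| := by
  rw [TVd_eq_of_le hxy, inter_eq_self_of_subset_right (Icc_subset_Icc hx.1 hy.2)]
  have habs_nonneg : (0:ℝ) ≤ ∫ τ in x..y, |gfun d hd τ| :=
    intervalIntegral.integral_nonneg hxy (fun u _ => abs_nonneg _)
  have key : eVariationOn (fun t => t - d t) (Icc x y)
      ≤ ENNReal.ofReal (∫ τ in x..y, |gfun d hd τ|) := by
    apply iSup_le
    rintro ⟨n, ⟨u, hu, us⟩⟩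
    have hu01 : ∀ i, u i ∈ Icc (0:ℝ) 1 := fun i => Icc_subset_Icc hx.1 hy.2 (us i)
    calc
      (∑ i ∈ Finset.range n, edist ((fun t => t - d t) (u (i + 1))) ((fun t => t - d t) (u i)))
          ≤ ∑ i ∈ Finset.range n, ENNReal.ofReal (∫ τ in u i..u (i+1), |gfun d hd τ|) := by
        apply Finset.sum_le_sum
        intro i _
        rw [edist_dist, Real.dist_eq]
        apply ENNReal.ofReal_le_ofReal
        have hle : u i ≤ u (i+1) := hu (Nat.le_succ i)
        have hftc := FTC_f hd (hu01 i) (hu01 (i+1)) hle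
        simp only []
        rw [hftc]
        exact intervalIntegral.abs_integral_le_integral_abs hle
      _ = ENNReal.ofReal (∑ i ∈ Finset.range n, ∫ τ in u i..u (i+1), |gfun d hd τ|) := by
        rw [ENNReal.ofReal_sum_of_nonneg]
        intro i _
        exact intervalIntegral.integral_nonneg (hu (Nat.le_succ i)) (fun t _ => abs_nonneg _)
      _ = ENNReal.ofReal (∫ τ in (u 0)..(u n), |gfun d hd τ|) := by
        exact congrArg ENNReal.ofReal (intervalIntegral.sum_integral_adjacent_intervals (fun k _ => g_abs_intInt hd _ _))
      _ ≤ ENNReal.ofReal (∫ τ in x..y, |gfun d hd τ|) := by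
        apply ENNReal.ofReal_le_ofReal
        apply intervalIntegral.integral_mono_interval (us 0).1 (hu (Nat.zero_le n)) (us n).2
        · exact ae_restrict_of_ae (Eventually.of_forall (fun t => abs_nonneg _))
        · exact g_abs_intInt hd _ _
  exact ENNReal.toReal_le_of_le_ofReal habs_nonneg key

lemma exists_deriv_neg (hd : IsDiagonalSection d) {a b : ℝ} (ha : a ∈ Icc (0:ℝ) 1)
    (hb : b ∈ Icc (0:ℝ) 1) (hab : a < b) (hlt : b - d b < a - d a) :
    ∃ s ∈ Ioo a b, ∃ ds, HasDerivAt (fun t => t - d t) ds s ∧ ds < 0 := by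
  by_contra hcon
  push_neg at hcon
  have hae : ∀ᵐ τ ∂(volume.restrict (Ioo a b)), 0 ≤ gfun d hd τ := by
    rw [ae_restrict_iff' measurableSet_Ioo]
    filter_upwards [ae_package hd] with τ hτ
    intro hmem
    by_contra hneg
    push_neg at hneg
    have hτ01 : τ ∈ Ioo (0:ℝ) 1 :=
      ⟨lt_of_le_of_lt ha.1 hmem.1, lt_of_lt_of_le hmem.2 hb.2⟩
    have hder := hasDerivAt_f_of_interior hd hτ01 hτ.1
    have h2 : 1 - (1 - gfun d hd τ) = gfun d hd τ := by ring
    rw [h2] at hder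
    linarith [hcon τ hmem (gfun d hd τ) hder]
  have h0 : (0:ℝ) ≤ ∫ τ in a..b, gfun d hd τ := by
    rw [intervalIntegral.integral_of_le hab.le, integral_Ioc_eq_integral_Ioo]
    exact setIntegral_nonneg_of_ae_restrict hae
  rw [← FTC_f hd ha hb hab.le] at h0
  linarith

lemma exists_deriv_pos (hd : IsDiagonalSection d) {a b : ℝ} (ha : a ∈ Icc (0:ℝ) 1)
    (hb : b ∈ Icc (0:ℝ) 1) (hab : a < b) (hlt : a - d a < b - d b) :
    ∃ s ∈ Ioo a b, ∃ ds, HasDerivAt (fun t => t - d t) ds s ∧ 0 < ds := by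
  by_contra hcon
  push_neg at hcon
  have hae : ∀ᵐ τ ∂(volume.restrict (Ioo a b)), gfun d hd τ ≤ 0 := by
    rw [ae_restrict_iff' measurableSet_Ioo]
    filter_upwards [ae_package hd] with τ hτ
    intro hmem
    by_contra hpos
    push_neg at hpos
    have hτ01 : τ ∈ Ioo (0:ℝ) 1 :=
      ⟨lt_of_le_of_lt ha.1 hmem.1, lt_of_lt_of_le hmem.2 hb.2⟩
    have hder := hasDerivAt_f_of_interior hd hτ01 hτ.1
    have h2 : 1 - (1 - gfun d hd τ) = gfun d hd τ := by ring
    rw [h2] at hder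
    linarith [hcon τ hmem (gfun d hd τ) hder]
  have h0 : ∫ τ in a..b, gfun d hd τ ≤ 0 := by
    rw [intervalIntegral.integral_of_le hab.le, integral_Ioc_eq_integral_Ioo]
    exact setIntegral_nonpos_of_ae_restrict hae
  rw [← FTC_f hd ha hb hab.le] at h0
  linarith

lemma gm_zero (hd : IsDiagonalSection d) {s t : ℝ} (hs : 0 ≤ s) (ht : t ≤ 1) (hst : s ≤ t)
    (hno : ∀ σ ∈ Ioo s t, ∀ dσ, HasDerivAt (fun u => u - d u) dσ σ → 0 ≤ dσ) :
    ∫ τ in s..t, max (-gfun d hd τ) 0 = 0 := by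
  rw [intervalIntegral.integral_of_le hst, integral_Ioc_eq_integral_Ioo]
  apply integral_eq_zero_of_ae
  rw [EventuallyEq, ae_restrict_iff' measurableSet_Ioo]
  filter_upwards [ae_package hd] with τ hτ
  intro hmem
  have hτ01 : τ ∈ Ioo (0:ℝ) 1 := ⟨lt_of_le_of_lt hs hmem.1, lt_of_lt_of_le hmem.2 ht⟩
  have hder := hasDerivAt_f_of_interior hd hτ01 hτ.1
  have h2 : 1 - (1 - gfun d hd τ) = gfun d hd τ := by ring
  rw [h2] at hder
  have := hno τ hmem (gfun d hd τ) hder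
  simp only [Pi.zero_apply]
  rw [max_eq_right (by linarith)]

end Integral


section Backward

variable {d : ℝ → ℝ}

lemma evar_neg (f : ℝ → ℝ) (s : Set ℝ) :
    eVariationOn (fun t => -(f t)) s = eVariationOn f s := by
  rw [eVariationOn, eVariationOn]
  congr 1
  funext p
  apply Finset.sum_congr rfl
  intro i _
  exact edist_neg_neg _ _

lemma mono_var (hd : IsDiagonalSection d) {a b : ℝ} (ha : a ∈ Icc (0:ℝ) 1)
    (hb : b ∈ Icc (0:ℝ) 1) (hab : a ≤ b)
    (hmono : MonotoneOn (fun t => t - d t) (Icc a b)) :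
    TVd d a b = (b - d b) - (a - d a) := by
  have hmem_a : a ∈ Icc a b := ⟨le_refl a, hab⟩
  have hmem_b : b ∈ Icc a b := ⟨hab, le_refl b⟩
  have hfab : a - d a ≤ b - d b := hmono hmem_a hmem_b hab
  have hup := hmono.eVariationOn_le hmem_a hmem_b
  rw [inter_self] at hup
  have h1 : TVd d a b ≤ (b - d b) - (a - d a) := by
    rw [TVd_eq_of_le hab, inter_eq_self_of_subset_right (Icc_subset_Icc ha.1 hb.2)]
    exact ENNReal.toReal_le_of_le_ofReal (by linarith) hup
  have h2 := abs_sub_le_TVd hd ha hb hab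
  rw [abs_of_nonneg (by linarith)] at h2
  linarith

lemma anti_var (hd : IsDiagonalSection d) {a b : ℝ} (ha : a ∈ Icc (0:ℝ) 1)
    (hb : b ∈ Icc (0:ℝ) 1) (hab : a ≤ b)
    (hanti : AntitoneOn (fun t => t - d t) (Icc a b)) :
    TVd d a b = (a - d a) - (b - d b) := by
  have hmem_a : a ∈ Icc a b := ⟨le_refl a, hab⟩
  have hmem_b : b ∈ Icc a b := ⟨hab, le_refl b⟩
  have hfab : b - d b ≤ a - d a := hanti hmem_a hmem_b hab
  have hmono : MonotoneOn (fun t => -((fun u => u - d u) t)) (Icc a b) :=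
    fun p hp q hq hpq => neg_le_neg (hanti hp hq hpq)
  have hup := hmono.eVariationOn_le hmem_a hmem_b
  rw [inter_self, evar_neg (fun u => u - d u) (Icc a b)] at hup
  have h1 : TVd d a b ≤ (a - d a) - (b - d b) := by
    rw [TVd_eq_of_le hab, inter_eq_self_of_subset_right (Icc_subset_Icc ha.1 hb.2)]
    refine ENNReal.toReal_le_of_le_ofReal (by linarith) ?_
    convert hup using 2
    ring
  have h2 := abs_sub_le_TVd hd ha hb hab
  rw [abs_of_nonpos (by linarith)] at h2
  linarith

lemma backward (hd : IsDiagonalSection d)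
    (hW : ∀ x ∈ Icc (0:ℝ) 1, ∀ y ∈ Icc (0:ℝ) 1, x < y →
      ∀ dx dy : ℝ, HasDerivAt (fun t => t - d t) dx x → HasDerivAt (fun t => t - d t) dy y →
      dx < 0 → 0 < dy → max (x - d x) (y - d y) ≤ y - x) :
    ∀ x ∈ Icc (0:ℝ) 1, ∀ y ∈ Icc (0:ℝ) 1, x ≤ y →
      Cbar d x y = min x (min y (max x y -
        sSup ((fun t => t - d t) '' Icc (min x y) (max x y)))) := by
  intro x hx y hy hxy
  rw [red hd hx hy hxy]
  rcases eq_or_lt_of_le hxy with rfl | hlt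
  · right
    rw [Icc_self, image_singleton, csSup_singleton]
    have h0 : TVd d x x = 0 := variationOnFromTo.self _ _ x
    show (x - d x) + (x - d x) + TVd d x x = 2 * (x - d x)
    linarith
  by_cases hQC : ∀ p ∈ Icc x y, ∀ q ∈ Icc x y, ∀ r ∈ Icc x y, p ≤ q → q ≤ r →
      min (p - d p) (r - d r) ≤ q - d q
  · -- quasiconcave case: unimodal, variation computes exactly
    right
    obtain ⟨tM, htM, hmaxM, hsup⟩ := exists_sSup_eq hd hx hy hxy
    have htM01 : tM ∈ Icc (0:ℝ) 1 := Icc_subset_Icc hx.1 hy.2 htM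
    have hmono : MonotoneOn (fun t => t - d t) (Icc x tM) := by
      intro p hp q hq hpq
      have hp' : p ∈ Icc x y := ⟨hp.1, hp.2.trans htM.2⟩
      have hq' : q ∈ Icc x y := ⟨hq.1, hq.2.trans htM.2⟩
      have := hQC p hp' q hq' tM htM hpq hq.2
      have hple : p - d p ≤ tM - d tM := hmaxM p hp'
      simp only []
      rw [min_eq_left hple] at this
      exact this
    have hanti : AntitoneOn (fun t => t - d t) (Icc tM y) := by
      intro q hq r hr hqr
      have hq' : q ∈ Icc x y := ⟨htM.1.trans hq.1, hq.2⟩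
      have hr' : r ∈ Icc x y := ⟨htM.1.trans hr.1, hr.2⟩
      have := hQC tM htM q hq' r hr' hq.1 hqr
      have hrle : r - d r ≤ tM - d tM := hmaxM r hr'
      simp only []
      rw [min_eq_right hrle] at this
      exact this
    rw [hsup, TVd_add hd hx htM01 hy, mono_var hd hx htM01 htM.1 hmono,
      anti_var hd htM01 hy htM.2 hanti]
    ring
  · -- a dip exists: use the derivative condition to bound the variation
    left
    push_neg at hQC
    obtain ⟨p, hp, q, hq, r, hr, hpq, hqr, hdip⟩ := hQC
    have hp01 : p ∈ Icc (0:ℝ) 1 := Icc_subset_Icc hx.1 hy.2 hp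
    have hq01 : q ∈ Icc (0:ℝ) 1 := Icc_subset_Icc hx.1 hy.2 hq
    have hr01 : r ∈ Icc (0:ℝ) 1 := Icc_subset_Icc hx.1 hy.2 hr
    have hdip1 : q - d q < p - d p := lt_of_lt_of_le hdip (min_le_left _ _)
    have hdip2 : q - d q < r - d r := lt_of_lt_of_le hdip (min_le_right _ _)
    have hpq' : p < q := lt_of_le_of_ne hpq (fun h => by rw [h] at hdip1; linarith)
    have hqr' : q < r := lt_of_le_of_ne hqr (fun h => by rw [h] at hdip2; linarith)
    obtain ⟨s1, hs1I, ds1, hds1, hds1neg⟩ := exists_deriv_neg hd hp01 hq01 hpq' hdip1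
    obtain ⟨t, htI, dt, hdt, hdtpos⟩ := exists_deriv_pos hd hq01 hr01 hqr' hdip2
    have hs101 : s1 ∈ Icc (0:ℝ) 1 :=
      ⟨hp01.1.trans hs1I.1.le, hs1I.2.le.trans hq01.2⟩
    have ht01 : t ∈ Icc (0:ℝ) 1 := ⟨hq01.1.trans htI.1.le, htI.2.le.trans hr01.2⟩
    have hs1t : s1 < t := hs1I.2.trans htI.1
    have hWst := hW s1 hs101 t ht01 hs1t ds1 dt hds1 hdt hds1neg hdtpos
    have hft_le : t - d t ≤ t - s1 := le_trans (le_max_right _ _) hWst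
    set s : ℝ := t - (t - d t) with hs_def
    have hs1s : s1 ≤ s := by rw [hs_def]; linarith
    have hxs : x < s := lt_of_le_of_lt hp.1 (lt_of_lt_of_le hs1I.1 hs1s)
    have hft0 : 0 ≤ t - d t := f_nonneg hd ht01
    have hst : s ≤ t := by rw [hs_def]; linarith
    have hty : t ≤ y := htI.2.le.trans hr.2
    have hxt : x ≤ t := hxs.le.trans hst
    have hno : ∀ σ ∈ Ioo s t, ∀ dσ, HasDerivAt (fun u => u - d u) dσ σ → 0 ≤ dσ := by
      intro σ hσ dσ hder
      by_contra hneg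
      push_neg at hneg
      have hσ01 : σ ∈ Icc (0:ℝ) 1 :=
        ⟨(hx.1.trans hxs.le).trans hσ.1.le, hσ.2.le.trans (hty.trans hy.2)⟩
      have := hW σ hσ01 t ht01 hσ.2 dσ dt hder hdt hneg hdtpos
      have h2 : t - d t ≤ t - σ := le_trans (le_max_right _ _) this
      have : σ ≤ s := by rw [hs_def]; linarith
      linarith [hσ.1]
    have hgm0 : ∫ τ in s..t, max (-gfun d hd τ) 0 = 0 :=
      gm_zero hd (hx.1.trans hxs.le) (hty.trans hy.2) hst hno
    -- now the integral chain
    set G := gfun d hd with hG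
    have hae1 : ∀ᵐ τ, |G τ| ≤ 1 := g_ae_bound hd
    have i1 : TVd d x y ≤ ∫ τ in x..y, |G τ| := TV_le_int hd hx hy hxy
    have i3 : ∫ τ in x..y, |G τ|
        = 2*(∫ τ in x..y, max (G τ) 0) - ∫ τ in x..y, G τ := by
      have hcongr : ∫ τ in x..y, |G τ| = ∫ τ in x..y, (2 * max (G τ) 0 - G τ) := by
        apply intervalIntegral.integral_congr
        intro τ _
        show |G τ| = 2 * max (G τ) 0 - G τ
        rcases le_total (G τ) 0 with h | h
        · rw [abs_of_nonpos h, max_eq_right h]; ring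
        · rw [abs_of_nonneg h, max_eq_left h]; ring
      rw [hcongr, intervalIntegral.integral_sub ((gp_intInt hd x y).const_mul 2) (g_intInt hd x y),
        intervalIntegral.integral_const_mul]
    have i4 : ∫ τ in x..y, G τ = (y - d y) - (x - d x) := (FTC_f hd hx hy hxy).symm
    have i5 : ∫ τ in x..y, max (G τ) 0
        = (∫ τ in x..t, max (G τ) 0) + ∫ τ in t..y, max (G τ) 0 :=
      (intervalIntegral.integral_add_adjacent_intervals (gp_intInt hd x t) (gp_intInt hd t y)).symm
    have i6 : ∫ τ in t..y, max (G τ) 0 ≤ y - t := by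
      have := intervalIntegral.integral_mono_ae hty (gp_intInt hd t y)
        (intervalIntegrable_const (c := (1:ℝ)))
        (hae1.mono fun τ h => by
          rw [abs_le] at h
          exact max_le h.2 zero_le_one)
      rw [intervalIntegral.integral_const, smul_eq_mul, mul_one] at this
      exact this
    have i7 : ∫ τ in x..t, G τ = (t - d t) - (x - d x) := (FTC_f hd hx ht01 hxt).symm
    have i9 : ∫ τ in x..t, G τ
        = (∫ τ in x..t, max (G τ) 0) - ∫ τ in x..t, max (-G τ) 0 := by
      have hcongr : ∫ τ in x..t, G τ
          = ∫ τ in x..t, (max (G τ) 0 - max (-G τ) 0) := by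
        apply intervalIntegral.integral_congr
        intro τ _
        show G τ = max (G τ) 0 - max (-G τ) 0
        rcases le_total (G τ) 0 with h | h
        · rw [max_eq_right h, max_eq_left (by linarith : (0:ℝ) ≤ -G τ)]; ring
        · rw [max_eq_left h, max_eq_right (by linarith : -G τ ≤ (0:ℝ))]; ring
      rw [hcongr, intervalIntegral.integral_sub (gp_intInt hd x t) (gm_intInt hd x t)]
    have i10 : ∫ τ in x..t, max (-G τ) 0 = ∫ τ in x..s, max (-G τ) 0 := by
      rw [← intervalIntegral.integral_add_adjacent_intervals (gm_intInt hd x s) (gm_intInt hd s t),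
        hgm0, add_zero]
    have i11 : ∫ τ in x..s, max (-G τ) 0 ≤ s - x := by
      have := intervalIntegral.integral_mono_ae hxs.le (gm_intInt hd x s)
        (intervalIntegrable_const (c := (1:ℝ)))
        (hae1.mono fun τ h => by
          rw [abs_le] at h
          exact max_le (neg_le.mpr h.1) zero_le_one)
      rw [intervalIntegral.integral_const, smul_eq_mul, mul_one] at this
      exact this
    -- combine everything
    have hchain : (x - d x) + (y - d y) + TVd d x y ≤ 2*(y - x) := by
      have e1 : ∫ τ in x..t, max (G τ) 0
          = ((t - d t) - (x - d x)) + ∫ τ in x..s, max (-G τ) 0 := by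
        rw [← i10]; linarith [i9, i7]
      have : TVd d x y ≤ 2*((((t - d t) - (x - d x)) + (s - x)) + (y - t))
          - ((y - d y) - (x - d x)) := by
        calc TVd d x y ≤ ∫ τ in x..y, |G τ| := i1
          _ = 2*(∫ τ in x..y, max (G τ) 0) - ∫ τ in x..y, G τ := i3
          _ ≤ 2*((((t - d t) - (x - d x)) + (s - x)) + (y - t))
              - ((y - d y) - (x - d x)) := by
            rw [i4, i5, e1]
            have := i6
            have := i11
            linarith
      rw [hs_def] at this
      linarith
    exact hchain

end Backward

end CbarAux

theorem Cbar_eq_A_iff (d : ℝ → ℝ) (hd : IsDiagonalSection d) :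
    (∀ x ∈ Icc (0:ℝ) 1, ∀ y ∈ Icc (0:ℝ) 1,
      Cbar d x y = min x (min y (max x y -
        sSup ((fun t => t - d t) '' Icc (min x y) (max x y))))) ↔
    (∀ x ∈ Icc (0:ℝ) 1, ∀ y ∈ Icc (0:ℝ) 1, x < y →
      ∀ dx dy : ℝ, HasDerivAt (fun t => t - d t) dx x → HasDerivAt (fun t => t - d t) dy y →
      dx < 0 → 0 < dy → max (x - d x) (y - d y) ≤ y - x) := by
  constructor
  · intro hL
    exact CbarAux.forward hd hL
  · intro hW x hx y hy
    rcases le_total x y with h | h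
    · exact CbarAux.backward hd hW x hx y hy h
    · have hsym := CbarAux.backward hd hW y hy x hx h
      rw [CbarAux.Cbar_comm d x y, CbarAux.Amin_comm d x y]
      exact hsym
end
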